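/- arXiv:1311.6123 — 6 statements merged into one kernel-verified Lean document; each statement's English description precedes it below -/
import Mathlib

section
/- Let λ be a nonempty partition of rank ρ. Then τ₀ P_{11} − τ₁ P_{21} + τ₂ P_{31} − ⋯ + (−1)^ρ τ_ρ P_{ρ+1, 1} = A_{11}, i.e., Σ_{i=0}^{ρ} (−1)^i τ_i P_{i+1, 1} = ∏_{(i,j) ∈ λ} x_{ij} in R. -/
open MvPolynomial

/-- Membership of the (0-indexed) square `(i,j)` in the extended diagram `λ*`,
where `f k` is the `(k+1)`-st part of the partition `λ`. -/
def MemExt (f : ℕ → ℕ) (i j : ℕ) : Prop := (i = 0 ∨ 0 < f (i - 1)) ∧ j ≤ f i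

/-- `A_{r+1,s+1}`: the product of the variables over all squares of `λ(r+1,s+1)`
(0-indexed corner `(r,s)`; the variable of the 1-based square `(u,v)` is `X (u-1, v-1)`). -/
noncomputable def Apoly (f : ℕ → ℕ) (r s : ℕ) : MvPolynomial (ℕ × ℕ) ℤ :=
  ∏ᶠ (u : ℕ) (v : ℕ) (_ : v < f (r + u) - s), X (r + u, s + v)

/-- `P_{r+1,s+1}`: the generating polynomial of the skew diagrams `λ(r+1,s+1) \ μ`,
summed over all partitions `μ` contained in `λ(r+1,s+1)` (0-indexed corner `(r,s)`). -/
noncomputable def Ppoly (f : ℕ → ℕ) (r s : ℕ) : MvPolynomial (ℕ × ℕ) ℤ :=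
  ∑ᶠ μ ∈ {μ : ℕ → ℕ | Antitone μ ∧ ∀ k, μ k ≤ f (r + k) - s},
    ∏ᶠ (u : ℕ) (v : ℕ) (_ : v < f (r + u) - s) (_ : μ u ≤ v), X (r + u, s + v)

/-- `Ω_i`: the sum over all partitions `κ` fitting in an `i × (λ_i - i)` box of the
monomial selecting, in row `a` (0-indexed) of the array `R_i`, the last `κ a` entries. -/
noncomputable def Omega (f : ℕ → ℕ) (i : ℕ) : MvPolynomial (ℕ × ℕ) ℤ :=
  ∑ᶠ κ ∈ {κ : ℕ → ℕ | Antitone κ ∧ κ 0 ≤ f (i - 1) - i ∧ ∀ a, i ≤ a → κ a = 0},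
    ∏ᶠ (a : ℕ) (_ : a < i) (c : ℕ) (_ : f (i - 1) - i - κ a < c) (_ : c ≤ f (i - 1) - i),
      X (a, a + c)

/-- `τ_i = Ω_i · ∏_{(a,b) ∈ S_i} x_{ab}` (squares written 0-indexed). -/
noncomputable def tau (f : ℕ → ℕ) (i : ℕ) : MvPolynomial (ℕ × ℕ) ℤ :=
  Omega f i *
    ∏ᶠ (a : ℕ) (_ : a < i) (b : ℕ) (_ : f (i - 1) - i + a < b) (_ : b < f a), X (a, b)


set_option linter.unusedSectionVars false
set_option linter.unusedVariables false

open Finset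
open scoped Classical

namespace RecAux

/-- generic finiteness of bounded eventually-zero functions -/
lemma finite_bdd (B N : ℕ) :
    {g : ℕ → ℕ | (∀ k, g k ≤ B) ∧ ∀ k, N ≤ k → g k = 0}.Finite := by
  have h : {g : ℕ → ℕ | (∀ k, g k ≤ B) ∧ ∀ k, N ≤ k → g k = 0} ⊆
      Set.range (fun v : Fin N → Fin (B + 1) => fun k =>
        if h : k < N then (v ⟨k, h⟩ : ℕ) else 0) := by
    rintro g ⟨h1, h2⟩
    refine ⟨fun j => ⟨g j, Nat.lt_succ_of_le (h1 j)⟩, ?_⟩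
    funext k
    by_cases hk : k < N
    · simp [hk]
    · simp [hk, h2 k (le_of_not_gt hk)]
  exact (Set.finite_range _).subset h

def Kset (f : ℕ → ℕ) (i : ℕ) : Set (ℕ → ℕ) :=
  {κ | Antitone κ ∧ κ 0 ≤ f (i - 1) - i ∧ ∀ a, i ≤ a → κ a = 0}

def Mset (f : ℕ → ℕ) (i : ℕ) : Set (ℕ → ℕ) :=
  {μ | Antitone μ ∧ ∀ k, μ k ≤ f (i + k) - 0}

lemma Kfin (f : ℕ → ℕ) (i : ℕ) : (Kset f i).Finite := by
  refine (finite_bdd (f (i - 1) - i) i).subset ?_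
  rintro κ ⟨ha, h0, hz⟩
  exact ⟨fun k => le_trans (ha (Nat.zero_le k)) h0, hz⟩

lemma Mfin (f : ℕ → ℕ) (hf : Antitone f) (L : ℕ) (hL : f L = 0) (i : ℕ) :
    (Mset f i).Finite := by
  refine (finite_bdd (f i) L).subset ?_
  rintro μ ⟨ha, hb⟩
  refine ⟨fun k => le_trans (ha (Nat.zero_le k)) (by simpa using hb 0), fun k hk => ?_⟩
  have : f (i + k) = 0 := Nat.le_antisymm (hL ▸ hf (le_trans hk (Nat.le_add_left k i))) (Nat.zero_le _)
  have := hb k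
  omega

noncomputable def Gpoly (f : ℕ → ℕ) (L C : ℕ) (N : ℕ → ℕ) : MvPolynomial (ℕ × ℕ) ℤ :=
  ∏ r ∈ range L, ∏ c ∈ range C, if N r ≤ c ∧ c < f r then X (r, c) else 1

lemma expand_if2 {M : Type*} [CommMonoid M] (g : ℕ → ℕ → M) (p : ℕ → ℕ → Prop)
    [inst : ∀ u v, Decidable (p u v)]
    (n m : ℕ) (hp : ∀ u v, p u v → u < n ∧ v < m) :
    (∏ᶠ (u : ℕ) (v : ℕ), if p u v then g u v else 1) =
      ∏ u ∈ range n, ∏ v ∈ range m, if p u v then g u v else 1 := by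
  have h1 : ∀ u, (∏ᶠ v, if p u v then g u v else 1)
      = ∏ v ∈ range m, if p u v then g u v else 1 := by
    intro u
    refine finprod_eq_prod_of_mulSupport_subset _ ?_
    intro v hv
    simp only [Function.mem_mulSupport] at hv
    by_cases h : p u v
    · exact Finset.mem_coe.2 (Finset.mem_range.2 (hp u v h).2)
    · exact absurd (if_neg h) hv
  simp only [h1]
  refine finprod_eq_prod_of_mulSupport_subset _ ?_
  intro u hu
  simp only [Function.mem_mulSupport] at hu
  by_contra hun
  apply hu
  refine Finset.prod_eq_one (fun v _ => ?_)
  refine if_neg (fun h => hun ?_)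
  exact Finset.mem_coe.2 (Finset.mem_range.2 (hp u v h).1)

lemma ite_finprod {M : Type*} [CommMonoid M] (p : Prop) [Decidable p] (g : ℕ → M) :
    (if p then (∏ᶠ c, g c) else 1) = ∏ᶠ c, if p then g c else 1 := by
  split_ifs with h
  · rfl
  · simp

lemma ite_prod_finset {M : Type*} [CommMonoid M] (p : Prop) [Decidable p]
    (s : Finset ℕ) (g : ℕ → M) :
    (if p then (∏ c ∈ s, g c) else 1) = ∏ c ∈ s, if p then g c else 1 := by
  split_ifs with h
  · rfl
  · simp

noncomputable def Oterm (f : ℕ → ℕ) (L C i : ℕ) (κ : ℕ → ℕ) : MvPolynomial (ℕ × ℕ) ℤ :=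
  ∏ a ∈ range L, ∏ c ∈ range C,
    if a < i ∧ (f (i-1) - i - κ a < c ∧ c ≤ f (i-1) - i) then X (a, a + c) else 1

noncomputable def Sterm (f : ℕ → ℕ) (L C i : ℕ) : MvPolynomial (ℕ × ℕ) ℤ :=
  ∏ a ∈ range L, ∏ b ∈ range C,
    if a < i ∧ (f (i-1) - i + a < b ∧ b < f a) then X (a, b) else 1

noncomputable def Pterm (f : ℕ → ℕ) (L C i : ℕ) (μ : ℕ → ℕ) : MvPolynomial (ℕ × ℕ) ℤ :=
  ∏ u ∈ range L, ∏ v ∈ range C,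
    if v < f (i + u) ∧ μ u ≤ v then X (i + u, v) else 1

section Expand

variable {f : ℕ → ℕ} (hf : Antitone f) {L : ℕ} (hL : ∀ r, L ≤ r → f r = 0)

include hf hL

lemma apoly_expand :
    (∏ᶠ (u : ℕ) (v : ℕ) (_ : v < f (0 + u) - 0), X (0 + u, 0 + v) : MvPolynomial (ℕ × ℕ) ℤ)
      = Gpoly f L (f 0) (fun _ => 0) := by
  have hb : ∀ u v : ℕ, v < f u → u < L ∧ v < f 0 := by
    intro u v h
    refine ⟨?_, lt_of_lt_of_le h (hf (Nat.zero_le u))⟩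
    by_contra hc
    push_neg at hc
    rw [hL u hc] at h
    omega
  simp only [finprod_eq_if, Nat.zero_add, Nat.sub_zero]
  rw [expand_if2 (fun u v => X (u, v)) (fun u v => v < f u) L (f 0) hb]
  unfold Gpoly
  refine Finset.prod_congr rfl (fun r _ => Finset.prod_congr rfl (fun c _ => ?_))
  exact if_congr (by simp) rfl rfl

lemma ppoly_expand (i : ℕ) (μ : ℕ → ℕ) :
    (∏ᶠ (u : ℕ) (v : ℕ) (_ : v < f (i + u) - 0) (_ : μ u ≤ v), X (i + u, 0 + v)
      : MvPolynomial (ℕ × ℕ) ℤ) = Pterm f L (f 0) i μ := by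
  have hb : ∀ u v : ℕ, (v < f (i + u) ∧ μ u ≤ v) → u < L ∧ v < f 0 := by
    intro u v h
    constructor
    · by_contra hc
      push_neg at hc
      have := hL (i + u) (le_trans hc (Nat.le_add_left u i))
      omega
    · exact lt_of_lt_of_le h.1 (hf (Nat.zero_le (i + u)))
  simp only [finprod_eq_if, Nat.zero_add, Nat.sub_zero, ← ite_and]
  exact expand_if2 (fun u v => X (i + u, v)) (fun u v => v < f (i + u) ∧ μ u ≤ v) L (f 0) hb

lemma omega_expand (i : ℕ) (hiL : i ≤ L) (hC : 0 < i → ∀ c, c ≤ f (i-1) - i → c < f 0)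
    (κ : ℕ → ℕ) :
    (∏ᶠ (a : ℕ) (_ : a < i) (c : ℕ) (_ : f (i - 1) - i - κ a < c) (_ : c ≤ f (i - 1) - i),
      X (a, a + c) : MvPolynomial (ℕ × ℕ) ℤ) = Oterm f L (f 0) i κ := by
  have hb : ∀ a c : ℕ, (a < i ∧ (f (i-1) - i - κ a < c ∧ c ≤ f (i-1) - i)) → a < L ∧ c < f 0 :=
    fun a c h => ⟨lt_of_lt_of_le h.1 hiL, hC (by omega) c h.2.2⟩
  simp only [finprod_eq_if, ite_finprod, ← ite_and]
  exact expand_if2 (fun a c => X (a, a + c))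
    (fun a c => a < i ∧ (f (i-1) - i - κ a < c ∧ c ≤ f (i-1) - i)) L (f 0) hb

lemma sterm_expand (i : ℕ) (hiL : i ≤ L) :
    (∏ᶠ (a : ℕ) (_ : a < i) (b : ℕ) (_ : f (i - 1) - i + a < b) (_ : b < f a),
      X (a, b) : MvPolynomial (ℕ × ℕ) ℤ) = Sterm f L (f 0) i := by
  have hb : ∀ a b : ℕ, (a < i ∧ (f (i-1) - i + a < b ∧ b < f a)) → a < L ∧ b < f 0 :=
    fun a b h => ⟨lt_of_lt_of_le h.1 hiL, lt_of_lt_of_le h.2.2 (hf (Nat.zero_le a))⟩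
  simp only [finprod_eq_if, ite_finprod, ← ite_and]
  exact expand_if2 (fun a b => X (a, b))
    (fun a b => a < i ∧ (f (i-1) - i + a < b ∧ b < f a)) L (f 0) hb

end Expand

def Nfun (f : ℕ → ℕ) (i : ℕ) (κ μ : ℕ → ℕ) : ℕ → ℕ :=
  fun r => if r < i then r + 1 + (f (i-1) - i - κ r) else μ (r - i)

lemma pterm_rows {f : ℕ → ℕ} {L C : ℕ} (hL : ∀ r, L ≤ r → f r = 0) (i : ℕ) (μ : ℕ → ℕ) :
    Pterm f L C i μ = ∏ r ∈ range L, ∏ v ∈ range C,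
      if i ≤ r ∧ (v < f r ∧ μ (r - i) ≤ v) then X (r, v) else 1 := by
  set h : ℕ → MvPolynomial (ℕ × ℕ) ℤ :=
    fun r => ∏ v ∈ range C, if v < f r ∧ μ (r - i) ≤ v then X (r, v) else 1 with hh
  have e0 : Pterm f L C i μ = ∏ u ∈ range L, h (i + u) := by
    refine Finset.prod_congr rfl (fun u _ => ?_)
    simp [hh, Nat.add_sub_cancel_left]
  have e1 : ∏ u ∈ range L, h (i + u) = ∏ r ∈ Ico i (i + L), h r := by
    rw [Finset.prod_Ico_eq_prod_range]
    simp [Nat.add_sub_cancel_left]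
  have e2 : ∏ r ∈ Ico i (i + L), h r
      = ∏ r ∈ range (i + L), (if i ≤ r then h r else 1) := by
    rw [Finset.range_eq_Ico,
      ← Finset.prod_Ico_consecutive _ (Nat.zero_le i) (Nat.le_add_right i L)]
    have e2a : ∏ r ∈ Ico 0 i, (if i ≤ r then h r else 1) = 1 := by
      refine Finset.prod_eq_one (fun r hr => ?_)
      rw [Finset.mem_Ico] at hr
      exact if_neg (by omega)
    have e2b : ∏ r ∈ Ico i (i + L), (if i ≤ r then h r else 1)
        = ∏ r ∈ Ico i (i + L), h r := by
      refine Finset.prod_congr rfl (fun r hr => ?_)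
      rw [Finset.mem_Ico] at hr
      exact if_pos hr.1
    rw [e2a, e2b, one_mul]
  have e3 : ∏ r ∈ range (i + L), (if i ≤ r then h r else 1)
      = ∏ r ∈ range L, (if i ≤ r then h r else 1) := by
    symm
    refine Finset.prod_subset (Finset.range_subset_range.2 (Nat.le_add_left L i)) ?_
    intro r hr hrn
    rw [Finset.mem_range] at hr hrn
    have hfr : f r = 0 := hL r (by omega)
    have : h r = 1 := by
      refine Finset.prod_eq_one (fun v _ => if_neg ?_)
      rw [hfr]
      omega
    rw [this, ite_self]
  rw [e0, e1, e2, e3]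
  refine Finset.prod_congr rfl (fun r _ => ?_)
  rw [ite_prod_finset]
  refine Finset.prod_congr rfl (fun v _ => ?_)
  rw [← ite_and]

lemma row_shift {C r d' κr : ℕ} (p : Prop) [Decidable p] (hκ : κr ≤ d') (hrd : r + d' < C) :
    (∏ c ∈ range C, if d' - κr < c ∧ c ≤ d' then (X (r, r + c) : MvPolynomial (ℕ × ℕ) ℤ) else 1)
      = ∏ b ∈ range C, if r + (d' - κr) < b ∧ b ≤ r + d' then X (r, b) else 1 := by
  set g : ℕ → MvPolynomial (ℕ × ℕ) ℤ :=
    fun b => if r + (d' - κr) < b ∧ b ≤ r + d' then X (r, b) else 1 with hg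
  have e1 : (∏ c ∈ range C, if d' - κr < c ∧ c ≤ d' then (X (r, r + c) : MvPolynomial (ℕ × ℕ) ℤ) else 1)
      = ∏ c ∈ range C, g (r + c) := by
    refine Finset.prod_congr rfl (fun c _ => ?_)
    simp only [hg]
    exact if_congr (by omega) rfl rfl
  have e2 : ∏ c ∈ range C, g (r + c) = ∏ b ∈ Ico r (r + C), g b := by
    rw [Finset.prod_Ico_eq_prod_range]
    simp [Nat.add_sub_cancel_left]
  have e3 : ∏ b ∈ Ico r (r + C), g b = ∏ b ∈ range (r + C), g b := by
    refine Finset.prod_subset ?_ ?_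
    · intro b hb
      rw [Finset.mem_Ico] at hb
      exact Finset.mem_range.2 hb.2
    · intro b hb hbn
      rw [Finset.mem_range] at hb
      rw [Finset.mem_Ico] at hbn
      exact if_neg (by omega)
  have e4 : ∏ b ∈ range (r + C), g b = ∏ b ∈ range C, g b := by
    symm
    refine Finset.prod_subset (Finset.range_subset_range.2 (Nat.le_add_left C r)) ?_
    intro b hb hbn
    rw [Finset.mem_range] at hb hbn
    exact if_neg (by omega)
  rw [e1, e2, e3, e4]

lemma mono_key {f : ℕ → ℕ} (hf : Antitone f) {L ρ : ℕ} (hL : ∀ r, L ≤ r → f r = 0)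
    (hρ' : ∀ k, k < ρ ↔ k < f k) {i : ℕ} (hi : i ≤ ρ)
    {κ μ : ℕ → ℕ} (hκa : Antitone κ) (hκ0 : κ 0 ≤ f (i-1) - i) :
    Oterm f L (f 0) i κ * Sterm f L (f 0) i * Pterm f L (f 0) i μ
      = Gpoly f L (f 0) (Nfun f i κ μ) := by
  rw [pterm_rows hL]
  unfold Oterm Sterm Gpoly
  rw [← Finset.prod_mul_distrib, ← Finset.prod_mul_distrib]
  refine Finset.prod_congr rfl (fun r hr => ?_)
  rw [Finset.mem_range] at hr
  by_cases hri : r < i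
  · -- rows of the tau part
    have hi1 : 1 ≤ i := by omega
    have hd1 : i - 1 < f (i - 1) := (hρ' (i-1)).1 (by omega)
    have hd2 : f (i - 1) ≤ f r := hf (by omega)
    have hdiag : r + 1 + (f (i-1) - i) ≤ f r := by omega
    have hκd : κ r ≤ f (i-1) - i := le_trans (hκa (Nat.zero_le r)) hκ0
    have hfC : f r ≤ f 0 := hf (Nat.zero_le r)
    -- third factor is 1
    have e3 : (∏ v ∈ range (f 0), if i ≤ r ∧ (v < f r ∧ μ (r - i) ≤ v)
        then (X (r, v) : MvPolynomial (ℕ × ℕ) ℤ) else 1) = 1 :=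
      Finset.prod_eq_one (fun v _ => if_neg (by omega))
    rw [e3, mul_one]
    have hN : Nfun f i κ μ r = r + 1 + (f (i-1) - i - κ r) := if_pos hri
    have e1 : (∏ c ∈ range (f 0), if r < i ∧ (f (i-1) - i - κ r < c ∧ c ≤ f (i-1) - i)
        then (X (r, r + c) : MvPolynomial (ℕ × ℕ) ℤ) else 1)
        = ∏ c ∈ range (f 0), if f (i-1) - i - κ r < c ∧ c ≤ f (i-1) - i
            then X (r, r + c) else 1 :=
      Finset.prod_congr rfl (fun c _ => if_congr (and_iff_right hri) rfl rfl)
    have e2 : (∏ b ∈ range (f 0), if r < i ∧ (f (i-1) - i + r < b ∧ b < f r)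
        then (X (r, b) : MvPolynomial (ℕ × ℕ) ℤ) else 1)
        = ∏ b ∈ range (f 0), if f (i-1) - i + r < b ∧ b < f r
            then X (r, b) else 1 :=
      Finset.prod_congr rfl (fun b _ => if_congr (and_iff_right hri) rfl rfl)
    rw [e1, e2, row_shift True hκd (by omega), ← Finset.prod_mul_distrib]
    refine Finset.prod_congr rfl (fun c _ => ?_)
    rw [hN]
    split_ifs <;> first | (exfalso; omega) | simp
  · -- rows of the P part
    have e1 : (∏ c ∈ range (f 0), if r < i ∧ (f (i-1) - i - κ r < c ∧ c ≤ f (i-1) - i)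
        then (X (r, r + c) : MvPolynomial (ℕ × ℕ) ℤ) else 1) = 1 :=
      Finset.prod_eq_one (fun c _ => if_neg (by omega))
    have e2 : (∏ b ∈ range (f 0), if r < i ∧ (f (i-1) - i + r < b ∧ b < f r)
        then (X (r, b) : MvPolynomial (ℕ × ℕ) ℤ) else 1) = 1 :=
      Finset.prod_eq_one (fun b _ => if_neg (by omega))
    rw [e1, e2, one_mul, one_mul]
    refine Finset.prod_congr rfl (fun v _ => if_congr ?_ (by rfl) rfl)
    have : Nfun f i κ μ r = μ (r - i) := if_neg hri
    rw [this]
    omega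

def Adm (f : ℕ → ℕ) (i : ℕ) (ν : ℕ → ℕ) : Prop :=
  (∀ r, r < i → r < ν r) ∧ (∀ r, r + 2 ≤ i → ν r < ν (r+1)) ∧ (∀ r, ν r ≤ f r) ∧
  (∀ r, i ≤ r → ν (r+1) ≤ ν r)

section AdmL

variable {f : ℕ → ℕ} {ρ : ℕ}

lemma nfun_adm (hf : Antitone f) (hρ' : ∀ k, k < ρ ↔ k < f k) {i : ℕ} (hi : i ≤ ρ)
    {κ μ : ℕ → ℕ} (hκ : κ ∈ Kset f i) (hμ : μ ∈ Mset f i) :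
    Adm f i (Nfun f i κ μ) := by
  obtain ⟨hκa, hκ0, hκz⟩ := hκ
  obtain ⟨hμa, hμb⟩ := hμ
  refine ⟨fun r hr => ?_, fun r hr => ?_, fun r => ?_, fun r hr => ?_⟩
  · simp only [Nfun, if_pos hr]; omega
  · have h1 : κ (r+1) ≤ κ r := hκa (Nat.le_succ r)
    have h2 : κ r ≤ f (i-1) - i := le_trans (hκa (Nat.zero_le r)) hκ0
    simp only [Nfun, if_pos (show r < i by omega), if_pos (show r + 1 < i by omega)]
    omega
  · by_cases hr : r < i
    · have hi1 : 1 ≤ i := by omega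
      have hd1 : i - 1 < f (i - 1) := (hρ' (i-1)).1 (by omega)
      have hd2 : f (i - 1) ≤ f r := hf (by omega)
      have h2 : κ r ≤ f (i-1) - i := le_trans (hκa (Nat.zero_le r)) hκ0
      simp only [Nfun, if_pos hr]
      omega
    · have h1 := hμb (r - i)
      have h2 : i + (r - i) = r := by omega
      rw [h2] at h1
      simp only [Nfun, if_neg hr]
      omega
  · simp only [Nfun, if_neg (show ¬ r + 1 < i by omega), if_neg (show ¬ r < i by omega)]
    exact hμa (show r - i ≤ r + 1 - i by omega)

lemma adm_nfun (hf : Antitone f) (hρ' : ∀ k, k < ρ ↔ k < f k) {i : ℕ} (hi : i ≤ ρ)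
    {ν : ℕ → ℕ} (hν : Adm f i ν) :
    ∃ κ μ, κ ∈ Kset f i ∧ μ ∈ Mset f i ∧ Nfun f i κ μ = ν := by
  obtain ⟨h1, h2, h3, h4⟩ := hν
  set d := f (i-1) - i with hd
  have chain : ∀ t r, r + t + 1 ≤ i → ν r + t ≤ ν (r + t) := by
    intro t
    induction t with
    | zero => intro r _; simp
    | succ t ih =>
      intro r hr
      have ha := ih r (by omega)
      have hb := h2 (r + t) (by omega)
      have : r + (t+1) = (r + t) + 1 := by omega
      rw [this]
      omega
  have hfd : 1 ≤ i → f (i - 1) = d + i := by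
    intro hi1
    have := (hρ' (i-1)).1 (by omega)
    omega
  have ub : ∀ r, r < i → ν r ≤ r + 1 + d := by
    intro r hr
    have hc := chain (i - 1 - r) r (by omega)
    have : r + (i - 1 - r) = i - 1 := by omega
    rw [this] at hc
    have := h3 (i-1)
    have := hfd (by omega)
    omega
  refine ⟨fun r => if r < i then (r + 1 + d) - ν r else 0, fun u => ν (i + u), ⟨?_, ?_, ?_⟩, ⟨?_, ?_⟩, ?_⟩
  · refine antitone_nat_of_succ_le (fun a => ?_)
    by_cases ha1 : a + 1 < i
    · have ha0 : a < i := by omega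
      have := h2 a (by omega)
      have := ub a ha0
      have := h1 a ha0
      simp only [if_pos ha1, if_pos ha0]
      omega
    · simp only [if_neg ha1]
      exact Nat.zero_le _
  · by_cases hi0 : 0 < i
    · have := h1 0 hi0
      simp only [if_pos hi0]
      omega
    · simp only [if_neg (show ¬ (0:ℕ) < i by omega)]
      exact Nat.zero_le _
  · intro a ha
    simp only [if_neg (show ¬ a < i by omega)]
  · refine antitone_nat_of_succ_le (fun u => ?_)
    have := h4 (i + u) (Nat.le_add_right i u)
    have he : i + (u + 1) = (i + u) + 1 := by omega
    rw [he]
    omega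
  · intro k
    have := h3 (i + k)
    simpa using this
  · funext r
    by_cases hr : r < i
    · have := ub r hr
      have := h1 r hr
      simp only [Nfun, if_pos hr]
      omega
    · simp only [Nfun, if_neg hr]
      have : i + (r - i) = r := by omega
      rw [this]

lemma nfun_inj {i : ℕ} {κ μ κ' μ' : ℕ → ℕ} (hκ : κ ∈ Kset f i) (hκ' : κ' ∈ Kset f i)
    (h : Nfun f i κ μ = Nfun f i κ' μ') : κ = κ' ∧ μ = μ' := by
  obtain ⟨hκa, hκ0, hκz⟩ := hκ
  obtain ⟨hκa', hκ0', hκz'⟩ := hκ'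
  have hv := fun r => congrFun h r
  constructor
  · funext a
    by_cases ha : a < i
    · have := hv a
      simp only [Nfun, if_pos ha] at this
      have b1 : κ a ≤ f (i-1) - i := le_trans (hκa (Nat.zero_le a)) hκ0
      have b2 : κ' a ≤ f (i-1) - i := le_trans (hκa' (Nat.zero_le a)) hκ0'
      omega
    · rw [hκz a (by omega), hκz' a (by omega)]
  · funext u
    have := hv (i + u)
    simp only [Nfun, if_neg (show ¬ i + u < i by omega), Nat.add_sub_cancel_left] at this
    exact this

lemma adm_le (hρ' : ∀ k, k < ρ ↔ k < f k) {i : ℕ} {ν : ℕ → ℕ} (h : Adm f i ν) : i ≤ ρ := by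
  rcases Nat.eq_zero_or_pos i with h0 | h0
  · omega
  · have ha := h.1 (i-1) (by omega)
    have hb := h.2.2.1 (i-1)
    have := (hρ' (i-1)).2 (by omega)
    omega

lemma adm_close {i j : ℕ} {ν : ℕ → ℕ} (hi : Adm f i ν) (hj : Adm f j ν) (hij : i ≤ j) :
    j ≤ i + 1 := by
  by_contra hc
  have h1 := hj.2.1 i (by omega)
  have h2 := hi.2.2.2 i (le_refl i)
  omega

lemma adm_zero : Adm f 0 (fun _ => 0) :=
  ⟨fun r hr => by omega, fun r hr => by omega, fun r => Nat.zero_le _, fun r _ => le_refl 0⟩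

lemma adm_pair {i : ℕ} {ν : ℕ → ℕ} (h : Adm f i ν) (hz : ¬ ∀ r, ν r = 0) :
    ∃ j, Adm f j ν ∧ Adm f (j+1) ν := by
  obtain ⟨h1, h2, h3, h4⟩ := h
  by_cases hi0 : i = 0
  · subst hi0
    have hν0 : 0 < ν 0 := by
      by_contra hc
      apply hz
      intro r
      have hanti : Antitone ν := antitone_nat_of_succ_le (fun n => h4 n (Nat.zero_le n))
      have := hanti (Nat.zero_le r)
      omega
    refine ⟨0, ⟨h1, h2, h3, h4⟩, ⟨fun r hr => ?_, fun r hr => by omega, h3,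
      fun r hr => h4 r (by omega)⟩⟩
    have : r = 0 := by omega
    subst this
    exact hν0
  · have hi1 : 1 ≤ i := by omega
    by_cases hcase : ν i ≤ ν (i-1)
    · refine ⟨i - 1, ⟨fun r hr => h1 r (by omega), fun r hr => h2 r (by omega), h3,
        fun r hr => ?_⟩, ?_⟩
      · by_cases hri : r = i - 1
        · subst hri
          have he : i - 1 + 1 = i := by omega
          rw [he]
          exact hcase
        · exact h4 r (by omega)
      · have he : i - 1 + 1 = i := by omega
        rw [he]
        exact ⟨h1, h2, h3, h4⟩
    · push_neg at hcase
      refine ⟨i, ⟨h1, h2, h3, h4⟩, ⟨fun r hr => ?_, fun r hr => ?_, h3,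
        fun r hr => h4 r (by omega)⟩⟩
      · by_cases hri : r < i
        · exact h1 r hri
        · have hre : r = i := by omega
          subst hre
          have := h1 (r-1) (by omega)
          omega
      · by_cases hri : r + 2 ≤ i
        · exact h2 r hri
        · have ha : r = i - 1 := by omega
          have hb : r + 1 = i := by omega
          rw [hb, ha]
          exact hcase
  
lemma coeff_sum {R : Type*} [CommRing R] (hρ' : ∀ k, k < ρ ↔ k < f k) (ν : ℕ → ℕ) :
    (∑ i ∈ range (ρ+1), if Adm f i ν then ((-1 : R))^i else 0)
      = if (∀ r, ν r = 0) then 1 else 0 := by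
  by_cases hz : ∀ r, ν r = 0
  · rw [if_pos hz]
    have hν : ν = fun _ => 0 := funext hz
    subst hν
    rw [Finset.sum_eq_single 0]
    · rw [if_pos adm_zero, pow_zero]
    · intro b _ hb
      refine if_neg (fun hA => ?_)
      have := hA.1 0 (by omega)
      simp at this
    · intro hc
      exact absurd (Finset.mem_range.2 (by omega)) hc
  · rw [if_neg hz]
    by_cases he : ∃ i, Adm f i ν
    · obtain ⟨i0, hi0⟩ := he
      obtain ⟨j, hj, hj1⟩ := adm_pair hi0 hz
      have hjρ : j + 1 ≤ ρ := adm_le hρ' hj1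
      have hmem : ∀ k, Adm f k ν ↔ (k = j ∨ k = j+1) := by
        intro k
        constructor
        · intro hk
          by_cases hkj : k ≤ j
          · have := adm_close hk hj1 (by omega)
            omega
          · have := adm_close hj hk (by omega)
            omega
        · rintro (rfl | rfl) <;> assumption
      have hfil : (range (ρ+1)).filter (fun i => Adm f i ν) = {j, j+1} := by
        ext k
        simp only [mem_filter, mem_range, mem_insert, mem_singleton, hmem k]
        constructor
        · tauto
        · rintro (rfl | rfl)
          · exact ⟨by omega, Or.inl rfl⟩
          · exact ⟨by omega, Or.inr rfl⟩
      rw [← Finset.sum_filter, hfil, Finset.sum_insert (by simp), Finset.sum_singleton,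
        pow_succ]
      ring
    · push_neg at he
      exact Finset.sum_eq_zero (fun i _ => if_neg (he i))

end AdmL


end RecAux

/-- **Theorem (recurrence, first column).**
For a nonempty partition `λ` of rank `ρ`,
`Σ_{i=0}^{ρ} (−1)^i τ_i P_{i+1,1} = A_{11} = ∏_{(i,j) ∈ λ} x_{ij}`. -/
theorem recurrence_first_column (f : ℕ → ℕ) (hf : Antitone f) (hfz : ∃ N, f N = 0)
    (hne : 0 < f 0)
    (ρ : ℕ) (hρ : ρ = Set.ncard {k : ℕ | k < f k}) :
    ∑ i ∈ Finset.range (ρ + 1),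
      (-1 : MvPolynomial (ℕ × ℕ) ℤ) ^ i * tau f i * Ppoly f i 0 = Apoly f 0 0 := by
  classical
  open Finset RecAux in
  obtain ⟨L, hL0⟩ := hfz
  have hL : ∀ r, L ≤ r → f r = 0 := fun r hr => Nat.le_antisymm (hL0 ▸ hf hr) (Nat.zero_le _)
  have hex : ∃ k, ¬ k < f k := ⟨L, by rw [hL0]; omega⟩
  have hmle : ∀ k, Nat.find hex ≤ k → ¬ k < f k := by
    intro k hk
    have h1 : ¬ Nat.find hex < f (Nat.find hex) := Nat.find_spec hex
    have h2 : f k ≤ f (Nat.find hex) := hf hk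
    omega
  have hρm : ρ = Nat.find hex := by
    rw [hρ]
    have hS : {k : ℕ | k < f k} = Set.Iio (Nat.find hex) := by
      ext k
      simp only [Set.mem_setOf_eq, Set.mem_Iio]
      constructor
      · intro hk
        by_contra hc
        exact hmle k (by omega) hk
      · intro hk
        exact not_not.1 (Nat.find_min hex hk)
    rw [hS, ← Finset.coe_Iio, Set.ncard_coe_finset, Nat.card_Iio]
  have hρ' : ∀ k, k < ρ ↔ k < f k := by
    intro k
    rw [hρm]
    constructor
    · intro hk
      exact not_not.1 (Nat.find_min hex hk)
    · intro hk
      by_contra hc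
      exact hmle k (by omega) hk
  have hρL : ρ ≤ L := by
    by_contra hc
    have := (hρ' L).1 (by omega)
    rw [hL0] at this
    omega
  have hKfin : ∀ i : ℕ,
      ({κ : ℕ → ℕ | Antitone κ ∧ κ 0 ≤ f (i - 1) - i ∧ ∀ a, i ≤ a → κ a = 0}).Finite :=
    fun i => RecAux.Kfin f i
  have hMfin : ∀ i : ℕ,
      ({μ : ℕ → ℕ | Antitone μ ∧ ∀ k, μ k ≤ f (i + k) - 0}).Finite :=
    fun i => RecAux.Mfin f hf L hL0 i
  -- expansion of tau
  have htau : ∀ i, i ≤ ρ → tau f i =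
      ∑ κ ∈ (hKfin i).toFinset, (Oterm f L (f 0) i κ * Sterm f L (f 0) i) := by
    intro i hi
    have hCo : 0 < i → ∀ c, c ≤ f (i-1) - i → c < f 0 := by
      intro hi0 c hc
      have := hf (Nat.zero_le (i-1))
      omega
    unfold tau Omega
    rw [finsum_mem_eq_finite_toFinset_sum _ (hKfin i),
      RecAux.sterm_expand hf hL i (le_trans hi hρL), Finset.sum_mul]
    refine Finset.sum_congr rfl (fun κ hκ => ?_)
    rw [RecAux.omega_expand hf hL i (le_trans hi hρL) hCo κ]
  -- expansion of Ppoly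
  have hP : ∀ i, Ppoly f i 0 = ∑ μ ∈ (hMfin i).toFinset, Pterm f L (f 0) i μ := by
    intro i
    unfold Ppoly
    rw [finsum_mem_eq_finite_toFinset_sum _ (hMfin i)]
    exact Finset.sum_congr rfl (fun μ _ => RecAux.ppoly_expand hf hL i μ)
  set V : ℕ → Finset (ℕ → ℕ) := fun i =>
    Finset.image (fun p : (ℕ → ℕ) × (ℕ → ℕ) => Nfun f i p.1 p.2)
      ((hKfin i).toFinset ×ˢ (hMfin i).toFinset) with hV
  have hVmem : ∀ i, i ≤ ρ → ∀ ν, ν ∈ V i ↔ Adm f i ν := by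
    intro i hi ν
    constructor
    · intro h
      obtain ⟨p, hp, he⟩ := Finset.mem_image.1 h
      obtain ⟨hp1, hp2⟩ := Finset.mem_product.1 hp
      have hκ : p.1 ∈ Kset f i := (Set.Finite.mem_toFinset _).1 hp1
      have hμ : p.2 ∈ Mset f i := (Set.Finite.mem_toFinset _).1 hp2
      rw [← he]
      exact nfun_adm hf hρ' hi hκ hμ
    · intro h
      obtain ⟨κ, μ, hκ, hμ, he⟩ := adm_nfun hf hρ' hi h
      exact Finset.mem_image.2 ⟨(κ, μ), Finset.mem_product.2
        ⟨(Set.Finite.mem_toFinset _).2 hκ, (Set.Finite.mem_toFinset _).2 hμ⟩, he⟩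
  -- step 1 : rewrite each summand as a sum over V i
  have step1 : ∀ i ∈ Finset.range (ρ + 1),
      (-1 : MvPolynomial (ℕ × ℕ) ℤ) ^ i * tau f i * Ppoly f i 0
        = ∑ ν ∈ V i, (-1 : MvPolynomial (ℕ × ℕ) ℤ) ^ i * Gpoly f L (f 0) ν := by
    intro i hi
    rw [Finset.mem_range] at hi
    have hi' : i ≤ ρ := by omega
    rw [htau i hi', hP i, mul_assoc, Finset.sum_mul_sum, Finset.mul_sum]
    have e1 : ∀ κ ∈ (hKfin i).toFinset,
        ((-1 : MvPolynomial (ℕ × ℕ) ℤ) ^ i * ∑ μ ∈ (hMfin i).toFinset,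
            Oterm f L (f 0) i κ * Sterm f L (f 0) i * Pterm f L (f 0) i μ)
          = ∑ μ ∈ (hMfin i).toFinset,
              (-1 : MvPolynomial (ℕ × ℕ) ℤ) ^ i * Gpoly f L (f 0) (Nfun f i κ μ) := by
      intro κ hκ
      rw [Finset.mul_sum]
      refine Finset.sum_congr rfl (fun μ hμ => ?_)
      obtain ⟨hκa, hκ0, hκz⟩ := (Set.Finite.mem_toFinset _).1 hκ
      rw [RecAux.mono_key hf hL hρ' hi' hκa hκ0]
    have e2 : ∑ p ∈ (hKfin i).toFinset ×ˢ (hMfin i).toFinset,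
        ((-1 : MvPolynomial (ℕ × ℕ) ℤ) ^ i * Gpoly f L (f 0) (Nfun f i p.1 p.2))
          = ∑ κ ∈ (hKfin i).toFinset, ∑ μ ∈ (hMfin i).toFinset,
              (-1 : MvPolynomial (ℕ × ℕ) ℤ) ^ i * Gpoly f L (f 0) (Nfun f i κ μ) :=
      Finset.sum_product _ _ _
    have hinj : ∀ x ∈ (hKfin i).toFinset ×ˢ (hMfin i).toFinset,
        ∀ y ∈ (hKfin i).toFinset ×ˢ (hMfin i).toFinset,
        Nfun f i x.1 x.2 = Nfun f i y.1 y.2 → x = y := by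
      intro x hx y hy he
      obtain ⟨hx1, hx2⟩ := Finset.mem_product.1 hx
      obtain ⟨hy1, hy2⟩ := Finset.mem_product.1 hy
      obtain ⟨e1, e2⟩ := nfun_inj ((Set.Finite.mem_toFinset _).1 hx1)
        ((Set.Finite.mem_toFinset _).1 hy1) he
      exact Prod.ext e1 e2
    rw [Finset.sum_congr rfl e1, ← e2, hV]
    exact (Finset.sum_image
      (f := fun ν => (-1 : MvPolynomial (ℕ × ℕ) ℤ) ^ i * Gpoly f L (f 0) ν) hinj).symm
  rw [Finset.sum_congr rfl step1]
  set W := (Finset.range (ρ + 1)).biUnion V with hW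
  have hsub : ∀ i ∈ Finset.range (ρ + 1), V i ⊆ W :=
    fun i hi => Finset.subset_biUnion_of_mem V hi
  have step2 : ∀ i ∈ Finset.range (ρ + 1),
      (∑ ν ∈ V i, (-1 : MvPolynomial (ℕ × ℕ) ℤ) ^ i * Gpoly f L (f 0) ν)
        = ∑ ν ∈ W, if Adm f i ν
            then (-1 : MvPolynomial (ℕ × ℕ) ℤ) ^ i * Gpoly f L (f 0) ν else 0 := by
    intro i hi
    have hi' : i ≤ ρ := by
      have := Finset.mem_range.1 hi
      omega
    have e1 : (∑ ν ∈ W, if Adm f i ν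
          then (-1 : MvPolynomial (ℕ × ℕ) ℤ) ^ i * Gpoly f L (f 0) ν else 0)
        = ∑ ν ∈ W, if ν ∈ V i
            then (-1 : MvPolynomial (ℕ × ℕ) ℤ) ^ i * Gpoly f L (f 0) ν else 0 :=
      Finset.sum_congr rfl (fun ν _ => if_congr (hVmem i hi' ν).symm rfl rfl)
    rw [e1, Finset.sum_ite_mem, Finset.inter_eq_right.2 (hsub i hi)]
  rw [Finset.sum_congr rfl step2, Finset.sum_comm]
  have step3 : ∀ ν ∈ W,
      (∑ i ∈ Finset.range (ρ + 1), if Adm f i ν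
          then (-1 : MvPolynomial (ℕ × ℕ) ℤ) ^ i * Gpoly f L (f 0) ν else 0)
        = if ν = (fun _ => 0) then Gpoly f L (f 0) ν else 0 := by
    intro ν _
    have e1 : ∀ i, (if Adm f i ν
          then (-1 : MvPolynomial (ℕ × ℕ) ℤ) ^ i * Gpoly f L (f 0) ν else 0)
        = (if Adm f i ν then (-1 : MvPolynomial (ℕ × ℕ) ℤ) ^ i else 0)
            * Gpoly f L (f 0) ν := by
      intro i
      rw [ite_mul, zero_mul]
    simp only [e1]
    rw [← Finset.sum_mul, RecAux.coeff_sum hρ' ν]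
    by_cases hz : ∀ r, ν r = 0
    · rw [if_pos hz, if_pos (funext hz), one_mul]
    · rw [if_neg hz, zero_mul, if_neg ?_]
      intro hc
      exact hz (fun r => congrFun hc r)
  rw [Finset.sum_congr rfl step3]
  have hzW : (fun _ => (0:ℕ)) ∈ W := Finset.mem_biUnion.2
    ⟨0, Finset.mem_range.2 (by omega), (hVmem 0 (Nat.zero_le ρ) _).2 adm_zero⟩
  rw [Finset.sum_eq_single (fun _ => (0:ℕ))]
  · rw [if_pos rfl]
    unfold Apoly
    exact (RecAux.apoly_expand hf hL).symm
  · intro b _ hb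
    exact if_neg hb
  · intro hc
    exact absurd hzW hc
end

section
/- Let λ be a partition and let d ≥ e be positive integers such that the square (d,e) lies in λ*∖λ (so the d×e rectangle F = {(i,j) : 1 ≤ i ≤ d, 1 ≤ j ≤ e} is contained in λ*). Let W_F be the d×e matrix over R with (i,j)-entry P_{ij}. Then there exist an upper unitriangular matrix P ∈ SL(d, R) and a lower unitriangular matrix Q ∈ SL(e, R) such that P · W_F · Q is the d×e matrix whose first d−e rows are zero and whose last e rows form the diagonal matrix diag(A_{1+d−e,1}, A_{2+d−e,2}, …, A_{d,e}); that is, (P · W_F · Q)_{d−e+j, j} = A_{j+d−e, j} for 1 ≤ j ≤ e and all other entries are zero. -/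
open MvPolynomial

namespace SNFAux

noncomputable section

abbrev RngSNF := MvPolynomial (ℕ × ℕ) ℤ

/-- row factor -/
def rowP (f : ℕ → ℕ) (s w m : ℕ) : RngSNF :=
  ∏ v ∈ Finset.range (f w - s), if m ≤ v then X (w, s + v) else 1

/-- finset form of the monomial of μ -/
def mono (f : ℕ → ℕ) (N r s : ℕ) (μ : ℕ → ℕ) : RngSNF :=
  ∏ u ∈ Finset.range N, rowP f s (r + u) (μ u)

def PartSet (f : ℕ → ℕ) (r s : ℕ) : Set (ℕ → ℕ) :=
  {μ | Antitone μ ∧ ∀ k, μ k ≤ f (r + k) - s}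

def Apoly' (f : ℕ → ℕ) (r s : ℕ) : MvPolynomial (ℕ × ℕ) ℤ :=
  ∏ᶠ (u : ℕ) (v : ℕ) (_ : v < f (r + u) - s), X (r + u, s + v)

def Ppoly' (f : ℕ → ℕ) (r s : ℕ) : MvPolynomial (ℕ × ℕ) ℤ :=
  ∑ᶠ μ ∈ {μ : ℕ → ℕ | Antitone μ ∧ ∀ k, μ k ≤ f (r + k) - s},
    ∏ᶠ (u : ℕ) (v : ℕ) (_ : v < f (r + u) - s) (_ : μ u ≤ v), X (r + u, s + v)

theorem Ppoly'_eq : Ppoly' = Ppoly := rfl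
theorem Apoly'_eq : Apoly' = Apoly := rfl

section conv
variable {f : ℕ → ℕ} (hf : Antitone f) {N : ℕ} (hN : f N = 0)

theorem fm0 (hf : Antitone f) (hN : f N = 0) : ∀ m, N ≤ m → f m = 0 :=
  fun m hm => Nat.le_antisymm (hN ▸ hf hm) (Nat.zero_le _)

include hf hN

theorem partSet_finite (r s : ℕ) : (PartSet f r s).Finite := by
  have h : PartSet f r s ⊆ Set.range (fun (g : Fin N → Fin (f r + 1)) (k : ℕ) =>
      if h : k < N then (g ⟨k, h⟩ : ℕ) else 0) := by
    intro μ hμ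
    refine ⟨fun k => ⟨μ k, ?_⟩, ?_⟩
    · have h1 := hμ.2 k.1
      have h2 : f (r + k.1) ≤ f r := hf (Nat.le_add_right _ _)
      omega
    · funext k
      by_cases h : k < N
      · simp [h]
      · have h1 := hμ.2 k
        have h2 : f (r + k) = 0 := fm0 hf hN _ (by omega)
        simp [h]
        omega
  exact (Set.finite_range _).subset h

theorem mono_inner (r s : ℕ) (μ : ℕ → ℕ) :
    (∏ᶠ (u : ℕ) (v : ℕ) (_ : v < f (r + u) - s) (_ : μ u ≤ v),
      (X (r + u, s + v) : RngSNF)) = mono f N r s μ := by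
  have h1 : ∀ u : ℕ, (∏ᶠ (v : ℕ) (_ : v < f (r + u) - s) (_ : μ u ≤ v),
      (X (r + u, s + v) : RngSNF)) = rowP f s (r + u) (μ u) := by
    intro u
    have h2 : ∀ v : ℕ, (∏ᶠ (_ : μ u ≤ v), (X (r + u, s + v) : RngSNF))
        = if μ u ≤ v then X (r + u, s + v) else 1 := fun v => finprod_eq_if
    rw [finprod_congr fun v => finprod_congr fun _ => h2 v]
    exact finprod_cond_eq_prod_of_cond_iff _ (fun {x} _ => (Finset.mem_range).symm)
  rw [finprod_congr h1]
  refine finprod_eq_prod_of_mulSupport_subset _ (fun u hu => ?_)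
  simp only [Function.mem_mulSupport] at hu
  by_contra h
  simp only [Finset.coe_range, Set.mem_Iio, not_lt] at h
  apply hu
  unfold rowP
  rw [fm0 hf hN (r + u) (by omega)]
  simp

theorem Ppoly_eq_sum (r s : ℕ) :
    Ppoly' f r s = ∑ μ ∈ (partSet_finite hf hN r s).toFinset, mono f N r s μ := by
  rw [Ppoly',
    show {μ : ℕ → ℕ | Antitone μ ∧ ∀ k, μ k ≤ f (r + k) - s} = PartSet f r s from rfl,
    finsum_mem_eq_finite_toFinset_sum _ (partSet_finite hf hN r s)]
  exact Finset.sum_congr rfl fun μ _ => mono_inner hf hN r s μ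

theorem Apoly_eq_mono (r s : ℕ) :
    Apoly' f r s = mono f N r s (fun _ => 0) := by
  rw [Apoly']
  have h1 : ∀ u : ℕ, (∏ᶠ (v : ℕ) (_ : v < f (r + u) - s), (X (r + u, s + v) : RngSNF))
      = rowP f s (r + u) 0 := by
    intro u
    rw [show rowP f s (r+u) 0 = ∏ v ∈ Finset.range (f (r+u) - s), (X (r + u, s + v) : RngSNF) from
      Finset.prod_congr rfl fun v _ => if_pos (Nat.zero_le v)]
    exact finprod_cond_eq_prod_of_cond_iff _ (fun {x} _ => (Finset.mem_range).symm)
  rw [finprod_congr h1]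
  refine finprod_eq_prod_of_mulSupport_subset _ (fun u hu => ?_)
  simp only [Function.mem_mulSupport] at hu
  by_contra h
  simp only [Finset.coe_range, Set.mem_Iio, not_lt] at h
  apply hu
  unfold rowP
  rw [fm0 hf hN (r + u) (by omega)]
  simp

end conv

def capf (f : ℕ → ℕ) (D₀ E₀ : ℕ) : ℕ → ℕ :=
  fun u => if D₀ ≤ u then min (f u) E₀ else f u

theorem capf_le (f : ℕ → ℕ) (D₀ E₀ : ℕ) (u : ℕ) : capf f D₀ E₀ u ≤ f u := by
  unfold capf; split_ifs <;> omega

theorem capf_antitone {f : ℕ → ℕ} (hf : Antitone f) (D₀ E₀ : ℕ) :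
    Antitone (capf f D₀ E₀) := by
  intro u u' huu'
  have := hf huu'
  unfold capf; split_ifs <;> omega

theorem capf_zero {f : ℕ → ℕ} {N : ℕ} (hN : f N = 0) (D₀ E₀ : ℕ) :
    capf f D₀ E₀ N = 0 := by
  unfold capf; split_ifs <;> omega

theorem rowP_depends (f g : ℕ → ℕ) (s w m : ℕ) (h : f w = g w) :
    rowP f s w m = rowP g s w m := by unfold rowP; rw [h]

theorem rowP_one (f : ℕ → ℕ) (s w m : ℕ) (h : f w ≤ s) : rowP f s w m = 1 := by
  unfold rowP
  rw [show f w - s = 0 by omega]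
  simp

theorem prod_shift_eq {M : Type*} [CommMonoid M] (g : ℕ → M) (r N T : ℕ) (hT : r + N ≤ T)
    (hg : ∀ w, N ≤ w → g w = 1) :
    ∏ u ∈ Finset.range N, g (r + u) = ∏ w ∈ Finset.range T, if r ≤ w then g w else 1 := by
  rw [show (∏ w ∈ Finset.range T, if r ≤ w then g w else 1)
      = ∏ w ∈ Finset.Ico r (r + N), if r ≤ w then g w else 1 from
    (Finset.prod_subset (by intro x hx; simp only [Finset.mem_range, Finset.mem_Ico] at *; omega)
      (by
        intro x hx hx2
        simp only [Finset.mem_range, Finset.mem_Ico, not_and, not_lt] at hx hx2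
        by_cases h : r ≤ x
        · rw [if_pos h, hg x (by omega)]
        · rw [if_neg h])).symm]
  rw [Finset.prod_Ico_eq_prod_range]
  rw [show r + N - r = N by omega]
  exact Finset.prod_congr rfl fun u _ => (if_pos (Nat.le_add_right r u)).symm

theorem mono_canon {f : ℕ → ℕ} (hf : Antitone f) {N : ℕ} (hN : f N = 0)
    (r s : ℕ) (μ : ℕ → ℕ) (T : ℕ) (hT : r + N ≤ T) :
    mono f N r s μ = ∏ w ∈ Finset.range T,
      if r ≤ w then rowP f s w (μ (w - r)) else 1 := by
  unfold mono
  rw [show (∏ u ∈ Finset.range N, rowP f s (r + u) (μ u))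
      = ∏ u ∈ Finset.range N, (fun w => rowP f s w (μ (w - r))) (r + u) from
    Finset.prod_congr rfl fun u _ => by simp only [Nat.add_sub_cancel_left]]
  exact prod_shift_eq _ r N T hT fun w hw =>
    rowP_one f s w (μ (w - r)) (by have h := hf hw; omega)

theorem row_split_A {f : ℕ → ℕ} {D₀ E₀ j : ℕ} (w m : ℕ) (hw : D₀ ≤ w) (hj : j ≤ E₀)
    (hm : m ≤ capf f D₀ E₀ w - j) :
    rowP f j w m = rowP (capf f D₀ E₀) j w m * rowP f E₀ w 0 := by
  have hcap : capf f D₀ E₀ w = min (f w) E₀ := if_pos hw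
  by_cases hc : f w ≤ E₀
  · rw [rowP_one f E₀ w 0 hc, mul_one]
    exact rowP_depends _ _ _ _ _ (by omega)
  · unfold rowP
    rw [hcap, show min (f w) E₀ = E₀ by omega]
    rw [show f w - j = (E₀ - j) + (f w - E₀) by omega, Finset.prod_range_add]
    congr 1
    refine Finset.prod_congr rfl fun v hv => ?_
    have hm' : m ≤ E₀ - j := by omega
    rw [if_pos (by omega), if_pos (Nat.zero_le v)]
    congr 2
    omega

theorem row_split_B {f : ℕ → ℕ} {E₀ j : ℕ} (w m : ℕ) (hw : E₀ + 1 ≤ f w) (hj : j ≤ E₀)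
    (hm : E₀ - j + 1 ≤ m) :
    rowP f j w m = rowP f (E₀ + 1) w (m - (E₀ - j + 1)) := by
  unfold rowP
  rw [show f w - j = (E₀ - j + 1) + (f w - (E₀ + 1)) by omega, Finset.prod_range_add]
  rw [show (∏ v ∈ Finset.range (E₀ - j + 1),
      if m ≤ v then (X (w, j + v) : RngSNF) else 1) = 1 from
    Finset.prod_eq_one fun v hv => if_neg (by simp only [Finset.mem_range] at hv; omega)]
  rw [one_mul]
  refine Finset.prod_congr rfl fun v _ => ?_
  rw [show j + (E₀ - j + 1 + v) = E₀ + 1 + v by omega]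
  exact if_congr (by omega) rfl rfl

section Amono
variable {f : ℕ → ℕ} (hf : Antitone f) {N : ℕ} (hN : f N = 0) {D₀ E₀ : ℕ}

include hf hN

theorem monoA_split (i j : ℕ) (hi : i ≤ D₀) (hj : j ≤ E₀) (μ : ℕ → ℕ)
    (hμ : μ ∈ PartSet (capf f D₀ E₀) i j) :
    mono f N i j μ
      = mono f N D₀ E₀ (fun _ => 0) * mono (capf f D₀ E₀) N i j μ := by
  have hf' : Antitone (capf f D₀ E₀) := capf_antitone hf D₀ E₀
  have hN' : capf f D₀ E₀ N = 0 := capf_zero hN D₀ E₀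
  set T := i + D₀ + N + 1 with hT
  rw [mono_canon hf hN i j μ T (by omega), mono_canon hf hN D₀ E₀ _ T (by omega),
    mono_canon hf' hN' i j μ T (by omega), ← Finset.prod_mul_distrib]
  refine Finset.prod_congr rfl fun w _ => ?_
  by_cases h1 : i ≤ w
  · by_cases h2 : D₀ ≤ w
    · rw [if_pos h1, if_pos h2, if_pos h1, mul_comm]
      exact row_split_A w _ h2 hj (by
        have := hμ.2 (w - i)
        rwa [show i + (w - i) = w by omega] at this)
    · rw [if_pos h1, if_neg h2, if_pos h1, one_mul]
      exact rowP_depends _ _ _ _ _ (show f w = capf f D₀ E₀ w by unfold capf; rw [if_neg h2])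
  · rw [if_neg h1, if_neg (show ¬ D₀ ≤ w by omega), if_neg h1, one_mul]

theorem monoB_split (i j : ℕ) (hi : i ≤ D₀) (hj : j ≤ E₀) (hDE : f (D₀ + 1) = E₀ + 1)
    (μ : ℕ → ℕ) (hμ : μ ∈ PartSet f i j) (hB : E₀ - j + 1 ≤ μ (D₀ - i)) :
    mono f N i j μ
      = mono f N i (E₀ + 1) (fun u => μ u - (E₀ - j + 1))
        * mono f N (D₀ + 1) j (fun k => μ (D₀ + 1 - i + k)) := by
  set T := i + D₀ + 1 + N with hT
  rw [mono_canon hf hN i j μ T (by omega), mono_canon hf hN i (E₀ + 1) _ T (by omega),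
    mono_canon hf hN (D₀ + 1) j _ T (by omega), ← Finset.prod_mul_distrib]
  refine Finset.prod_congr rfl fun w _ => ?_
  by_cases h1 : i ≤ w
  · by_cases h2 : D₀ + 1 ≤ w
    · rw [if_pos h1, if_pos h1, if_pos h2]
      have hfw : f w ≤ E₀ + 1 := hDE ▸ hf h2
      rw [rowP_one f (E₀ + 1) w _ hfw, one_mul]
      rw [show D₀ + 1 - i + (w - (D₀ + 1)) = w - i by omega]
    · rw [if_pos h1, if_pos h1, if_neg h2, mul_one]
      have hfw : E₀ + 1 ≤ f w := hDE ▸ hf (show w ≤ D₀ + 1 by omega)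
      exact row_split_B w _ hfw hj (le_trans hB (hμ.1 (show w - i ≤ D₀ - i by omega)))
  · rw [if_neg h1, if_neg h1, if_neg (show ¬ D₀ + 1 ≤ w by omega), one_mul]

end Amono

section key
variable {f : ℕ → ℕ} (hf : Antitone f) {N : ℕ} (hN : f N = 0) {D₀ E₀ : ℕ}

theorem zero_mem_PartSet (g : ℕ → ℕ) (r s : ℕ) : (fun _ => 0) ∈ PartSet g r s :=
  ⟨fun _ _ _ => le_rfl, fun _ => Nat.zero_le _⟩

include hf hN

theorem Ppoly_one (r s : ℕ) (h : f r ≤ s) : Ppoly' f r s = 1 := by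
  rw [Ppoly_eq_sum hf hN r s]
  have hset : (partSet_finite hf hN r s).toFinset = {fun _ => 0} := by
    ext μ
    simp only [Set.Finite.mem_toFinset, Finset.mem_singleton]
    constructor
    · intro hμ
      funext k
      have h1 := hμ.2 k
      have h2 : f (r + k) ≤ f r := hf (Nat.le_add_right _ _)
      omega
    · rintro rfl
      exact zero_mem_PartSet f r s
  rw [hset, Finset.sum_singleton]
  exact Finset.prod_eq_one fun u _ =>
    rowP_one f s (r + u) 0 (le_trans (hf (Nat.le_add_right r u)) h)

theorem Apoly_one (r s : ℕ) (h : f r ≤ s) : Apoly' f r s = 1 := by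
  rw [Apoly_eq_mono hf hN]
  exact Finset.prod_eq_one fun u _ =>
    rowP_one f s (r + u) 0 (le_trans (hf (Nat.le_add_right r u)) h)

theorem Apoly_split (r s : ℕ) (hr : r ≤ D₀) (hs : s ≤ E₀) :
    Apoly' f r s = Apoly' f D₀ E₀ * Apoly' (capf f D₀ E₀) r s := by
  have hf' := capf_antitone hf D₀ E₀
  have hN' := capf_zero hN D₀ E₀
  rw [Apoly_eq_mono hf hN r s, Apoly_eq_mono hf hN D₀ E₀, Apoly_eq_mono hf' hN' r s]
  exact monoA_split hf hN r s hr hs _ (zero_mem_PartSet _ r s)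

theorem key_identity (hDE : f (D₀ + 1) = E₀ + 1) (i j : ℕ) (hi : i ≤ D₀) (hj : j ≤ E₀) :
    Ppoly' f i j =
      Ppoly' f i (E₀ + 1) * Ppoly' f (D₀ + 1) j
        + Apoly' f D₀ E₀ * Ppoly' (capf f D₀ E₀) i j := by
  classical
  have hf' := capf_antitone hf D₀ E₀
  have hN' := capf_zero hN D₀ E₀
  rw [Ppoly_eq_sum hf hN i j, Ppoly_eq_sum hf hN i (E₀ + 1), Ppoly_eq_sum hf hN (D₀ + 1) j,
    Ppoly_eq_sum hf' hN' i j, Apoly_eq_mono hf hN]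
  rw [← Finset.sum_filter_add_sum_filter_not ((partSet_finite hf hN i j).toFinset)
    (fun μ => E₀ - j + 1 ≤ μ (D₀ - i))]
  congr 1
  · -- Case B
    rw [Finset.sum_mul_sum, ← Finset.sum_product']
    refine Finset.sum_nbij'
      (i := fun μ => (fun u => μ u - (E₀ - j + 1), fun k => μ (D₀ + 1 - i + k)))
      (j := fun q u => if u ≤ D₀ - i then (E₀ - j + 1) + q.1 u else q.2 (u - (D₀ + 1 - i)))
      ?_ ?_ ?_ ?_ ?_
    · -- maps into product set
      intro μ hμ
      simp only [Finset.mem_filter, Set.Finite.mem_toFinset] at hμ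
      obtain ⟨⟨hmono, hbd⟩, hB⟩ := hμ
      simp only [Finset.mem_product, Set.Finite.mem_toFinset]
      refine ⟨⟨fun u u' huu' => Nat.sub_le_sub_right (hmono huu') _, fun k => ?_⟩,
        ⟨fun u u' huu' => hmono (by omega), fun k => ?_⟩⟩
      · show μ k - (E₀ - j + 1) ≤ f (i + k) - (E₀ + 1)
        have h1 := hbd k
        omega
      · have h1 := hbd (D₀ + 1 - i + k)
        rw [show i + (D₀ + 1 - i + k) = D₀ + 1 + k by omega] at h1
        exact h1
    · -- inverse maps into filter set
      rintro ⟨α, β⟩ hq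
      simp only [Finset.mem_product, Set.Finite.mem_toFinset] at hq
      obtain ⟨⟨hα, hαbd⟩, hβ, hβbd⟩ := hq
      have hβle : ∀ k, β k ≤ E₀ + 1 - j := by
        intro k
        have h1 := hβbd k
        have h2 : f (D₀ + 1 + k) ≤ f (D₀ + 1) := hf (by omega)
        omega
      simp only [Finset.mem_filter, Set.Finite.mem_toFinset]
      refine ⟨⟨?_, ?_⟩, ?_⟩
      · -- antitone
        intro u u' huu'
        beta_reduce
        by_cases h1 : u' ≤ D₀ - i
        · rw [if_pos h1, if_pos (by omega)]
          exact Nat.add_le_add_left (hα huu') _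
        · rw [if_neg h1]
          by_cases h2 : u ≤ D₀ - i
          · rw [if_pos h2]
            have := hβle (u' - (D₀ + 1 - i))
            omega
          · rw [if_neg h2]
            exact hβ (by omega)
      · -- bounds
        intro k
        beta_reduce
        by_cases h1 : k ≤ D₀ - i
        · rw [if_pos h1]
          have h2 : E₀ + 1 ≤ f (i + k) := by
            have : f (i + k) ≥ f (D₀ + 1) := hf (by omega)
            omega
          have h3 := hαbd k
          omega
        · rw [if_neg h1]
          have h4 := hβbd (k - (D₀ + 1 - i))
          rw [show D₀ + 1 + (k - (D₀ + 1 - i)) = i + k by omega] at h4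
          exact h4
      · -- case B condition
        beta_reduce
        rw [if_pos le_rfl]
        omega
    · -- left inverse
      intro μ hμ
      simp only [Finset.mem_filter, Set.Finite.mem_toFinset] at hμ
      obtain ⟨⟨hmono, hbd⟩, hB⟩ := hμ
      funext u
      beta_reduce
      by_cases h1 : u ≤ D₀ - i
      · rw [if_pos h1]
        show E₀ - j + 1 + (μ u - (E₀ - j + 1)) = μ u
        have : E₀ - j + 1 ≤ μ u := le_trans hB (hmono h1)
        omega
      · rw [if_neg h1]
        show μ (D₀ + 1 - i + (u - (D₀ + 1 - i))) = μ u
        congr 1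
        omega
    · -- right inverse
      rintro ⟨α, β⟩ hq
      simp only [Finset.mem_product, Set.Finite.mem_toFinset] at hq
      obtain ⟨⟨hα, hαbd⟩, hβ, hβbd⟩ := hq
      have hβle : ∀ k, β k ≤ E₀ + 1 - j := by
        intro k
        have h1 := hβbd k
        have h2 : f (D₀ + 1 + k) ≤ f (D₀ + 1) := hf (by omega)
        omega
      have hα0 : ∀ u, ¬ u ≤ D₀ - i → α u = 0 := by
        intro u hu
        have h1 := hαbd u
        have h2 : f (i + u) ≤ f (D₀ + 1) := hf (by omega)
        omega
      refine Prod.ext ?_ ?_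
      · funext u
        simp only
        by_cases h1 : u ≤ D₀ - i
        · rw [if_pos h1]; omega
        · rw [if_neg h1]
          have := hβle (u - (D₀ + 1 - i))
          rw [hα0 u h1]
          omega
      · funext k
        simp only
        rw [if_neg (by omega)]
        congr 1
        omega
    · -- summand equality
      intro μ hμ
      simp only [Finset.mem_filter, Set.Finite.mem_toFinset] at hμ
      exact monoB_split hf hN i j hi hj hDE μ hμ.1 hμ.2
  · -- Case A
    rw [Finset.mul_sum]
    have hset : Finset.filter (fun μ => ¬ E₀ - j + 1 ≤ μ (D₀ - i))
        ((partSet_finite hf hN i j).toFinset) = (partSet_finite hf' hN' i j).toFinset := by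
      ext μ
      simp only [Finset.mem_filter, Set.Finite.mem_toFinset, not_le]
      constructor
      · rintro ⟨⟨hmono, hbd⟩, hA⟩
        refine ⟨hmono, fun k => ?_⟩
        have h1 := hbd k
        by_cases h2 : D₀ ≤ i + k
        · have h3 : μ k ≤ μ (D₀ - i) := hmono (by omega)
          unfold capf
          rw [if_pos h2]
          omega
        · unfold capf
          rw [if_neg h2]
          exact h1
      · rintro ⟨hmono, hbd⟩
        have hcap : ∀ k, capf f D₀ E₀ (i + k) ≤ f (i + k) := fun k => capf_le f D₀ E₀ _
        refine ⟨⟨hmono, fun k => le_trans (hbd k) (Nat.sub_le_sub_right (hcap k) _)⟩, ?_⟩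
        have h1 := hbd (D₀ - i)
        have h2 : capf f D₀ E₀ (i + (D₀ - i)) = min (f D₀) E₀ := by
          unfold capf
          rw [show i + (D₀ - i) = D₀ by omega, if_pos le_rfl]
        omega
    rw [hset]
    exact Finset.sum_congr rfl fun μ hμ =>
      monoA_split hf hN i j hi hj μ (by rwa [Set.Finite.mem_toFinset] at hμ)

end key


section matrices
variable {R : Type*} [CommRing R]

def Erow (n : ℕ) (p : Fin n) (c : Fin n → R) : Matrix (Fin n) (Fin n) R :=
  Matrix.of fun i k => (if i = k then 1 else 0) + (if k = p then c i else 0)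

def Ecol (n : ℕ) (p : Fin n) (c : Fin n → R) : Matrix (Fin n) (Fin n) R :=
  Matrix.of fun k j => (if k = j then 1 else 0) + (if k = p then c j else 0)

theorem Erow_mul {n m : ℕ} (p : Fin n) (c : Fin n → R) (W : Matrix (Fin n) (Fin m) R) :
    Erow n p c * W = Matrix.of fun i j => W i j + c i * W p j := by
  ext i j
  rw [Matrix.mul_apply]
  have h : ∀ k : Fin n, Erow n p c i k * W k j
      = (if i = k then W k j else 0) + (if k = p then c i * W k j else 0) := by
    intro k
    simp only [Erow, Matrix.of_apply]
    split_ifs <;> ring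
  rw [Finset.sum_congr rfl fun k _ => h k, Finset.sum_add_distrib,
    Finset.sum_ite_eq Finset.univ i (fun k => W k j),
    Finset.sum_ite_eq' Finset.univ p (fun k => c i * W k j)]
  simp

theorem mul_Ecol {n m : ℕ} (p : Fin m) (c : Fin m → R) (W : Matrix (Fin n) (Fin m) R) :
    W * Ecol m p c = Matrix.of fun i j => W i j + W i p * c j := by
  ext i j
  rw [Matrix.mul_apply]
  have h : ∀ k : Fin m, W i k * Ecol m p c k j
      = (if k = j then W i k else 0) + (if k = p then W i k * c j else 0) := by
    intro k
    simp only [Ecol, Matrix.of_apply]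
    split_ifs <;> ring
  rw [Finset.sum_congr rfl fun k _ => h k, Finset.sum_add_distrib,
    Finset.sum_ite_eq' Finset.univ j (fun k => W i k),
    Finset.sum_ite_eq' Finset.univ p (fun k => W i k * c j)]
  simp

theorem Erow_diag {n : ℕ} (p : Fin n) (c : Fin n → R) (hc : c p = 0) (i : Fin n) :
    Erow n p c i i = 1 := by
  by_cases h : i = p
  · subst h; simp [Erow, hc]
  · simp [Erow, h]

theorem Ecol_diag {n : ℕ} (p : Fin n) (c : Fin n → R) (hc : c p = 0) (i : Fin n) :
    Ecol n p c i i = 1 := by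
  by_cases h : i = p
  · subst h; simp [Ecol, hc]
  · simp [Ecol, h]

theorem Erow_last_upper {n : ℕ} (c : Fin (n+1) → R) (i k : Fin (n+1)) (h : k < i) :
    Erow (n+1) (Fin.last n) c i k = 0 := by
  simp only [Erow, Matrix.of_apply]
  rw [if_neg (by rintro rfl; exact lt_irrefl _ h), if_neg, add_zero]
  rintro rfl
  exact absurd h (not_lt.mpr (Fin.le_last i))

theorem Ecol_last_lower {n : ℕ} (c : Fin (n+1) → R) (k j : Fin (n+1)) (h : k < j) :
    Ecol (n+1) (Fin.last n) c k j = 0 := by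
  simp only [Ecol, Matrix.of_apply]
  rw [if_neg (by rintro rfl; exact lt_irrefl _ h), if_neg, add_zero]
  rintro rfl
  exact absurd h (not_lt.mpr (Fin.le_last j))

theorem mul_uni_upper {n : ℕ} (A B : Matrix (Fin n) (Fin n) R)
    (hA1 : ∀ i, A i i = 1) (hA0 : ∀ i k, k < i → A i k = 0)
    (hB1 : ∀ i, B i i = 1) (hB0 : ∀ i k, k < i → B i k = 0) :
    (∀ i, (A * B) i i = 1) ∧ (∀ i k, k < i → (A * B) i k = 0) := by
  constructor
  · intro i
    rw [Matrix.mul_apply, Finset.sum_eq_single i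
      (fun l _ hl => by
        rcases lt_or_gt_of_ne hl with h | h
        · rw [hA0 i l h, zero_mul]
        · rw [hB0 l i h, mul_zero])
      (fun h => absurd (Finset.mem_univ i) h), hA1, hB1, one_mul]
  · intro i k hk
    rw [Matrix.mul_apply]
    refine Finset.sum_eq_zero fun l _ => ?_
    by_cases h : l < i
    · rw [hA0 i l h, zero_mul]
    · rw [hB0 l k (lt_of_lt_of_le hk (not_lt.mp h)), mul_zero]

theorem mul_uni_lower {n : ℕ} (A B : Matrix (Fin n) (Fin n) R)
    (hA1 : ∀ i, A i i = 1) (hA0 : ∀ i k, i < k → A i k = 0)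
    (hB1 : ∀ i, B i i = 1) (hB0 : ∀ i k, i < k → B i k = 0) :
    (∀ i, (A * B) i i = 1) ∧ (∀ i k, i < k → (A * B) i k = 0) := by
  constructor
  · intro i
    rw [Matrix.mul_apply, Finset.sum_eq_single i
      (fun l _ hl => by
        rcases lt_or_gt_of_ne hl with h | h
        · rw [hB0 l i h, mul_zero]
        · rw [hA0 i l h, zero_mul])
      (fun h => absurd (Finset.mem_univ i) h), hA1, hB1, one_mul]
  · intro i k hk
    rw [Matrix.mul_apply]
    refine Finset.sum_eq_zero fun l _ => ?_
    by_cases h : i < l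
    · rw [hA0 i l h, zero_mul]
    · rw [hB0 l k (lt_of_le_of_lt (not_lt.mp h) hk), mul_zero]

def embSq (n : ℕ) (P : Matrix (Fin n) (Fin n) R) : Matrix (Fin (n+1)) (Fin (n+1)) R :=
  Matrix.of fun i k =>
    if h : (i : ℕ) < n ∧ (k : ℕ) < n then P ⟨i, h.1⟩ ⟨k, h.2⟩
    else if (i : ℕ) = (k : ℕ) then 1 else 0

def bd (n m : ℕ) (M : Matrix (Fin n) (Fin m) R) : Matrix (Fin (n+1)) (Fin (m+1)) R :=
  Matrix.of fun i j =>
    if h : (i : ℕ) < n ∧ (j : ℕ) < m then M ⟨i, h.1⟩ ⟨j, h.2⟩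
    else if (i : ℕ) = n ∧ (j : ℕ) = m then 1 else 0

theorem embSq_diag {n : ℕ} (P : Matrix (Fin n) (Fin n) R) (hP : ∀ i, P i i = 1)
    (i : Fin (n+1)) : embSq n P i i = 1 := by
  simp only [embSq, Matrix.of_apply]
  by_cases h : (i : ℕ) < n
  · rw [dif_pos ⟨h, h⟩, hP]
  · rw [dif_neg (by omega)]
    simp

theorem embSq_upper {n : ℕ} (P : Matrix (Fin n) (Fin n) R)
    (hP : ∀ i k, k < i → P i k = 0) (i k : Fin (n+1)) (h : k < i) : embSq n P i k = 0 := by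
  simp only [embSq, Matrix.of_apply]
  have hik : (k : ℕ) < (i : ℕ) := h
  by_cases hh : (i : ℕ) < n ∧ (k : ℕ) < n
  · rw [dif_pos hh]
    exact hP _ _ (by simpa using hik)
  · rw [dif_neg hh, if_neg (by omega)]

theorem embSq_lower {n : ℕ} (P : Matrix (Fin n) (Fin n) R)
    (hP : ∀ i k, i < k → P i k = 0) (i k : Fin (n+1)) (h : i < k) : embSq n P i k = 0 := by
  simp only [embSq, Matrix.of_apply]
  have hik : (i : ℕ) < (k : ℕ) := h
  by_cases hh : (i : ℕ) < n ∧ (k : ℕ) < n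
  · rw [dif_pos hh]
    exact hP _ _ (by simpa using hik)
  · rw [dif_neg hh, if_neg (by omega)]

theorem embSq_mul_bd {n m : ℕ} (P : Matrix (Fin n) (Fin n) R) (M : Matrix (Fin n) (Fin m) R) :
    embSq n P * bd n m M = bd n m (P * M) := by
  ext i j
  rw [Matrix.mul_apply, Fin.sum_univ_castSucc]
  by_cases hi : (i : ℕ) < n
  · have hlast : embSq n P i (Fin.last n) = 0 := by
      simp only [embSq, Matrix.of_apply, Fin.val_last]
      rw [dif_neg (by omega), if_neg (by omega)]
    rw [hlast, zero_mul, add_zero]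
    have hterm : ∀ k : Fin n, embSq n P i k.castSucc * bd n m M k.castSucc j
        = P ⟨i, hi⟩ k * bd n m M k.castSucc j := by
      intro k
      congr 1
      simp only [embSq, Matrix.of_apply, Fin.coe_castSucc]
      rw [dif_pos ⟨hi, k.isLt⟩]
    rw [Finset.sum_congr rfl fun k _ => hterm k]
    by_cases hj : (j : ℕ) < m
    · have hbd : ∀ k : Fin n, bd n m M k.castSucc j = M k ⟨j, hj⟩ := by
        intro k
        simp only [bd, Matrix.of_apply, Fin.coe_castSucc]
        rw [dif_pos ⟨k.isLt, hj⟩]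
      rw [Finset.sum_congr rfl fun k _ => by rw [hbd k]]
      simp only [bd, Matrix.of_apply]
      rw [dif_pos ⟨hi, hj⟩, Matrix.mul_apply]
    · have hbd : ∀ k : Fin n, bd n m M k.castSucc j = 0 := by
        intro k
        simp only [bd, Matrix.of_apply, Fin.coe_castSucc]
        rw [dif_neg (by omega), if_neg (by omega)]
      rw [Finset.sum_congr rfl fun k _ => by rw [hbd k, mul_zero]]
      simp only [bd, Matrix.of_apply, Finset.sum_const_zero]
      rw [dif_neg (by omega), if_neg (by omega)]
  · have hi' : (i : ℕ) = n := by omega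
    have hz : ∀ k : Fin n, embSq n P i k.castSucc = 0 := by
      intro k
      simp only [embSq, Matrix.of_apply, Fin.coe_castSucc]
      rw [dif_neg (by omega), if_neg (by omega)]
    have hlast : embSq n P i (Fin.last n) = 1 := by
      simp only [embSq, Matrix.of_apply, Fin.val_last]
      rw [dif_neg (by omega), if_pos hi']
    rw [Finset.sum_congr rfl fun k _ => by rw [hz k, zero_mul], hlast, one_mul,
      Finset.sum_const_zero, zero_add]
    simp only [bd, Matrix.of_apply, Fin.val_last]
    rw [dif_neg (by omega), dif_neg (by omega)]
    simp [hi']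

theorem bd_mul_embSq {n m : ℕ} (M : Matrix (Fin n) (Fin m) R) (Q : Matrix (Fin m) (Fin m) R) :
    bd n m M * embSq m Q = bd n m (M * Q) := by
  ext i j
  rw [Matrix.mul_apply, Fin.sum_univ_castSucc]
  by_cases hj : (j : ℕ) < m
  · have hlast : embSq m Q (Fin.last m) j = 0 := by
      simp only [embSq, Matrix.of_apply, Fin.val_last]
      rw [dif_neg (by omega), if_neg (by omega)]
    rw [hlast, mul_zero, add_zero]
    have hterm : ∀ k : Fin m, bd n m M i k.castSucc * embSq m Q k.castSucc j
        = bd n m M i k.castSucc * Q k ⟨j, hj⟩ := by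
      intro k
      congr 1
      simp only [embSq, Matrix.of_apply, Fin.coe_castSucc]
      rw [dif_pos ⟨k.isLt, hj⟩]
    rw [Finset.sum_congr rfl fun k _ => hterm k]
    by_cases hi : (i : ℕ) < n
    · have hbd : ∀ k : Fin m, bd n m M i k.castSucc = M ⟨i, hi⟩ k := by
        intro k
        simp only [bd, Matrix.of_apply, Fin.coe_castSucc]
        rw [dif_pos ⟨hi, k.isLt⟩]
      rw [Finset.sum_congr rfl fun k _ => by rw [hbd k]]
      simp only [bd, Matrix.of_apply]
      rw [dif_pos ⟨hi, hj⟩, Matrix.mul_apply]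
    · have hbd : ∀ k : Fin m, bd n m M i k.castSucc = 0 := by
        intro k
        simp only [bd, Matrix.of_apply, Fin.coe_castSucc]
        rw [dif_neg (by omega), if_neg (by omega)]
      rw [Finset.sum_congr rfl fun k _ => by rw [hbd k, zero_mul]]
      simp only [bd, Matrix.of_apply, Finset.sum_const_zero]
      rw [dif_neg (by omega), if_neg (by omega)]
  · have hj' : (j : ℕ) = m := by omega
    have hz : ∀ k : Fin m, embSq m Q k.castSucc j = 0 := by
      intro k
      simp only [embSq, Matrix.of_apply, Fin.coe_castSucc]
      rw [dif_neg (by omega), if_neg (by omega)]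
    have hlast : embSq m Q (Fin.last m) j = 1 := by
      simp only [embSq, Matrix.of_apply, Fin.val_last]
      rw [dif_neg (by omega), if_pos (by omega)]
    rw [Finset.sum_congr rfl fun k _ => by rw [hz k, mul_zero], hlast, mul_one,
      Finset.sum_const_zero, zero_add]
    simp only [bd, Matrix.of_apply, Fin.val_last]
    rw [dif_neg (by omega), dif_neg (by omega)]
    simp [hj']

end matrices

section main

theorem aux (e : ℕ) : ∀ (d : ℕ) (f : ℕ → ℕ), Antitone f → ∀ N : ℕ, f N = 0 →
    0 < e → e ≤ d → f (d - 1) + 1 = e →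
    ∃ (P : Matrix (Fin d) (Fin d) RngSNF) (Q : Matrix (Fin e) (Fin e) RngSNF),
      (∀ i, P i i = 1) ∧ (∀ i j : Fin d, j < i → P i j = 0) ∧
      (∀ i, Q i i = 1) ∧ (∀ i j : Fin e, i < j → Q i j = 0) ∧
      P * Matrix.of (fun (i : Fin d) (j : Fin e) => Ppoly' f i j) * Q
        = Matrix.of (fun (i : Fin d) (j : Fin e) =>
            if (i : ℕ) = (d - e) + j then Apoly' f ((d - e) + j) j else 0) := by
  induction e with
  | zero => intro d f hf N hN he; exact absurd he (lt_irrefl 0)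
  | succ e₁ ih =>
    intro d f hf N hN he hde hcorner
    obtain ⟨d₀, rfl⟩ : ∃ d₀, d = d₀ + 1 := ⟨d - 1, by omega⟩
    rcases Nat.eq_zero_or_pos e₁ with h0 | hpos
    · -- base case e = 1
      subst h0
      have hfd : f d₀ = 0 := by simpa using hcorner
      refine ⟨Erow (d₀ + 1) (Fin.last d₀) (fun i => if (i : ℕ) = d₀ then 0
          else -(Ppoly' f i 0)), 1, ?_, ?_, ?_, ?_, ?_⟩
      · exact fun i => Erow_diag _ _ (by simp [Fin.val_last]) i
      · exact fun i j h => Erow_last_upper _ i j h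
      · exact fun i => Matrix.one_apply_eq i
      · exact fun i j h => Matrix.one_apply_ne (ne_of_lt h)
      · rw [Matrix.mul_one, Erow_mul]
        funext i j
        simp only [Matrix.of_apply]
        have hj : (j : ℕ) = 0 := by omega
        have hlast : Ppoly' f (Fin.last d₀ : Fin (d₀+1)) (j : ℕ) = 1 := by
          rw [Fin.val_last, hj]
          exact Ppoly_one hf hN d₀ 0 (by omega)
        by_cases hi : (i : ℕ) = d₀
        · rw [if_pos hi, zero_mul, add_zero, if_pos (by omega), hi, hj]
          rw [show d₀ + 1 - 1 + 0 = d₀ by omega]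
          rw [Ppoly_one hf hN d₀ 0 (by omega), Apoly_one hf hN d₀ 0 (by omega)]
        · rw [if_neg hi, hlast, hj, if_neg (by omega)]
          ring
    · -- step case
      obtain ⟨e₂, rfl⟩ : ∃ e₂, e₁ = e₂ + 1 := ⟨e₁ - 1, by omega⟩
      obtain ⟨d₁, rfl⟩ : ∃ d₁, d₀ = d₁ + 1 := ⟨d₀ - 1, by omega⟩
      have hDE : f (d₁ + 1) = e₂ + 1 := by simpa using hcorner
      have hd1e2 : e₂ ≤ d₁ := by omega
      set f' := capf f d₁ e₂ with hf'def
      have hf' : Antitone f' := capf_antitone hf d₁ e₂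
      have hN' : f' N = 0 := capf_zero hN d₁ e₂
      have hfd1 : e₂ + 1 ≤ f d₁ := by
        have := hf (show d₁ ≤ d₁ + 1 by omega)
        omega
      have hcorner' : f' (d₁ + 1 - 1) + 1 = e₂ + 1 := by
        show capf f d₁ e₂ d₁ + 1 = e₂ + 1
        unfold capf
        rw [if_pos le_rfl]
        omega
      obtain ⟨P', Q', hP'd, hP'u, hQ'd, hQ'l, hPQ'⟩ :=
        ih (d₁ + 1) f' hf' N hN' (by omega) (by omega) hcorner'
      have hPde : Ppoly' f (d₁ + 1) (e₂ + 1) = 1 :=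
        Ppoly_one hf hN _ _ (le_of_eq hDE)
      set cr : Fin (d₁ + 2) → RngSNF :=
        fun i => if (i : ℕ) = d₁ + 1 then 0 else -(Ppoly' f i (e₂ + 1)) with hcr
      set cc : Fin (e₂ + 2) → RngSNF :=
        fun j => if (j : ℕ) = e₂ + 1 then 0 else -(Ppoly' f (d₁ + 1) j) with hcc
      have hcrlast : cr (Fin.last (d₁ + 1)) = 0 := by
        simp only [hcr]
        rw [if_pos (Fin.val_last _)]
      have hcclast : cc (Fin.last (e₂ + 1)) = 0 := by
        simp only [hcc]
        rw [if_pos (Fin.val_last _)]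
      have claim1 : Erow (d₁+2) (Fin.last (d₁+1)) cr
            * Matrix.of (fun (i : Fin (d₁+2)) (j : Fin (e₂+2)) => Ppoly' f i j)
            * Ecol (e₂+2) (Fin.last (e₂+1)) cc
          = bd (d₁+1) (e₂+1) (Matrix.of fun (i : Fin (d₁+1)) (j : Fin (e₂+1)) =>
              Apoly' f d₁ e₂ * Ppoly' f' i j) := by
        rw [Erow_mul, mul_Ecol]
        funext i j
        simp only [Matrix.of_apply, Fin.val_last]
        by_cases hi : (i : ℕ) < d₁ + 1
        · have hcri : cr i = -(Ppoly' f i (e₂ + 1)) := by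
            simp only [hcr]
            rw [if_neg (by omega)]
          by_cases hj : (j : ℕ) < e₂ + 1
          · have hccj : cc j = -(Ppoly' f (d₁ + 1) j) := by
              simp only [hcc]
              rw [if_neg (by omega)]
            have hkey := key_identity hf hN hDE (i : ℕ) (j : ℕ) (by omega) (by omega)
            rw [hcri, hccj, hPde]
            simp only [bd, Matrix.of_apply]
            rw [dif_pos ⟨hi, hj⟩, hkey]
            ring
          · have hj' : (j : ℕ) = e₂ + 1 := by omega
            have hccj : cc j = 0 := by
              simp only [hcc]
              rw [if_pos hj']
            rw [hccj, mul_zero, add_zero, hcri, hj', hPde]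
            simp only [bd, Matrix.of_apply]
            rw [dif_neg (by omega), if_neg (by omega)]
            ring
        · have hi' : (i : ℕ) = d₁ + 1 := by omega
          have hcri : cr i = 0 := by
            simp only [hcr]
            rw [if_pos hi']
          rw [hcri, zero_mul, zero_mul, add_zero, add_zero, hi', hPde]
          by_cases hj : (j : ℕ) < e₂ + 1
          · have hccj : cc j = -(Ppoly' f (d₁ + 1) j) := by
              simp only [hcc]
              rw [if_neg (by omega)]
            rw [hccj]
            simp only [bd, Matrix.of_apply]
            rw [dif_neg (by omega), if_neg (by omega)]
            ring
          · have hj' : (j : ℕ) = e₂ + 1 := by omega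
            have hccj : cc j = 0 := by
              simp only [hcc]
              rw [if_pos hj']
            rw [hccj, mul_zero, add_zero, hj', hPde]
            simp only [bd, Matrix.of_apply]
            rw [dif_neg (by omega), if_pos ⟨hi', hj'⟩]
      refine ⟨embSq (d₁+1) P' * Erow (d₁+2) (Fin.last (d₁+1)) cr,
        Ecol (e₂+2) (Fin.last (e₂+1)) cc * embSq (e₂+1) Q', ?_, ?_, ?_, ?_, ?_⟩
      · exact (mul_uni_upper _ _ (embSq_diag P' hP'd) (embSq_upper P' hP'u)
          (Erow_diag _ _ hcrlast) (fun i k h => Erow_last_upper _ i k h)).1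
      · exact (mul_uni_upper _ _ (embSq_diag P' hP'd) (embSq_upper P' hP'u)
          (Erow_diag _ _ hcrlast) (fun i k h => Erow_last_upper _ i k h)).2
      · exact (mul_uni_lower _ _ (Ecol_diag _ _ hcclast)
          (fun i k h => Ecol_last_lower _ i k h)
          (embSq_diag Q' hQ'd) (embSq_lower Q' hQ'l)).1
      · exact (mul_uni_lower _ _ (Ecol_diag _ _ hcclast)
          (fun i k h => Ecol_last_lower _ i k h)
          (embSq_diag Q' hQ'd) (embSq_lower Q' hQ'l)).2
      · have hre : embSq (d₁+1) P' * Erow (d₁+2) (Fin.last (d₁+1)) cr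
            * Matrix.of (fun (i : Fin (d₁+2)) (j : Fin (e₂+2)) => Ppoly' f i j)
            * (Ecol (e₂+2) (Fin.last (e₂+1)) cc * embSq (e₂+1) Q')
            = embSq (d₁+1) P'
              * (Erow (d₁+2) (Fin.last (d₁+1)) cr
                * Matrix.of (fun (i : Fin (d₁+2)) (j : Fin (e₂+2)) => Ppoly' f i j)
                * Ecol (e₂+2) (Fin.last (e₂+1)) cc)
              * embSq (e₂+1) Q' := by
          simp only [Matrix.mul_assoc]
        rw [hre, claim1, embSq_mul_bd, bd_mul_embSq]
        have hsmul : (Matrix.of fun (i : Fin (d₁+1)) (j : Fin (e₂+1)) =>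
              Apoly' f d₁ e₂ * Ppoly' f' i j)
            = Apoly' f d₁ e₂ • (Matrix.of fun (i : Fin (d₁+1)) (j : Fin (e₂+1)) =>
              Ppoly' f' i j) := by
          funext i j
          simp only [Matrix.of_apply, Matrix.smul_apply, smul_eq_mul]
        rw [hsmul, Matrix.mul_smul, Matrix.smul_mul, hPQ']
        funext i j
        simp only [bd, Matrix.of_apply, Matrix.smul_apply, smul_eq_mul]
        by_cases hi : (i : ℕ) < d₁ + 1
        · by_cases hj : (j : ℕ) < e₂ + 1
          · rw [dif_pos ⟨hi, hj⟩]
            by_cases hc : (i : ℕ) = (d₁ + 1 - (e₂ + 1)) + (j : ℕ)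
            · rw [if_pos hc, if_pos (by omega)]
              rw [show d₁ + 1 + 1 - (e₂ + 1 + 1) + (j : ℕ)
                  = (d₁ + 1 - (e₂ + 1)) + (j : ℕ) by omega]
              exact (Apoly_split hf hN ((d₁ + 1 - (e₂ + 1)) + (j : ℕ)) (j : ℕ)
                (by omega) (by omega)).symm
            · rw [if_neg hc, mul_zero, if_neg (by omega)]
          · rw [dif_neg (by omega), if_neg (by omega), if_neg (by omega)]
        · have hi' : (i : ℕ) = d₁ + 1 := by omega
          by_cases hj : (j : ℕ) < e₂ + 1
          · rw [dif_neg (by omega), if_neg (by omega), if_neg (by omega)]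
          · have hj' : (j : ℕ) = e₂ + 1 := by omega
            rw [dif_neg (by omega), if_pos ⟨hi', hj'⟩, if_pos (by omega), hj']
            rw [show d₁ + 1 + 1 - (e₂ + 1 + 1) + (e₂ + 1) = d₁ + 1 by omega]
            exact (Apoly_one hf hN (d₁ + 1) (e₂ + 1) (le_of_eq hDE)).symm

end main

end

end SNFAux

/-- **Theorem (SNF of a rectangular weight matrix, `d ≥ e`).**
Let `F` be a `d × e` rectangle (`d ≥ e`) in `λ*` whose lower-right corner `(d,e)`
(1-based; `(d-1,e-1)` 0-based) lies in `λ* \ λ`. Then there are an upper unitriangular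
`P ∈ SL(d,R)` and a lower unitriangular `Q ∈ SL(e,R)` such that `P ⬝ W_F ⬝ Q` has its
first `d - e` rows zero and its last `e` rows equal to
`diag(A_{1+d-e,1}, …, A_{d,e})`. -/
theorem snf_rectangle_tall (f : ℕ → ℕ) (hf : Antitone f) (hfz : ∃ N, f N = 0)
    (d e : ℕ) (hd : 0 < d) (he : 0 < e) (hde : e ≤ d)
    (hmem : MemExt f (d - 1) (e - 1)) (hout : f (d - 1) < e) :
    ∃ (P : Matrix (Fin d) (Fin d) (MvPolynomial (ℕ × ℕ) ℤ))
      (Q : Matrix (Fin e) (Fin e) (MvPolynomial (ℕ × ℕ) ℤ)),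
      (∀ i, P i i = 1) ∧ (∀ i j : Fin d, j < i → P i j = 0) ∧
      (∀ i, Q i i = 1) ∧ (∀ i j : Fin e, i < j → Q i j = 0) ∧
      P * Matrix.of (fun (i : Fin d) (j : Fin e) => Ppoly f i j) * Q
        = Matrix.of (fun (i : Fin d) (j : Fin e) =>
            if (i : ℕ) = (d - e) + j then Apoly f ((d - e) + j) j else 0) := by
  obtain ⟨N, hN⟩ := hfz
  have hcorner : f (d - 1) + 1 = e := by
    have h2 := hmem.2
    omega
  obtain ⟨P, Q, h1, h2, h3, h4, h5⟩ := SNFAux.aux e d f hf N hN he hde hcorner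
  refine ⟨P, Q, h1, h2, h3, h4, ?_⟩
  rw [← SNFAux.Ppoly'_eq, ← SNFAux.Apoly'_eq]
  exact h5
end

section
/- Let λ be a partition and let s = (a,b) be a square not in λ such that λ' = λ ∪ {(a,b)} is again (the Young diagram of) a partition. Work over R' = ℤ[x_{ij} : (i,j) ∈ λ'], and for a square (r,s) let P_{rs} and P'_{rs} denote the polynomials defined from λ and from λ', respectively (with the convention P_{rs} = 1 when λ(r,s) = ∅). Then for every square (i,j) with 1 ≤ i ≤ a and 1 ≤ j ≤ b one has P'_{ij} = x_{ab} · P_{ij} + P_{i,b+1} · P_{a+1,j}, and for every square (i,j) with i > a or j > b one has P'_{ij} = P_{ij}. -/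
open MvPolynomial

/-!
Split the partitions `μ` inside `λ'(i,j)` according to whether `μ` contains the new square
`(a,b)`. If it does not, then `μ` lies inside `λ(i,j)` and `(a,b)` is one more square of the skew
shape, which gives `x_{ab} P_{ij}`. If it does, then `μ` contains the whole rectangle spanned by
`(i,j)` and `(a,b)`; removing that rectangle cuts `μ` into a partition inside `λ(i,b+1)` (the rows
`i, …, a` to the right of the rectangle) and one inside `λ(a+1,j)` (the rows below it), and the
skew weight factors accordingly, which gives `P_{i,b+1} P_{a+1,j}`. All that matters is that the
rows above row `a` are longer than `b` and the rows below it are at most `b` long.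
-/

open Finset Function

variable {M R : Type*} [CommMonoid M] [CommSemiring R]

theorem finprod_lt_le_eq_prod_Ico (m n : ℕ) (h : ℕ → M) :
    ∏ᶠ (v : ℕ) (_ : v < n) (_ : m ≤ v), h v = ∏ v ∈ Ico m n, h v := by
  rw [← finprod_mem_coe_finset]
  refine finprod_congr fun v => ?_
  simp only [finprod_eq_if, coe_Ico, Set.mem_Ico]
  by_cases hn : v < n <;> by_cases hm : m ≤ v <;> simp [hn, hm]

theorem finsum_mem_mul_finsum_mem {α β : Type*} {s : Set α} {t : Set β}
    (hs : s.Finite) (ht : t.Finite) (F : α → R) (G : β → R) :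
    (∑ᶠ a ∈ s, F a) * (∑ᶠ b ∈ t, G b) = ∑ᶠ p ∈ s ×ˢ t, F p.1 * G p.2 := by
  rw [finsum_mem_eq_finite_toFinset_sum _ hs, finsum_mem_eq_finite_toFinset_sum _ ht,
    finsum_mem_eq_finite_toFinset_sum _ (hs.prod ht), ← Set.Finite.toFinset_prod, sum_mul_sum,
    sum_product]

theorem finite_setOf_forall_le {g : ℕ → ℕ} {N : ℕ} (hN : ∀ k, N ≤ k → g k = 0) :
    {μ : ℕ → ℕ | ∀ k, μ k ≤ g k}.Finite := by
  refine Set.Finite.of_finite_image (f := fun μ (k : Fin N) => μ k) ?_ ?_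
  · refine (Set.Finite.pi (t := fun k : Fin N => Set.Iic (g k)) fun _ => Set.finite_Iic _).subset ?_
    rintro _ ⟨μ, hμ, rfl⟩ k -
    exact hμ k
  · intro μ hμ ν hν h
    funext k
    by_cases hk : k < N
    · exact congrFun h ⟨k, hk⟩
    · have := hμ k; have := hν k; have := hN k (not_lt.1 hk); omega

def partitionsIn (g : ℕ → ℕ) : Set (ℕ → ℕ) := {μ | Antitone μ ∧ ∀ k, μ k ≤ g k}

noncomputable def skewWeight (g μ : ℕ → ℕ) (x : ℕ → ℕ → M) : M :=
  ∏ᶠ (u : ℕ) (v : ℕ) (_ : v < g u) (_ : μ u ≤ v), x u v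

noncomputable def skewSum (g : ℕ → ℕ) (x : ℕ → ℕ → R) : R :=
  ∑ᶠ μ ∈ partitionsIn g, skewWeight g μ x

theorem Ppoly_eq_skewSum (f : ℕ → ℕ) (r s : ℕ) :
    Ppoly f r s = skewSum (fun k => f (r + k) - s) (fun u v => X (r + u, s + v)) := rfl

theorem partitionsIn_finite {g : ℕ → ℕ} {N : ℕ} (hN : ∀ k, N ≤ k → g k = 0) :
    (partitionsIn g).Finite :=
  (finite_setOf_forall_le hN).subset fun _ hμ => hμ.2

theorem partitionsIn_update_succ (g : ℕ → ℕ) (c : ℕ) :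
    partitionsIn (update g c (g c + 1)) =
      partitionsIn g ∪ {μ ∈ partitionsIn (update g c (g c + 1)) | μ c = g c + 1} := by
  ext μ
  simp only [partitionsIn, Set.mem_union, Set.mem_ofPred_eq]
  constructor
  · rintro ⟨hμ, hle⟩
    by_cases hc : μ c = g c + 1
    · exact Or.inr ⟨⟨hμ, hle⟩, hc⟩
    · refine Or.inl ⟨hμ, fun k => ?_⟩
      have := hle k
      rcases eq_or_ne k c with rfl | hk
      · simp only [update_self] at this; omega
      · rwa [update_of_ne hk] at this
  · rintro (⟨hμ, hle⟩ | ⟨h, -⟩)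
    · refine ⟨hμ, fun k => ?_⟩
      rcases eq_or_ne k c with rfl | hk
      · simp only [update_self]; exact (hle k).trans (Nat.le_succ _)
      · rw [update_of_ne hk]; exact hle k
    · exact h

theorem skewWeight_eq_prod {g : ℕ → ℕ} {N : ℕ} (hN : ∀ k, N ≤ k → g k = 0) (μ : ℕ → ℕ)
    (x : ℕ → ℕ → M) : skewWeight g μ x = ∏ u ∈ range N, ∏ v ∈ Ico (μ u) (g u), x u v := by
  simp only [skewWeight, finprod_lt_le_eq_prod_Ico]
  refine finprod_eq_prod_of_mulSupport_subset _ fun u hu => ?_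
  by_contra h
  simp [hN u (by simpa using h)] at hu

theorem skewWeight_update_succ {g : ℕ → ℕ} {N c : ℕ} (hN : ∀ k, N ≤ k → g k = 0) (hc : c < N)
    {μ : ℕ → ℕ} (hμ : μ c ≤ g c) (x : ℕ → ℕ → M) :
    skewWeight (update g c (g c + 1)) μ x = x c (g c) * skewWeight g μ x := by
  have hN' : ∀ k, N ≤ k → update g c (g c + 1) k = 0 := fun k hk => by
    rw [update_of_ne (by omega), hN k hk]
  have hrow : ∀ u, ∏ v ∈ Ico (μ u) (update g c (g c + 1) u), x u v =
      (∏ v ∈ Ico (μ u) (g u), x u v) * if u = c then x c (g c) else 1 := by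
    intro u
    rcases eq_or_ne u c with rfl | hu
    · rw [update_self, prod_Ico_succ_top hμ, if_pos rfl]
    · rw [update_of_ne hu, if_neg hu, mul_one]
  rw [skewWeight_eq_prod hN', skewWeight_eq_prod hN, prod_congr rfl fun u _ => hrow u,
    prod_mul_distrib, prod_ite_eq', if_pos (mem_range.2 hc), mul_comm]

def glue (c d : ℕ) (ν ρ : ℕ → ℕ) : ℕ → ℕ :=
  fun k => if k ≤ c then ν k + (d + 1) else ρ (k - (c + 1))

section Glue

variable {g : ℕ → ℕ} {c d : ℕ}

theorem glue_mem (hc : g c = d) (hlt : ∀ k < c, d < g k) (hgt : ∀ k, c < k → g k ≤ d)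
    {ν ρ : ℕ → ℕ} (hν : ν ∈ partitionsIn fun k => g k - (d + 1))
    (hρ : ρ ∈ partitionsIn fun k => g (c + 1 + k)) :
    glue c d ν ρ ∈ {μ ∈ partitionsIn (update g c (d + 1)) | μ c = d + 1} := by
  obtain ⟨hν, hνle⟩ := hν
  obtain ⟨hρ, hρle⟩ := hρ
  beta_reduce at hνle hρle
  have hνc := hνle c
  have hρ0 := hρle 0
  have hgc1 := hgt (c + 1) (by omega)
  simp only [add_zero] at hρ0
  refine ⟨⟨fun x y hxy => ?_, fun k => ?_⟩, ?_⟩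
  · simp only [glue]
    split_ifs with hy hx hx
    · have := hν hxy; omega
    · omega
    · have := hρ (Nat.zero_le (y - (c + 1))); omega
    · exact hρ (by omega)
  · simp only [glue]
    split_ifs with hk
    · rcases eq_or_lt_of_le hk with rfl | hk
      · simp only [update_self]; omega
      · rw [update_of_ne (by omega)]; have := hνle k; have := hlt k hk; omega
    · rw [update_of_ne (by omega)]
      simpa [show c + 1 + (k - (c + 1)) = k by omega] using hρle (k - (c + 1))
  · simp only [glue, le_refl, if_true]; omega

theorem bijOn_glue (hc : g c = d) (hlt : ∀ k < c, d < g k) (hgt : ∀ k, c < k → g k ≤ d) :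
    Set.BijOn (fun p : (ℕ → ℕ) × (ℕ → ℕ) => glue c d p.1 p.2)
      (partitionsIn (fun k => g k - (d + 1)) ×ˢ partitionsIn (fun k => g (c + 1 + k)))
      {μ ∈ partitionsIn (update g c (d + 1)) | μ c = d + 1} := by
  refine ⟨fun p hp => glue_mem hc hlt hgt hp.1 hp.2, ?_, ?_⟩
  · rintro ⟨ν, ρ⟩ ⟨⟨-, hν⟩, -⟩ ⟨ν', ρ'⟩ ⟨⟨-, hν'⟩, -⟩ h
    dsimp only at hν hν'
    simp only [Prod.mk.injEq]
    refine ⟨funext fun k => ?_, funext fun k => ?_⟩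
    · have := congrFun h k
      simp only [glue] at this
      split_ifs at this with hk
      · omega
      · have := hν k; have := hν' k; have := hgt k (by omega); omega
    · simpa [glue, if_neg (show ¬c + 1 + k ≤ c by omega)] using congrFun h (c + 1 + k)
  · rintro μ ⟨⟨hμ, hle⟩, hμc⟩
    refine ⟨(fun k => μ k - (d + 1), fun k => μ (c + 1 + k)),
      ⟨⟨?_, fun k => ?_⟩, ?_, fun k => ?_⟩, ?_⟩ <;> dsimp only
    · exact fun x y hxy => Nat.sub_le_sub_right (hμ hxy) _
    · have := hle k
      rcases eq_or_ne k c with rfl | hk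
      · omega
      · rw [update_of_ne hk] at this; omega
    · exact fun x y hxy => hμ (by omega)
    · simpa [update_of_ne (show c + 1 + k ≠ c by omega)] using hle (c + 1 + k)
    · funext k
      simp only [glue]
      split_ifs with hk
      · have := hμ hk; omega
      · congr 1; omega

theorem skewWeight_glue {N : ℕ} (hN : ∀ k, N ≤ k → g k = 0)
    (hc : g c = d) (hlt : ∀ k < c, d < g k) (hgt : ∀ k, c < k → g k ≤ d) (ν ρ : ℕ → ℕ)
    (x : ℕ → ℕ → M) :
    skewWeight (update g c (d + 1)) (glue c d ν ρ) x =
      skewWeight (fun k => g k - (d + 1)) ν (fun u v => x u (d + 1 + v)) *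
        skewWeight (fun k => g (c + 1 + k)) ρ (fun u v => x (c + 1 + u) v) := by
  have hN' : ∀ k, c + 1 + N ≤ k → update g c (d + 1) k = 0 := fun k hk => by
    rw [update_of_ne (by omega), hN k (by omega)]
  have hν : ∀ k, c + 1 ≤ k → g k - (d + 1) = 0 := fun k hk => by
    have := hgt k (by omega); omega
  have hρ : ∀ k, N ≤ k → g (c + 1 + k) = 0 := fun k hk => hN _ (by omega)
  have hshape : ∀ u ≤ c, update g c (d + 1) u = g u - (d + 1) + (d + 1) := fun u hu => by
    rcases eq_or_lt_of_le hu with rfl | hu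
    · rw [update_self]; omega
    · rw [update_of_ne (by omega)]; have := hlt u hu; omega
  rw [skewWeight_eq_prod hN', prod_range_add, skewWeight_eq_prod hν, skewWeight_eq_prod hρ]
  congr 1
  · refine prod_congr rfl fun u hu => ?_
    have hu : u ≤ c := Nat.lt_succ_iff.1 (mem_range.1 hu)
    simp only [glue, if_pos hu, hshape u hu, ← prod_Ico_add]
  · refine prod_congr rfl fun k _ => ?_
    simp [glue, update_of_ne (show c + 1 + k ≠ c by omega),
      if_neg (show ¬c + 1 + k ≤ c by omega)]

end Glue

theorem skewSum_update_corner {g : ℕ → ℕ} {N c d : ℕ}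
    (hN : ∀ k, N ≤ k → g k = 0) (hc : g c = d) (hlt : ∀ k < c, d < g k)
    (hgt : ∀ k, c < k → g k ≤ d) (x : ℕ → ℕ → R) :
    skewSum (update g c (d + 1)) x =
      x c d * skewSum g x +
        skewSum (fun k => g k - (d + 1)) (fun u v => x u (d + 1 + v)) *
          skewSum (fun k => g (c + 1 + k)) (fun u v => x (c + 1 + u) v) := by
  subst hc
  have hNc : ∀ k, c + 1 + N ≤ k → g k = 0 := fun k hk => hN k (by omega)
  have hfin := partitionsIn_finite (g := update g c (g c + 1)) (N := c + 1 + N) fun k hk => by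
    rw [update_of_ne (by omega), hNc k hk]
  have hdisj : Disjoint (partitionsIn g)
      {μ ∈ partitionsIn (update g c (g c + 1)) | μ c = g c + 1} :=
    Set.disjoint_left.2 fun μ hμ hμ' => by have := hμ.2 c; have := hμ'.2; omega
  rw [skewSum, partitionsIn_update_succ, finsum_mem_union hdisj (partitionsIn_finite hN)
    (hfin.subset fun _ hμ => hμ.1)]
  congr 1
  · rw [skewSum, mul_finsum_mem' _ _ (partitionsIn_finite hN)]
    exact finsum_mem_congr rfl fun μ hμ => skewWeight_update_succ hNc (by omega) (hμ.2 c) x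
  · have hν : ∀ k, c + 1 ≤ k → g k - (g c + 1) = 0 := fun k hk => by
      have := hgt k (by omega); omega
    rw [skewSum, skewSum, finsum_mem_mul_finsum_mem (partitionsIn_finite hν)
      (partitionsIn_finite (N := N) fun k hk => hN _ (by omega))]
    exact (finsum_mem_eq_of_bijOn _ (bijOn_glue rfl hlt hgt)
      fun p _ => (skewWeight_glue hN rfl hlt hgt p.1 p.2 x).symm).symm

theorem Ppoly_update_of_lt (f : ℕ → ℕ) {a i j : ℕ} (h : a < i ∨ f a < j) :
    Ppoly (update f a (f a + 1)) i j = Ppoly f i j := by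
  simp only [Ppoly_eq_skewSum]
  congr 1
  funext k
  rcases eq_or_ne (i + k) a with hk | hk
  · rw [hk, update_self]; omega
  · rw [update_of_ne hk]

theorem Ppoly_update_of_le {f : ℕ → ℕ} (hf : Antitone f) (hfz : ∃ N, f N = 0) {a i j : ℕ}
    (hcorner : a = 0 ∨ f a < f (a - 1)) (hi : i ≤ a) (hj : j ≤ f a) :
    Ppoly (update f a (f a + 1)) i j =
      X (a, f a) * Ppoly f i j + Ppoly f i (f a + 1) * Ppoly f (a + 1) j := by
  obtain ⟨N, hN⟩ := hfz
  obtain ⟨c, rfl⟩ : ∃ c, a = i + c := ⟨a - i, by omega⟩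
  obtain ⟨d, hd⟩ : ∃ d, f (i + c) = j + d := ⟨f (i + c) - j, by omega⟩
  have hshape : (fun k => update f (i + c) (f (i + c) + 1) (i + k) - j) =
      update (fun k => f (i + k) - j) c (d + 1) := by
    funext k
    rcases eq_or_ne k c with rfl | hk
    · simp only [update_self]; omega
    · rw [update_of_ne hk, update_of_ne (by omega)]
  have hN' : ∀ k, N ≤ k → f (i + k) - j = 0 := fun k hk => by
    have := hf (show N ≤ i + k by omega); omega
  have hlt : ∀ k < c, d < f (i + k) - j := fun k hk => by
    have := hf (show i + k ≤ i + c - 1 by omega)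
    have := hcorner.resolve_left (by omega)
    omega
  have hgt : ∀ k, c < k → f (i + k) - j ≤ d := fun k hk => by
    have := hf (show i + c ≤ i + k by omega); omega
  simp only [Ppoly_eq_skewSum]
  rw [hshape, skewSum_update_corner hN' (by simp only [hd]; omega) hlt hgt]
  simp only [hd, Nat.sub_sub, add_assoc]

/-- **Lemma (effect of adding a square on the polynomials `P`).**
Let `(a,b)` (0-indexed) be an addable corner of `λ`, i.e. `b = λ_{a+1}` and
(`a = 0` or `b < λ_a`), and let `λ' = λ ∪ {(a,b)}`. Then for squares `(i,j)` with
`i ≤ a` and `j ≤ b` one has `P'_{ij} = x_{ab}·P_{ij} + P_{i,b+1}·P_{a+1,j}`, while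
`P'_{ij} = P_{ij}` whenever `i > a` or `j > b` (all indices 0-based). -/
theorem Ppoly_add_square (f : ℕ → ℕ) (hf : Antitone f) (hfz : ∃ N, f N = 0)
    (a b : ℕ) (hb : b = f a) (hcorner : a = 0 ∨ b < f (a - 1))
    (f' : ℕ → ℕ) (hf' : f' = Function.update f a (f a + 1)) :
    (∀ i j : ℕ, i ≤ a → j ≤ b →
      Ppoly f' i j = X (a, b) * Ppoly f i j + Ppoly f i (b + 1) * Ppoly f (a + 1) j) ∧
    (∀ i j : ℕ, a < i ∨ b < j → Ppoly f' i j = Ppoly f i j) := by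
  subst hb hf'
  exact ⟨fun i j hi hj => Ppoly_update_of_le hf hfz hcorner hi hj,
    fun i j h => Ppoly_update_of_lt f h⟩
end

section
/- Let m ≥ 1 and let M_{2m−1} be the m×m matrix over ℤ[q] with (i,j)-entry C̃_{2m+1−i−j}(q), for 1 ≤ i,j ≤ m. Then there exist an upper unitriangular matrix P and a lower unitriangular matrix Q in SL(m, ℤ[q]) such that P · M_{2m−1} · Q = diag(q^{C(2m−1,2)}, q^{C(2m−3,2)}, q^{C(2m−5,2)}, …, q^{C(3,2)}, 1); that is, the i-th diagonal entry is q^{C(2m+1−2i, 2)} for 1 ≤ i ≤ m. In particular M_{2m−1} has Smith normal form diag(q^{C(2m−1,2)}, q^{C(2m−3,2)}, …, q^3, 1) over ℤ[q]. -/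
/-- The q-Catalan polynomial `C̃_n(q) = Σ_{μ ⊆ δ_{n-1}} q^{C(n,2) - |μ|}` of
Fürlinger and Hofbauer, where `μ` runs over partitions with `μ_k ≤ n - k`. -/
noncomputable def qCatalan (n : ℕ) : Polynomial ℤ :=
  ∑ᶠ μ ∈ {μ : ℕ → ℕ | Antitone μ ∧ ∀ k, μ k ≤ n - (k + 1)},
    Polynomial.X ^ (Nat.choose n 2 - ∑ᶠ k, μ k)

open Polynomial Finset Matrix


/-- partitions in staircase with bounded first part, generating polynomial -/
noncomputable def Fq : ℕ → ℕ → Polynomial ℤ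
  | 0, _ => 1
  | n+1, b => ∑ t ∈ Finset.range (min b n + 1), X ^ (n - t) * Fq n t

/-- the q-ballot triangle -/
noncomputable def Lq : ℕ → ℕ → Polynomial ℤ
  | 0, 0 => 1
  | 0, _+1 => 0
  | i+1, 0 => (1 + X) * Lq i 0 + X^3 * Lq i 1
  | i+1, k+1 => Lq i k + (X^(2*k+2) + X^(2*k+3)) * Lq i (k+1) + X^(4*k+7) * Lq i (k+2)

lemma Lq_zero_of_lt : ∀ i k, i < k → Lq i k = 0 := by
  intro i
  induction i with
  | zero => intro k hk; match k, hk with | (k+1), _ => simp [Lq]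
  | succ i ih =>
    intro k hk
    match k, hk with
    | (k+1), hk =>
      have h1 : Lq i k = 0 := ih k (by omega)
      have h2 : Lq i (k+1) = 0 := ih (k+1) (by omega)
      have h3 : Lq i (k+2) = 0 := ih (k+2) (by omega)
      simp [Lq, h1, h2, h3]

lemma Lq_diag : ∀ i, Lq i i = 1 := by
  intro i
  induction i with
  | zero => simp [Lq]
  | succ i ih =>
    have h2 : Lq i (i+1) = 0 := Lq_zero_of_lt i (i+1) (by omega)
    have h3 : Lq i (i+2) = 0 := Lq_zero_of_lt i (i+2) (by omega)
    simp [Lq, ih, h2, h3]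

lemma Fq_zero (b : ℕ) : Fq 0 b = 1 := by simp [Fq]

lemma Fq_one (b : ℕ) : Fq 1 b = 1 := by simp [Fq]

lemma Fq_bot : ∀ n, Fq n 0 = X ^ (n.choose 2) := by
  intro n
  induction n with
  | zero => simp [Fq]
  | succ n ih =>
    have : (n+1).choose 2 = n + n.choose 2 := by
      rw [Nat.choose_succ_succ, Nat.choose_one_right]
    simp [Fq, ih, this, pow_add]

lemma Fq_stab (n b c : ℕ) (hb : n ≤ b) (hc : n ≤ c) : Fq (n+1) b = Fq (n+1) c := by
  simp [Fq, min_eq_right hb, min_eq_right hc]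

lemma Fq_pascal (n b : ℕ) (h : b + 1 ≤ n) :
    Fq (n+1) (b+1) = Fq (n+1) b + X^(n-(b+1)) * Fq n (b+1) := by
  have h1 : min (b+1) n = b+1 := min_eq_left h
  have h2 : min b n = b := min_eq_left (by omega)
  show (∑ t ∈ Finset.range (min (b+1) n + 1), X ^ (n - t) * Fq n t) = _
  rw [h1, show b+1+1 = (b+1)+1 from rfl, Finset.sum_range_succ]
  show (∑ t ∈ Finset.range (b+1), X ^ (n - t) * Fq n t) + _ = _
  congr 1
  show _ = (∑ t ∈ Finset.range (min b n + 1), X ^ (n - t) * Fq n t)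
  rw [h2]
lemma choose_two_eq (a b : ℕ) (h : a * (a-1) = 2*b) : a.choose 2 = b := by
  rw [Nat.choose_two_right, h]; omega

lemma bridge : ∀ i j k, j + k = i → Fq (j + 2*k + 1) j = X^(k*(2*k+1)) * Lq (j+k) k := by
  intro i
  induction i with
  | zero =>
    intro j k h
    obtain ⟨rfl, rfl⟩ : j = 0 ∧ k = 0 := by omega
    simp [Fq, Lq]
  | succ i ih =>
    intro j k hjk
    cases k with
    | zero =>
      -- goal : Fq (j + 1) j = X ^ 0 * Lq j 0, with j = i+1
      obtain rfl : j = i + 1 := by omega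
      cases i with
      | zero => simp [Fq, Lq, Finset.sum_range_succ]; ring
      | succ i' =>
        -- goal: Fq (i'+3) (i'+2) = Lq (i'+2) 0
        have e1 : Fq (i'+3) (i'+2) = Fq (i'+3) (i'+1) + X^((i'+2)-(i'+2)) * Fq (i'+2) (i'+2) := by
          have h := Fq_pascal (i'+2) (i'+1) (by omega)
          rw [show i'+2+1 = i'+3 from by omega, show i'+1+1 = i'+2 from by omega] at h
          exact h
        have e2 : Fq (i'+3) (i'+1) = Fq (i'+3) i' + X^((i'+2)-(i'+1)) * Fq (i'+2) (i'+1) := by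
          have h := Fq_pascal (i'+2) i' (by omega)
          rw [show i'+2+1 = i'+3 from by omega] at h
          exact h
        have h1 : Fq (i'+2) (i'+1) = X^(0*(2*0+1)) * Lq (i'+1) 0 := by
          have h := ih (i'+1) 0 (by omega)
          rw [show i'+1+2*0+1 = i'+2 from by omega, show i'+1+0 = i'+1 from by omega] at h
          exact h
        have h2 : Fq (i'+3) i' = X^(1*(2*1+1)) * Lq (i'+1) 1 := by
          have h := ih i' 1 (by omega)
          rw [show i'+2*1+1 = i'+3 from by omega] at h
          exact h
        have h3 : Fq (i'+2) (i'+2) = Fq (i'+2) (i'+1) := Fq_stab (i'+1) _ _ (by omega) (by omega)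
        have hsub1 : (i'+2)-(i'+2) = 0 := by omega
        have hsub2 : (i'+2)-(i'+1) = 1 := by omega
        have hL : Lq (i'+1+1) 0 = (1 + X) * Lq (i'+1) 0 + X^3 * Lq (i'+1) 1 := by
          simp [Lq]
        rw [e1, e2, h3, h1, h2, hsub1, hsub2]
        show _ = X ^ (0*(2*0+1)) * Lq (i'+2) 0
        rw [show i'+2 = i'+1+1 from rfl, hL]
        ring
    | succ k' =>
      cases j with
      | zero =>
        -- goal: Fq (2k'+3) 0 = X^((k'+1)*(2*(k'+1)+1)) * Lq (k'+1) (k'+1)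
        rw [Fq_bot, show (0:ℕ)+(k'+1) = k'+1 from by omega, Lq_diag]
        rw [show (0 + 2*(k'+1) + 1).choose 2 = (k'+1)*(2*(k'+1)+1) from
          choose_two_eq _ _ (by
            have h9 : (0+2*(k'+1)+1) - 1 = 2*k'+2 := by omega
            rw [h9]; ring)]
        ring
      | succ j' =>
        -- goal: Fq (j'+1+2*(k'+1)+1) (j'+1) = X^((k'+1)*(2*(k'+1)+1)) * Lq (j'+1+(k'+1)) (k'+1)
        have e1 : Fq (j'+2*k'+4) (j'+1)
            = Fq (j'+2*k'+4) j' + X^(2*k'+2) * Fq (j'+2*k'+3) (j'+1) := by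
          have h := Fq_pascal (j'+2*k'+3) j' (by omega)
          rw [show j'+2*k'+3+1 = j'+2*k'+4 from by omega,
            show j'+2*k'+3-(j'+1) = 2*k'+2 from by omega] at h
          exact h
        have e3 : Fq (j'+2*k'+3) (j'+1)
            = Fq (j'+2*k'+3) j' + X^(2*k'+1) * Fq (j'+2*k'+2) (j'+1) := by
          have h := Fq_pascal (j'+2*k'+2) j' (by omega)
          rw [show j'+2*k'+2+1 = j'+2*k'+3 from by omega,
            show j'+2*k'+2-(j'+1) = 2*k'+1 from by omega] at h
          exact h
        have ihA : Fq (j'+2*k'+3) j' = X^((k'+1)*(2*(k'+1)+1)) * Lq (j'+k'+1) (k'+1) := by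
          have h := ih j' (k'+1) (by omega)
          rw [show j'+2*(k'+1)+1 = j'+2*k'+3 from by omega,
            show j'+(k'+1) = j'+k'+1 from by omega] at h
          exact h
        have ihB : Fq (j'+2*k'+2) (j'+1) = X^(k'*(2*k'+1)) * Lq (j'+k'+1) k' := by
          have h := ih (j'+1) k' (by omega)
          rw [show j'+1+2*k'+1 = j'+2*k'+2 from by omega,
            show j'+1+k' = j'+k'+1 from by omega] at h
          exact h
        have step2 : Fq (j'+2*k'+4) j'
            = X^((k'+2)*(2*(k'+2)+1)) * Lq (j'+k'+1) (k'+2)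
              + X^(2*k'+3) * (X^((k'+1)*(2*(k'+1)+1)) * Lq (j'+k'+1) (k'+1)) := by
          cases j' with
          | zero =>
            rw [Fq_bot, show (0:ℕ)+k'+1 = k'+1 from by omega,
              Lq_zero_of_lt (k'+1) (k'+2) (by omega), Lq_diag]
            rw [show (0+2*k'+4).choose 2 = (k'+2)*(2*k'+3) from
              choose_two_eq _ _ (by
                have h9 : (0+2*k'+4) - 1 = 2*k'+3 := by omega
                rw [h9]; ring)]
            ring
          | succ j'' =>
            have e4 : Fq (j''+2*k'+5) (j''+1)
                = Fq (j''+2*k'+5) j'' + X^(2*k'+3) * Fq (j''+2*k'+4) (j''+1) := by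
              have h := Fq_pascal (j''+2*k'+4) j'' (by omega)
              rw [show j''+2*k'+4+1 = j''+2*k'+5 from by omega,
                show j''+2*k'+4-(j''+1) = 2*k'+3 from by omega] at h
              exact h
            have ihC : Fq (j''+2*k'+5) j'' = X^((k'+2)*(2*(k'+2)+1)) * Lq (j''+k'+2) (k'+2) := by
              have h := ih j'' (k'+2) (by omega)
              rw [show j''+2*(k'+2)+1 = j''+2*k'+5 from by omega,
                show j''+(k'+2) = j''+k'+2 from by omega] at h
              exact h
            have ihD : Fq (j''+2*k'+4) (j''+1) = X^((k'+1)*(2*(k'+1)+1)) * Lq (j''+k'+2) (k'+1) := by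
              have h := ih (j''+1) (k'+1) (by omega)
              rw [show j''+1+2*(k'+1)+1 = j''+2*k'+4 from by omega,
                show j''+1+(k'+1) = j''+k'+2 from by omega] at h
              exact h
            have h5 : j''+1+2*k'+4 = j''+2*k'+5 := by omega
            have h7 : j''+1+k'+1 = j''+k'+2 := by omega
            rw [h5, h7, e4, ihC, ihD]
        have hL : Lq (j'+k'+1+1) (k'+1) = Lq (j'+k'+1) k'
            + (X^(2*k'+2) + X^(2*k'+3)) * Lq (j'+k'+1) (k'+1)
            + X^(4*k'+7) * Lq (j'+k'+1) (k'+2) := by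
          simp [Lq]
        have hg1 : j'+1+2*(k'+1)+1 = j'+2*k'+4 := by omega
        have hg2 : j'+1+(k'+1) = j'+k'+1+1 := by omega
        rw [hg1, hg2, e1, e3, ihA, ihB, step2, hL]
        ring
lemma expand (i j n : ℕ) (_hi : i ≤ n) (hj : j ≤ n) :
    ∑ k ∈ range (n+1), Lq (i+1) k * X^(k*(2*k+1)) * Lq j k
    = (∑ k ∈ range (n+1), (X^(2*k)+X^(2*k+1)) * X^(k*(2*k+1)) * (Lq i k * Lq j k))
      + ((∑ k ∈ range (n+1), X^((k+1)*(2*(k+1)+1)) * (Lq i k * Lq j (k+1)))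
        + (∑ k ∈ range (n+1), X^((k+1)*(2*(k+1)+1)) * (Lq i (k+1) * Lq j k))) := by
  rw [Finset.sum_range_succ' (fun k => Lq (i+1) k * X^(k*(2*k+1)) * Lq j k) n]
  rw [Finset.sum_range_succ' (fun k => (X^(2*k)+X^(2*k+1)) * X^(k*(2*k+1)) * (Lq i k * Lq j k)) n]
  rw [Finset.sum_range_succ (fun k => X^((k+1)*(2*(k+1)+1)) * (Lq i k * Lq j (k+1))) n]
  rw [Finset.sum_range_succ' (fun k => X^((k+1)*(2*(k+1)+1)) * (Lq i (k+1) * Lq j k)) n]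
  have hjz : Lq j (n+1) = 0 := Lq_zero_of_lt j (n+1) (by omega)
  have hin : ∀ k ∈ range n, Lq (i+1) (k+1) * X^((k+1)*((2*(k+1)+1))) * Lq j (k+1)
      = ((X^(2*(k+1))+X^(2*(k+1)+1)) * X^((k+1)*(2*(k+1)+1)) * (Lq i (k+1) * Lq j (k+1)))
        + (X^((k+1)*(2*(k+1)+1)) * (Lq i k * Lq j (k+1))
          + X^((k+1+1)*(2*(k+1+1)+1)) * (Lq i (k+1+1) * Lq j (k+1))) := by
    intro k _
    have hrec : Lq (i+1) (k+1)
        = Lq i k + (X^(2*k+2) + X^(2*k+3)) * Lq i (k+1) + X^(4*k+7) * Lq i (k+2) := by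
      simp [Lq]
    rw [hrec]
    ring
  rw [Finset.sum_congr rfl hin]
  simp only [Finset.sum_add_distrib]
  have h0 : Lq (i+1) 0 * X^(0*(2*0+1)) * Lq j 0
      = ((X^(2*0)+X^(2*0+1)) * X^(0*(2*0+1)) * (Lq i 0 * Lq j 0))
        + X^((0+1)*(2*(0+1)+1)) * (Lq i (0+1) * Lq j 0) := by
    have hrec : Lq (i+1) 0 = (1 + X) * Lq i 0 + X^3 * Lq i 1 := by simp [Lq]
    rw [hrec]
    ring
  rw [h0, hjz]
  ring

lemma swap (i j n : ℕ) (hi : i ≤ n) (hj : j ≤ n) :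
    ∑ k ∈ range (n+1), Lq (i+1) k * X^(k*(2*k+1)) * Lq j k
    = ∑ k ∈ range (n+1), Lq i k * X^(k*(2*k+1)) * Lq (j+1) k := by
  rw [expand i j n hi hj]
  have h2 : ∑ k ∈ range (n+1), Lq i k * X^(k*(2*k+1)) * Lq (j+1) k
      = ∑ k ∈ range (n+1), Lq (j+1) k * X^(k*(2*k+1)) * Lq i k :=
    Finset.sum_congr rfl (fun k _ => by ring)
  rw [h2, expand j i n hj hi]
  have hA : (∑ k ∈ range (n+1), (X^(2*k)+X^(2*k+1)) * X^(k*(2*k+1)) * (Lq i k * Lq j k))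
      = (∑ k ∈ range (n+1), (X^(2*k)+X^(2*k+1)) * X^(k*(2*k+1)) * (Lq j k * Lq i k)) :=
    Finset.sum_congr rfl (fun k _ => by ring)
  have hB : (∑ k ∈ range (n+1), X^((k+1)*(2*(k+1)+1)) * (Lq i k * Lq j (k+1)))
      = (∑ k ∈ range (n+1), X^((k+1)*(2*(k+1)+1)) * (Lq j (k+1) * Lq i k)) :=
    Finset.sum_congr rfl (fun k _ => by ring)
  have hC : (∑ k ∈ range (n+1), X^((k+1)*(2*(k+1)+1)) * (Lq i (k+1) * Lq j k))
      = (∑ k ∈ range (n+1), X^((k+1)*(2*(k+1)+1)) * (Lq j k * Lq i (k+1))) :=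
    Finset.sum_congr rfl (fun k _ => by ring)
  rw [hA, hB, hC]
  ring

lemma factA : ∀ i j n, i + j + 2 ≤ n →
    (∑ k ∈ range n, Lq i k * X^(k*(2*k+1)) * Lq j k) = Lq (i+j) 0 := by
  intro i
  induction i with
  | zero =>
    intro j n hn
    rw [Finset.sum_eq_single 0]
    · simp [Lq, Lq_diag]
    · intro k _ hk
      match k, hk with
      | (k+1), _ => rw [Lq_zero_of_lt 0 (k+1) (by omega)]; ring
    · intro h; exact absurd (Finset.mem_range.2 (by omega)) h
  | succ i ih =>
    intro j n hn
    obtain ⟨n', rfl⟩ : ∃ n', n = n'+1 := ⟨n-1, by omega⟩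
    rw [swap i j n' (by omega) (by omega)]
    have := ih (j+1) (n'+1) (by omega)
    rw [this]
    congr 1
    omega

lemma factA' (i j n : ℕ) (hi : i < n) :
    (∑ k ∈ range n, Lq i k * X^(k*(2*k+1)) * Lq j k) = Lq (i+j) 0 := by
  have hsub : range n ⊆ range (i+j+2+n) := by
    intro x hx; rw [Finset.mem_range] at *; omega
  rw [Finset.sum_subset hsub (fun k _ hk => by
    rw [Lq_zero_of_lt i k (by simp only [Finset.mem_range, not_lt] at hk; omega)]; ring)]
  exact factA i j _ (by omega)
/-- partitions inside the staircase `δ_{n-1}` with first part at most `b` -/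
def SP (n b : ℕ) : Set (ℕ → ℕ) :=
  {μ | Antitone μ ∧ (∀ k, μ k ≤ n - (k+1)) ∧ μ 0 ≤ b}

lemma SP_finite (n b : ℕ) : (SP n b).Finite := by
  apply Set.Finite.of_finite_image (f := fun μ (k : Fin (n+1)) => μ k)
  · apply Set.Finite.subset (Set.Finite.pi (fun _ : Fin (n+1) => Set.finite_Iic n))
    rintro g ⟨μ, hμ, rfl⟩
    intro k _
    have := hμ.2.1 (k : ℕ)
    simp only [Set.mem_Iic]
    omega
  · intro μ hμ ν hν heq
    funext k
    by_cases hk : k < n + 1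
    · exact congrFun heq ⟨k, hk⟩
    · have h1 := hμ.2.1 k
      have h2 := hν.2.1 k
      omega

lemma finsum_mu {n : ℕ} {μ : ℕ → ℕ} (h : ∀ k, μ k ≤ n - (k+1)) :
    (∑ᶠ k, μ k) = ∑ k ∈ range n, μ k := by
  apply finsum_eq_sum_of_support_subset
  intro k hk
  simp only [Function.mem_support] at hk
  simp only [Finset.coe_range, Set.mem_Iio]
  have := h k
  omega

lemma sum_le_choose {n : ℕ} {μ : ℕ → ℕ} (h : ∀ k, μ k ≤ n - (k+1)) :
    ∑ k ∈ range n, μ k ≤ n.choose 2 := by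
  calc ∑ k ∈ range n, μ k ≤ ∑ k ∈ range n, (n - 1 - k) := by
        apply Finset.sum_le_sum
        intro k _
        have := h k
        omega
    _ = ∑ k ∈ range n, k := Finset.sum_range_reflect (fun k => k) n
    _ = n.choose 2 := by
        rw [Nat.choose_two_right]
        have := Finset.sum_range_id_mul_two n
        omega

lemma choose_succ_two (n : ℕ) : (n+1).choose 2 = n.choose 2 + n := by
  rw [Nat.choose_succ_succ n 1, Nat.choose_one_right]
  show n + n.choose 2 = n.choose 2 + n
  omega

/-- prepend a part to a partition -/
def consP (t : ℕ) (ν : ℕ → ℕ) : ℕ → ℕ := fun k => match k with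
  | 0 => t
  | k+1 => ν k

lemma SP_sum : ∀ n b, (∑ᶠ μ ∈ SP n b, (X:Polynomial ℤ) ^ (n.choose 2 - ∑ᶠ k, μ k)) = Fq n b := by
  intro n
  induction n with
  | zero =>
    intro b
    have hset : SP 0 b = {fun _ => 0} := by
      ext μ
      constructor
      · rintro ⟨-, hB, -⟩
        funext k
        have := hB k
        omega
      · rintro rfl
        exact ⟨antitone_const, fun k => by simp, by simp⟩
    rw [hset, finsum_mem_singleton]
    simp [Fq]
  | succ n ih =>
    intro b
    rw [← Set.Finite.coe_toFinset (SP_finite (n+1) b), finsum_mem_coe_finset]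
    have hw : ∀ μ ∈ (SP_finite (n+1) b).toFinset,
        (X:Polynomial ℤ) ^ ((n+1).choose 2 - ∑ᶠ k, μ k)
        = X ^ ((n+1).choose 2 - ∑ k ∈ range (n+1), μ k) := by
      intro μ hμ
      rw [finsum_mu (((SP_finite (n+1) b).mem_toFinset.1 hμ).2.1)]
    rw [Finset.sum_congr rfl hw]
    have key : ∑ μ ∈ (SP_finite (n+1) b).toFinset,
          (X:Polynomial ℤ) ^ ((n+1).choose 2 - ∑ k ∈ range (n+1), μ k)
        = ∑ p ∈ (range (min b n + 1)).sigma (fun t => (SP_finite n t).toFinset),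
            X ^ (n - p.1) * X ^ (n.choose 2 - ∑ k ∈ range n, p.2 k) := by
      apply Finset.sum_nbij' (i := fun μ => (⟨μ 0, fun k => μ (k+1)⟩ : (_ : ℕ) × (ℕ → ℕ)))
        (j := fun p => consP p.1 p.2)
      · intro μ hμ
        obtain ⟨hA, hB, h0⟩ := (SP_finite (n+1) b).mem_toFinset.1 hμ
        rw [Finset.mem_sigma]
        constructor
        · rw [Finset.mem_range]
          show μ 0 < min b n + 1
          have := hB 0
          omega
        · rw [Set.Finite.mem_toFinset]
          refine ⟨fun a c hac => hA (Nat.succ_le_succ hac), fun k => ?_, hA (by omega : 0 ≤ 1)⟩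
          show μ (k+1) ≤ n - (k+1)
          have := hB (k+1)
          omega
      · intro p hp
        rw [Finset.mem_sigma, Finset.mem_range, Set.Finite.mem_toFinset] at hp
        obtain ⟨ht, hA, hB, h0⟩ := hp
        rw [Set.Finite.mem_toFinset]
        refine ⟨antitone_nat_of_succ_le fun k => ?_, fun k => ?_, by
          show p.1 ≤ b; omega⟩
        · match k with
          | 0 => exact h0
          | k+1 => exact hA (by omega : k ≤ k+1)
        · match k with
          | 0 => show p.1 ≤ n+1-1; omega
          | k+1 =>
            show p.2 k ≤ n+1-(k+2)
            have := hB k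
            omega
      · intro μ hμ
        funext k
        match k with
        | 0 => rfl
        | k+1 => rfl
      · intro p hp
        rfl
      · intro μ hμ
        obtain ⟨hA, hB, h0⟩ := (SP_finite (n+1) b).mem_toFinset.1 hμ
        have hsplit : ∑ k ∈ range (n+1), μ k = (∑ k ∈ range n, μ (k+1)) + μ 0 :=
          Finset.sum_range_succ' μ n
        have h1 : μ 0 ≤ n := by have := hB 0; omega
        have h2 : ∑ k ∈ range n, μ (k+1) ≤ n.choose 2 :=
          sum_le_choose (fun k => by have := hB (k+1); omega)
        rw [← pow_add]
        congr 1
        show (n+1).choose 2 - ∑ k ∈ range (n+1), μ k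
          = (n - μ 0) + (n.choose 2 - ∑ k ∈ range n, μ (k+1))
        have hc := choose_succ_two n
        omega
    rw [key, Finset.sum_sigma]
    have hin : ∀ t ∈ range (min b n + 1),
        (∑ ν ∈ (SP_finite n t).toFinset,
          (X:Polynomial ℤ) ^ (n - t) * X ^ (n.choose 2 - ∑ k ∈ range n, ν k))
        = X ^ (n - t) * Fq n t := by
      intro t _
      rw [← Finset.mul_sum]
      congr 1
      have hw2 : ∀ ν ∈ (SP_finite n t).toFinset,
          (X:Polynomial ℤ) ^ (n.choose 2 - ∑ k ∈ range n, ν k)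
          = X ^ (n.choose 2 - ∑ᶠ k, ν k) := by
        intro ν hν
        rw [finsum_mu (((SP_finite n t).mem_toFinset.1 hν).2.1)]
      rw [Finset.sum_congr rfl hw2, ← finsum_mem_coe_finset, Set.Finite.coe_toFinset]
      exact ih t
    rw [Finset.sum_congr rfl hin]
    show _ = Fq (n+1) b
    simp [Fq]

lemma qCatalan_eq (n : ℕ) : qCatalan (n+1) = Lq n 0 := by
  have hset : {μ : ℕ → ℕ | Antitone μ ∧ ∀ k, μ k ≤ (n+1) - (k + 1)} = SP (n+1) (n+1) := by
    ext μ
    constructor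
    · rintro ⟨hA, hB⟩
      refine ⟨hA, hB, ?_⟩
      have := hB 0
      omega
    · rintro ⟨hA, hB, -⟩
      exact ⟨hA, hB⟩
  rw [qCatalan, hset, SP_sum (n+1) (n+1), Fq_stab n (n+1) n (by omega) (by omega)]
  have h := bridge n n 0 (by omega)
  rw [show n+2*0+1 = n+1 from by omega, show n+0 = n from by omega] at h
  rw [h]
  ring

section Unitriangular
variable {R : Type*} [CommRing R] {m : ℕ}

lemma strict_pow_zero (S : Matrix (Fin m) (Fin m) R)
    (hS : ∀ i j : Fin m, (i:ℕ) ≤ (j:ℕ) → S i j = 0) :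
    ∀ d (i j : Fin m), (i:ℕ) < (j:ℕ) + d → (S^d) i j = 0 := by
  intro d
  induction d with
  | zero =>
    intro i j hij
    rw [pow_zero]
    exact Matrix.one_apply_ne (by
      intro h; rw [h] at hij; omega)
  | succ d ih =>
    intro i j hij
    rw [pow_succ, Matrix.mul_apply]
    apply Finset.sum_eq_zero
    intro a _
    by_cases h1 : (i:ℕ) < (a:ℕ) + d
    · rw [ih i a h1, zero_mul]
    · rw [hS a j (by omega), mul_zero]

lemma unitriangular_inv (L : Matrix (Fin m) (Fin m) R)
    (hd : ∀ i, L i i = 1) (hl : ∀ i j : Fin m, i < j → L i j = 0) :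
    ∃ N : Matrix (Fin m) (Fin m) R,
      (∀ i, N i i = 1) ∧ (∀ i j : Fin m, i < j → N i j = 0) ∧ N * L = 1 ∧ L * N = 1 := by
  set S : Matrix (Fin m) (Fin m) R := 1 - L with hSdef
  have hS : ∀ i j : Fin m, (i:ℕ) ≤ (j:ℕ) → S i j = 0 := by
    intro i j hij
    by_cases h : i = j
    · subst h
      simp [hSdef, Matrix.sub_apply, Matrix.one_apply_eq, hd i]
    · have hlt : i < j := by
        rw [Fin.lt_def]
        exact lt_of_le_of_ne hij (fun hc => h (Fin.ext hc))
      simp [hSdef, Matrix.sub_apply, Matrix.one_apply_ne h, hl i j hlt]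
  have hSm : S ^ m = 0 := by
    ext i j
    rw [strict_pow_zero S hS m i j (by have := i.isLt; omega)]
    simp
  refine ⟨∑ d ∈ range m, S ^ d, ?_, ?_, ?_, ?_⟩
  · intro i
    rw [Matrix.sum_apply]
    rw [Finset.sum_eq_single_of_mem 0 (Finset.mem_range.2 i.pos)]
    · simp
    · intro d _ hd0
      exact strict_pow_zero S hS d i i (by omega)
  · intro i j hij
    rw [Matrix.sum_apply]
    apply Finset.sum_eq_zero
    intro d _
    exact strict_pow_zero S hS d i j (by rw [Fin.lt_def] at hij; omega)
  · have hg := geom_sum_mul S m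
    have hL : L = 1 - S := by rw [hSdef, sub_sub_cancel]
    rw [hL]
    have h2 : (∑ d ∈ range m, S ^ d) * (1 - S) = -((∑ d ∈ range m, S ^ d) * (S - 1)) := by
      noncomm_ring
    rw [h2, hg, hSm, zero_sub, neg_neg]
  · rw [mul_eq_one_comm]
    have hg := geom_sum_mul S m
    have hL : L = 1 - S := by rw [hSdef, sub_sub_cancel]
    rw [hL]
    have h2 : (∑ d ∈ range m, S ^ d) * (1 - S) = -((∑ d ∈ range m, S ^ d) * (S - 1)) := by
      noncomm_ring
    rw [h2, hg, hSm, zero_sub, neg_neg]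

end Unitriangular

/-- **Theorem (SNF of the odd q-Catalan matrix).**
For `m ≥ 1`, the `m × m` matrix `M_{2m-1} = (C̃_{2m+1-i-j}(q))_{1 ≤ i,j ≤ m}` has Smith
normal form `diag(q^{C(2m-1,2)}, q^{C(2m-3,2)}, …, q^3, 1)` over `ℤ[q]`, realized by an
upper unitriangular `P` and a lower unitriangular `Q` in `SL(m, ℤ[q])`
(the `i`-th diagonal entry, `1 ≤ i ≤ m`, is `q^{C(2m+1-2i,2)}`). -/
theorem snf_qCatalan_odd (m : ℕ) (hm : 1 ≤ m) :
    ∃ P Q : Matrix (Fin m) (Fin m) (Polynomial ℤ),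
      (∀ i, P i i = 1) ∧ (∀ i j : Fin m, j < i → P i j = 0) ∧
      (∀ i, Q i i = 1) ∧ (∀ i j : Fin m, i < j → Q i j = 0) ∧
      P * Matrix.of (fun i j : Fin m =>
            qCatalan (2 * m + 1 - ((i : ℕ) + 1) - ((j : ℕ) + 1))) * Q
        = Matrix.diagonal (fun i : Fin m =>
            Polynomial.X ^ Nat.choose (2 * m + 1 - 2 * ((i : ℕ) + 1)) 2) := by
  classical
  set D : Fin m → Polynomial ℤ := fun k => X ^ ((k:ℕ)*(2*(k:ℕ)+1)) with hD
  set Lm : Matrix (Fin m) (Fin m) (Polynomial ℤ) := Matrix.of (fun a k : Fin m => Lq a k)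
    with hLm
  obtain ⟨N, hN1, hN2, hNL, hLN⟩ := unitriangular_inv Lm
    (fun i => Lq_diag i)
    (fun i j hij => Lq_zero_of_lt i j (by rw [Fin.lt_def] at hij; exact hij))
  refine ⟨N.submatrix Fin.rev Fin.rev, (Nᵀ).submatrix Fin.rev Fin.rev, ?_, ?_, ?_, ?_, ?_⟩
  · intro i
    exact hN1 i.rev
  · intro i j hij
    exact hN2 i.rev j.rev (by rw [Fin.lt_def] at *; simp [Fin.val_rev]; omega)
  · intro i
    exact hN1 i.rev
  · intro i j hij
    exact hN2 j.rev i.rev (by rw [Fin.lt_def] at *; simp [Fin.val_rev]; omega)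
  · -- main computation
    have hM : Matrix.of (fun i j : Fin m =>
          qCatalan (2 * m + 1 - ((i : ℕ) + 1) - ((j : ℕ) + 1)))
        = (Lm * Matrix.diagonal D * Lmᵀ).submatrix Fin.rev Fin.rev := by
      ext i j
      have hent : (Lm * Matrix.diagonal D * Lmᵀ) i.rev j.rev
          = ∑ k : Fin m, Lq i.rev k * X ^ ((k:ℕ)*(2*(k:ℕ)+1)) * Lq j.rev k := by
        rw [Matrix.mul_apply]
        apply Finset.sum_congr rfl
        intro k _
        rw [Matrix.mul_diagonal]
        simp [hLm, hD, Matrix.transpose_apply]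
      have hsum : ∑ k : Fin m, Lq i.rev k * X ^ ((k:ℕ)*(2*(k:ℕ)+1)) * Lq j.rev k
          = ∑ k ∈ range m, Lq i.rev k * X ^ (k*(2*k+1)) * Lq j.rev k :=
        Fin.sum_univ_eq_sum_range (fun k => Lq i.rev k * X ^ (k*(2*k+1)) * Lq j.rev k) m
      have hfact := factA' (i.rev : ℕ) (j.rev : ℕ) m i.rev.isLt
      have hq : qCatalan (2 * m + 1 - ((i : ℕ) + 1) - ((j : ℕ) + 1))
          = Lq ((i.rev : ℕ) + (j.rev : ℕ)) 0 := by
        have hi := i.isLt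
        have hj := j.isLt
        rw [show 2 * m + 1 - ((i : ℕ) + 1) - ((j : ℕ) + 1)
            = ((i.rev : ℕ) + (j.rev : ℕ)) + 1 from by simp [Fin.val_rev]; omega]
        exact qCatalan_eq _
      rw [Matrix.submatrix_apply, Matrix.of_apply, hent, hsum, hfact, hq]
    rw [hM]
    have hrev : (Fin.rev : Fin m → Fin m) = ⇑(Fin.revPerm (n := m)) := rfl
    rw [hrev, Matrix.submatrix_mul_equiv, Matrix.submatrix_mul_equiv]
    have hmid : N * (Lm * Matrix.diagonal D * Lmᵀ) * Nᵀ = Matrix.diagonal D := by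
      calc N * (Lm * Matrix.diagonal D * Lmᵀ) * Nᵀ
          = (N * Lm) * Matrix.diagonal D * (N * Lm)ᵀ := by
            rw [Matrix.transpose_mul]
            noncomm_ring
        _ = Matrix.diagonal D := by rw [hNL]; simp
    rw [hmid, Matrix.submatrix_diagonal D _ (Equiv.injective _)]
    have hDfun : D ∘ ⇑(Fin.revPerm (n := m))
        = fun i : Fin m => X ^ (2 * m + 1 - 2 * ((i : ℕ) + 1)).choose 2 := by
      funext i
      show X ^ (((i.rev : ℕ))*(2*(i.rev : ℕ)+1)) = X ^ (2 * m + 1 - 2 * ((i : ℕ) + 1)).choose 2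
      congr 1
      have hi := i.isLt
      rw [show (2 * m + 1 - 2 * ((i : ℕ) + 1)) = 2 * (m - (i:ℕ) - 1) + 1 from by omega]
      rw [show (i.rev : ℕ) = m - (i:ℕ) - 1 from by simp [Fin.val_rev]; omega]
      rw [choose_two_eq (2 * (m - (i:ℕ) - 1) + 1) ((m - (i:ℕ) - 1) * (2*(m - (i:ℕ) - 1)+1))
        (by
          set a := m - (i:ℕ) - 1
          rw [show 2*a+1-1 = 2*a from by omega]
          ring)]
    rw [hDfun]
end

section
/- Let m ≥ 1 and let M_{2m} be the (m+1)×(m+1) matrix over ℤ[q] with (i,j)-entry C̃_{2m+2−i−j}(q), for 1 ≤ i,j ≤ m+1. Then there exist an upper unitriangular matrix P and a lower unitriangular matrix Q in SL(m+1, ℤ[q]) such that P · M_{2m} · Q = diag(q^{C(2m,2)}, q^{C(2m−2,2)}, q^{C(2m−4,2)}, …, q, 1); that is, the i-th diagonal entry is q^{C(2m+2−2i, 2)} for 1 ≤ i ≤ m+1. In particular M_{2m} has Smith normal form diag(q^{C(2m,2)}, q^{C(2m−2,2)}, …, q, 1) over ℤ[q]. -/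
open scoped Matrix

namespace QCat

open Polynomial Finset
open scoped Classical

/-- Normalizing weight: `Sw a r = Σ_{i<r} (a-1-i)`. -/
def Sw (a r : ℕ) : ℕ := ∑ i ∈ Finset.range r, (a - 1 - i)

/-- Partitions inside the staircase `(a-1, a-2, …)` with at most `r` parts. -/
def Aset (a r : ℕ) : Set (ℕ → ℕ) :=
  {μ | Antitone μ ∧ (∀ t, μ t ≤ a - (t + 1)) ∧ ∀ t, r ≤ t → μ t = 0}

lemma Aset_finite (a r : ℕ) : (Aset a r).Finite := by
  apply Set.Finite.of_finite_image
    (f := fun μ (i : Fin r) => (⟨μ i % (a + 1), Nat.mod_lt _ (Nat.succ_pos a)⟩ : Fin (a + 1)))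
  · exact Set.toFinite _
  · intro μ hμ ν hν h
    funext t
    by_cases ht : t < r
    · have h1 : μ t ≤ a := le_trans (hμ.2.1 t) (Nat.sub_le _ _)
      have h2 : ν t ≤ a := le_trans (hν.2.1 t) (Nat.sub_le _ _)
      have := congrFun h ⟨t, ht⟩
      simpa [Fin.ext_iff, Nat.mod_eq_of_lt (Nat.lt_succ_of_le h1),
        Nat.mod_eq_of_lt (Nat.lt_succ_of_le h2)] using this
    · rw [hμ.2.2 t (le_of_not_gt ht), hν.2.2 t (le_of_not_gt ht)]

/-- The generating polynomial of `Aset a r`, weighted by complementary size. -/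
noncomputable def T (a r : ℕ) : Polynomial ℤ :=
  ∑ μ ∈ (Aset_finite a r).toFinset, Polynomial.X ^ (Sw a r - ∑ t ∈ Finset.range r, μ t)

lemma mem_T {a r : ℕ} {μ : ℕ → ℕ} :
    μ ∈ (Aset_finite a r).toFinset ↔
      Antitone μ ∧ (∀ t, μ t ≤ a - (t + 1)) ∧ ∀ t, r ≤ t → μ t = 0 := by
  rw [Set.Finite.mem_toFinset]; exact Iff.rfl

lemma wsum_le {a r : ℕ} {μ : ℕ → ℕ} (h : ∀ t, μ t ≤ a - (t + 1)) :
    (∑ t ∈ Finset.range r, μ t) ≤ Sw a r := by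
  apply Finset.sum_le_sum
  intro i _
  have := h i
  omega

lemma T_zero (a : ℕ) : T a 0 = 1 := by
  have h : (Aset_finite a 0).toFinset = {fun _ => 0} := by
    ext μ
    simp only [mem_T, Finset.mem_singleton]
    constructor
    · rintro ⟨-, -, h0⟩
      funext t; exact h0 t (Nat.zero_le _)
    · rintro rfl
      exact ⟨antitone_const, fun t => Nat.zero_le _, fun t _ => rfl⟩
  rw [T, h]
  simp [Sw]

lemma Sw_self (n : ℕ) : Sw n n = Nat.choose n 2 := by
  have h1 : Sw n n = ∑ i ∈ Finset.range n, i := by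
    rw [Sw]
    exact Finset.sum_range_reflect (fun i => i) n
  have h2 : (∑ i ∈ Finset.range n, i) * 2 = n * (n-1) := Finset.sum_range_id_mul_two n
  have h3 : Nat.choose n 2 = n * (n-1) / 2 := Nat.choose_two_right n
  rw [h1, h3]
  omega

lemma qCatalan_eq_T (n : ℕ) : qCatalan n = T n n := by
  have hset : {μ : ℕ → ℕ | Antitone μ ∧ ∀ k, μ k ≤ n - (k + 1)} = Aset n n := by
    ext μ
    simp only [Set.mem_setOf_eq, Aset]
    constructor
    · rintro ⟨h1, h2⟩
      refine ⟨h1, h2, fun t ht => ?_⟩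
      have := h2 t
      omega
    · rintro ⟨h1, h2, _⟩
      exact ⟨h1, h2⟩
  rw [qCatalan, hset, finsum_mem_eq_finite_toFinset_sum _ (Aset_finite n n), T]
  apply Finset.sum_congr rfl
  intro μ hμ
  rw [mem_T] at hμ
  have hsupp : Function.support μ ⊆ ↑(Finset.range n) := by
    intro t ht
    simp only [Function.mem_support] at ht
    simp only [Finset.coe_range, Set.mem_Iio]
    by_contra h
    exact ht (hμ.2.2 t (le_of_not_gt h))
  rw [finsum_eq_sum_of_support_subset _ hsupp, Sw_self]

/-- The Motzkin-path recursion polynomials. -/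
noncomputable def bb : ℕ → ℕ → Polynomial ℤ
  | 0, k => if k = 0 then 1 else 0
  | (n+1), k =>
      (if k = 0 then 0 else bb n (k-1))
      + ((if k = 0 then 0 else Polynomial.X ^ (2*k-1)) + Polynomial.X ^ (2*k)) * bb n k
      + Polynomial.X ^ (4*k+1) * bb n (k+1)

lemma bb_eq_zero : ∀ {n k : ℕ}, n < k → bb n k = 0 := by
  intro n
  induction n with
  | zero =>
    intro k hk
    have hk0 : k ≠ 0 := by omega
    show (if k = 0 then 1 else 0 : Polynomial ℤ) = 0
    simp [hk0]
  | succ n ih =>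
    intro k hk
    have h1 : bb n (k-1) = 0 := ih (by omega)
    have h2 : bb n k = 0 := ih (by omega)
    have h3 : bb n (k+1) = 0 := ih (by omega)
    simp [bb, h1, h2, h3]

/-- Auxiliary: pulling a monomial factor out of `T`. -/
lemma mulX_T (a' r' c : ℕ) :
    (∑ μ ∈ (Aset_finite a' r').toFinset,
      (Polynomial.X : Polynomial ℤ) ^ (c + (Sw a' r' - ∑ t ∈ Finset.range r', μ t)))
    = Polynomial.X ^ c * T a' r' := by
  rw [T, Finset.mul_sum]
  apply Finset.sum_congr rfl
  intro μ _
  rw [pow_add]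

/-- Four-way splitting of a sum according to the value of `g` and a predicate `p`. -/
lemma sum4 (s : Finset (ℕ → ℕ)) (f : (ℕ → ℕ) → Polynomial ℤ) (g : (ℕ → ℕ) → ℕ)
    (p : (ℕ → ℕ) → Prop) :
    ∑ x ∈ s, f x
      = (∑ x ∈ s.filter (fun μ => 2 ≤ g μ), f x)
        + (∑ x ∈ s.filter (fun μ => g μ = 1), f x)
        + (∑ x ∈ s.filter (fun μ => g μ = 0 ∧ p μ), f x)
        + (∑ x ∈ s.filter (fun μ => g μ = 0 ∧ ¬ p μ), f x) := by
  have h1 := Finset.sum_filter_add_sum_filter_not s (fun μ => 2 ≤ g μ) f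
  have h2 := Finset.sum_filter_add_sum_filter_not
    (s.filter (fun μ => ¬ 2 ≤ g μ)) (fun μ => g μ = 1) f
  have h3 := Finset.sum_filter_add_sum_filter_not
    (s.filter (fun μ => g μ = 0)) p f
  rw [Finset.filter_filter, Finset.filter_filter] at h2
  rw [Finset.filter_filter, Finset.filter_filter] at h3
  have e1 : s.filter (fun μ => ¬ 2 ≤ g μ ∧ g μ = 1) = s.filter (fun μ => g μ = 1) := by
    apply Finset.filter_congr
    intro x _
    constructor
    · rintro ⟨-, h⟩; exact h
    · intro h; exact ⟨by omega, h⟩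
  have e2 : s.filter (fun μ => ¬ 2 ≤ g μ ∧ ¬ g μ = 1) = s.filter (fun μ => g μ = 0) := by
    apply Finset.filter_congr
    intro x _
    constructor
    · rintro ⟨h1', h2'⟩; omega
    · intro h; constructor <;> omega
  rw [e1, e2] at h2
  rw [← h1, ← h2, ← h3]
  ring

lemma claimC1_zero (r : ℕ) (hr : 1 ≤ r) :
    (∑ μ ∈ (Aset_finite (r+2*0) r).toFinset.filter (fun μ => 2 ≤ μ (r-1)),
      (Polynomial.X : Polynomial ℤ) ^ (Sw (r+2*0) r - ∑ t ∈ Finset.range r, μ t)) = 0 := by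
  rw [Finset.filter_false_of_mem, Finset.sum_empty]
  intro μ hμ
  rw [mem_T] at hμ
  have := hμ.2.1 (r-1)
  omega

lemma claimC2_zero (r : ℕ) (hr : 1 ≤ r) :
    (∑ μ ∈ (Aset_finite (r+2*0) r).toFinset.filter (fun μ => μ (r-1) = 1),
      (Polynomial.X : Polynomial ℤ) ^ (Sw (r+2*0) r - ∑ t ∈ Finset.range r, μ t)) = 0 := by
  rw [Finset.filter_false_of_mem, Finset.sum_empty]
  intro μ hμ
  rw [mem_T] at hμ
  have := hμ.2.1 (r-1)
  omega

lemma claimC4_zero (k : ℕ) :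
    (∑ μ ∈ (Aset_finite (1+2*k) 1).toFinset.filter
        (fun μ => μ (1-1) = 0 ∧ ¬ ((1:ℕ) = 1 ∨ 1 ≤ μ (1-2))),
      (Polynomial.X : Polynomial ℤ) ^ (Sw (1+2*k) 1 - ∑ t ∈ Finset.range 1, μ t)) = 0 := by
  rw [Finset.filter_false_of_mem, Finset.sum_empty]
  intro μ _
  rintro ⟨-, h⟩
  exact h (Or.inl rfl)

lemma claimC1 (k r : ℕ) (hr : 1 ≤ r) (hk : 1 ≤ k) :
    (∑ μ ∈ (Aset_finite (r+2*k) r).toFinset.filter (fun μ => 2 ≤ μ (r-1)),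
      (Polynomial.X : Polynomial ℤ) ^ (Sw (r+2*k) r - ∑ t ∈ Finset.range r, μ t))
    = T (r+2*k-2) r := by
  have hSw : Sw (r+2*k) r = Sw (r+2*k-2) r + 2*r := by
    rw [Sw, Sw]
    have hcg : ∀ t ∈ Finset.range r, (r + 2*k - 1 - t) = (r + 2*k - 2 - 1 - t) + 2 := by
      intro t ht
      rw [Finset.mem_range] at ht
      omega
    rw [Finset.sum_congr rfl hcg, Finset.sum_add_distrib, Finset.sum_const,
      Finset.card_range, smul_eq_mul]
    ring
  rw [T]
  apply Finset.sum_nbij' (i := fun μ t => μ t - 2)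
    (j := fun ν t => if t < r then ν t + 2 else 0)
  · intro μ hμ
    rw [Finset.mem_filter, mem_T] at hμ
    obtain ⟨⟨hmono, hbd, hsupp⟩, hge⟩ := hμ
    rw [mem_T]
    refine ⟨?_, ?_, ?_⟩
    · intro x y hxy
      exact Nat.sub_le_sub_right (hmono hxy) 2
    · intro t
      have := hbd t
      omega
    · intro t ht
      rw [hsupp t ht]
  · intro ν hν
    rw [mem_T] at hν
    obtain ⟨hmono, hbd, hsupp⟩ := hν
    rw [Finset.mem_filter, mem_T]
    refine ⟨⟨?_, ?_, ?_⟩, ?_⟩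
    · intro x y hxy
      by_cases hy : y < r
      · have hx : x < r := by omega
        simp only [if_pos hx, if_pos hy]
        exact Nat.add_le_add_right (hmono hxy) 2
      · simp only [if_neg hy]
        exact Nat.zero_le _
    · intro t
      by_cases ht : t < r
      · simp only [if_pos ht]
        have := hbd t
        omega
      · simp only [if_neg ht]
        exact Nat.zero_le _
    · intro t ht
      rw [if_neg (by omega)]
    · simp only [if_pos (show r - 1 < r by omega)]
      omega
  · intro μ hμ
    rw [Finset.mem_filter, mem_T] at hμ
    obtain ⟨⟨hmono, hbd, hsupp⟩, hge⟩ := hμ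
    funext t
    by_cases ht : t < r
    · simp only [if_pos ht]
      have h2 : 2 ≤ μ t := le_trans hge (hmono (by omega : t ≤ r - 1))
      omega
    · simp only [if_neg ht]
      rw [hsupp t (by omega)]
  · intro ν hν
    rw [mem_T] at hν
    funext t
    by_cases ht : t < r
    · simp only [if_pos ht]
      omega
    · simp only [if_neg ht]
      rw [hν.2.2 t (by omega)]
  · intro μ hμ
    rw [Finset.mem_filter, mem_T] at hμ
    obtain ⟨⟨hmono, hbd, hsupp⟩, hge⟩ := hμ
    simp only []
    congr 1
    have hw : ∑ t ∈ Finset.range r, μ t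
        = (∑ t ∈ Finset.range r, (μ t - 2)) + 2*r := by
      have hcg : ∀ t ∈ Finset.range r, μ t = (μ t - 2) + 2 := by
        intro t ht
        rw [Finset.mem_range] at ht
        have h2 : 2 ≤ μ t := le_trans hge (hmono (by omega : t ≤ r - 1))
        omega
      rw [Finset.sum_congr rfl hcg, Finset.sum_add_distrib, Finset.sum_const,
        Finset.card_range, smul_eq_mul]
      ring
    have hle : (∑ t ∈ Finset.range r, (μ t - 2)) ≤ Sw (r+2*k-2) r := by
      apply wsum_le
      intro t
      have := hbd t
      omega
    omega

lemma claimC2 (k r : ℕ) (hr : 1 ≤ r) (hk : 1 ≤ k) :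
    (∑ μ ∈ (Aset_finite (r+2*k) r).toFinset.filter (fun μ => μ (r-1) = 1),
      (Polynomial.X : Polynomial ℤ) ^ (Sw (r+2*k) r - ∑ t ∈ Finset.range r, μ t))
    = Polynomial.X ^ (2*k-1) * T (r+2*k-1) (r-1) := by
  obtain ⟨s, rfl⟩ : ∃ s, r = s + 1 := ⟨r - 1, by omega⟩
  simp only [Nat.add_sub_cancel]
  have ha1 : s + 1 + 2*k - 1 = s + 2*k := by omega
  rw [ha1]
  have hSw : Sw (s+1+2*k) (s+1) = Sw (s+2*k) s + s + 2*k := by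
    rw [Sw, Sw, Finset.sum_range_succ]
    have hcg : ∀ t ∈ Finset.range s, (s+1+2*k - 1 - t) = (s+2*k - 1 - t) + 1 := by
      intro t ht
      rw [Finset.mem_range] at ht
      omega
    rw [Finset.sum_congr rfl hcg, Finset.sum_add_distrib, Finset.sum_const,
      Finset.card_range, smul_eq_mul]
    omega
  rw [← mulX_T]
  apply Finset.sum_nbij' (i := fun μ t => μ t - 1)
    (j := fun ν t => if t < s then ν t + 1 else if t = s then 1 else 0)
  · intro μ hμ
    rw [Finset.mem_filter, mem_T] at hμ
    obtain ⟨⟨hmono, hbd, hsupp⟩, heq⟩ := hμ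
    rw [mem_T]
    refine ⟨?_, ?_, ?_⟩
    · intro x y hxy
      exact Nat.sub_le_sub_right (hmono hxy) 1
    · intro t
      have := hbd t
      omega
    · intro t ht
      have h1 : μ t ≤ 1 := by
        calc μ t ≤ μ s := hmono ht
        _ = 1 := heq
      omega
  · intro ν hν
    rw [mem_T] at hν
    obtain ⟨hmono, hbd, hsupp⟩ := hν
    rw [Finset.mem_filter, mem_T]
    refine ⟨⟨?_, ?_, ?_⟩, ?_⟩
    · intro x y hxy
      by_cases hy : y < s
      · have hx : x < s := by omega
        simp only [if_pos hx, if_pos hy]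
        exact Nat.add_le_add_right (hmono hxy) 1
      · simp only [if_neg hy]
        by_cases hy2 : y = s
        · simp only [if_pos hy2]
          by_cases hx : x < s
          · simp only [if_pos hx]
            omega
          · have hx2 : x = s := by omega
            simp only [if_neg hx, if_pos hx2]
            exact le_rfl
        · simp only [if_neg hy2]
          exact Nat.zero_le _
    · intro t
      by_cases ht : t < s
      · simp only [if_pos ht]
        have := hbd t
        omega
      · simp only [if_neg ht]
        by_cases ht2 : t = s
        · simp only [if_pos ht2]
          omega
        · simp only [if_neg ht2]
          exact Nat.zero_le _
    · intro t ht
      rw [if_neg (by omega), if_neg (by omega)]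
    · simp [if_neg (show ¬ s < s by omega)]
  · intro μ hμ
    rw [Finset.mem_filter, mem_T] at hμ
    obtain ⟨⟨hmono, hbd, hsupp⟩, heq⟩ := hμ
    funext t
    by_cases ht : t < s
    · simp only [if_pos ht]
      have h1 : 1 ≤ μ t := by
        calc (1:ℕ) = μ s := heq.symm
        _ ≤ μ t := hmono (by omega)
      omega
    · simp only [if_neg ht]
      by_cases ht2 : t = s
      · simp only [if_pos ht2]
        rw [ht2, heq]
      · simp only [if_neg ht2]
        rw [hsupp t (by omega)]
  · intro ν hν
    rw [mem_T] at hν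
    funext t
    by_cases ht : t < s
    · simp only [if_pos ht]
      omega
    · simp only [if_neg ht]
      by_cases ht2 : t = s
      · simp only [if_pos ht2]
        rw [ht2, hν.2.2 s le_rfl]
      · simp only [if_neg ht2]
        rw [hν.2.2 t (by omega)]
  · intro μ hμ
    rw [Finset.mem_filter, mem_T] at hμ
    obtain ⟨⟨hmono, hbd, hsupp⟩, heq⟩ := hμ
    simp only []
    congr 1
    have hw : ∑ t ∈ Finset.range (s+1), μ t
        = (∑ t ∈ Finset.range s, (μ t - 1)) + s + 1 := by
      rw [Finset.sum_range_succ, heq]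
      have hcg : ∀ t ∈ Finset.range s, μ t = (μ t - 1) + 1 := by
        intro t ht
        rw [Finset.mem_range] at ht
        have h1 : 1 ≤ μ t := by
          calc (1:ℕ) = μ s := heq.symm
          _ ≤ μ t := hmono (by omega)
        omega
      rw [Finset.sum_congr rfl hcg, Finset.sum_add_distrib, Finset.sum_const,
        Finset.card_range, smul_eq_mul]
      ring
    have hle : (∑ t ∈ Finset.range s, (μ t - 1)) ≤ Sw (s+2*k) s := by
      apply wsum_le
      intro t
      have := hbd t
      omega
    omega

lemma claimC3 (k r : ℕ) (hr : 1 ≤ r) :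
    (∑ μ ∈ (Aset_finite (r+2*k) r).toFinset.filter
        (fun μ => μ (r-1) = 0 ∧ (r = 1 ∨ 1 ≤ μ (r-2))),
      (Polynomial.X : Polynomial ℤ) ^ (Sw (r+2*k) r - ∑ t ∈ Finset.range r, μ t))
    = Polynomial.X ^ (2*k) * T (r+2*k-1) (r-1) := by
  obtain ⟨s, rfl⟩ : ∃ s, r = s + 1 := ⟨r - 1, by omega⟩
  simp only [Nat.add_sub_cancel]
  have ha1 : s + 1 + 2*k - 1 = s + 2*k := by omega
  rw [ha1]
  have hSw : Sw (s+1+2*k) (s+1) = Sw (s+2*k) s + s + 2*k := by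
    rw [Sw, Sw, Finset.sum_range_succ]
    have hcg : ∀ t ∈ Finset.range s, (s+1+2*k - 1 - t) = (s+2*k - 1 - t) + 1 := by
      intro t ht
      rw [Finset.mem_range] at ht
      omega
    rw [Finset.sum_congr rfl hcg, Finset.sum_add_distrib, Finset.sum_const,
      Finset.card_range, smul_eq_mul]
    omega
  rw [← mulX_T]
  apply Finset.sum_nbij' (i := fun μ t => μ t - 1)
    (j := fun ν t => if t < s then ν t + 1 else 0)
  · intro μ hμ
    rw [Finset.mem_filter, mem_T] at hμ
    obtain ⟨⟨hmono, hbd, hsupp⟩, heq, -⟩ := hμ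
    rw [mem_T]
    refine ⟨?_, ?_, ?_⟩
    · intro x y hxy
      exact Nat.sub_le_sub_right (hmono hxy) 1
    · intro t
      have := hbd t
      omega
    · intro t ht
      have h1 : μ t = 0 := by
        have := hmono ht
        omega
      rw [h1]
  · intro ν hν
    rw [mem_T] at hν
    obtain ⟨hmono, hbd, hsupp⟩ := hν
    rw [Finset.mem_filter, mem_T]
    refine ⟨⟨?_, ?_, ?_⟩, ?_, ?_⟩
    · intro x y hxy
      by_cases hy : y < s
      · have hx : x < s := by omega
        simp only [if_pos hx, if_pos hy]
        exact Nat.add_le_add_right (hmono hxy) 1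
      · simp only [if_neg hy]
        exact Nat.zero_le _
    · intro t
      by_cases ht : t < s
      · simp only [if_pos ht]
        have := hbd t
        omega
      · simp only [if_neg ht]
        exact Nat.zero_le _
    · intro t ht
      rw [if_neg (by omega)]
    · simp only [if_neg (show ¬ s < s by omega)]
    · by_cases hs : s = 0
      · left
        omega
      · right
        have h1 : s + 1 - 2 < s := by omega
        simp only [if_pos h1]
        omega
  · intro μ hμ
    rw [Finset.mem_filter, mem_T] at hμ
    obtain ⟨⟨hmono, hbd, hsupp⟩, heq, hor⟩ := hμ
    funext t
    by_cases ht : t < s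
    · simp only [if_pos ht]
      have h1 : 1 ≤ μ t := by
        rcases hor with h | h
        · omega
        · calc (1:ℕ) ≤ μ (s+1-2) := h
          _ ≤ μ t := hmono (by omega)
      omega
    · simp only [if_neg ht]
      have h1 : μ t = 0 := by
        have := hmono (show s ≤ t by omega)
        omega
      rw [h1]
  · intro ν hν
    rw [mem_T] at hν
    funext t
    by_cases ht : t < s
    · simp only [if_pos ht]
      omega
    · simp only [if_neg ht]
      rw [hν.2.2 t (by omega)]
  · intro μ hμ
    rw [Finset.mem_filter, mem_T] at hμ
    obtain ⟨⟨hmono, hbd, hsupp⟩, heq, hor⟩ := hμ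
    simp only []
    congr 1
    have hw : ∑ t ∈ Finset.range (s+1), μ t
        = (∑ t ∈ Finset.range s, (μ t - 1)) + s := by
      rw [Finset.sum_range_succ, heq, add_zero]
      have hcg : ∀ t ∈ Finset.range s, μ t = (μ t - 1) + 1 := by
        intro t ht
        rw [Finset.mem_range] at ht
        have h1 : 1 ≤ μ t := by
          rcases hor with h | h
          · omega
          · calc (1:ℕ) ≤ μ (s+1-2) := h
            _ ≤ μ t := hmono (by omega)
        omega
      rw [Finset.sum_congr rfl hcg, Finset.sum_add_distrib, Finset.sum_const,
        Finset.card_range, smul_eq_mul]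
      ring
    have hle : (∑ t ∈ Finset.range s, (μ t - 1)) ≤ Sw (s+2*k) s := by
      apply wsum_le
      intro t
      have := hbd t
      omega
    omega

lemma claimC4 (k r : ℕ) (hr : 2 ≤ r) :
    (∑ μ ∈ (Aset_finite (r+2*k) r).toFinset.filter
        (fun μ => μ (r-1) = 0 ∧ ¬ (r = 1 ∨ 1 ≤ μ (r-2))),
      (Polynomial.X : Polynomial ℤ) ^ (Sw (r+2*k) r - ∑ t ∈ Finset.range r, μ t))
    = Polynomial.X ^ (4*k+1) * T (r+2*k) (r-2) := by
  obtain ⟨s, rfl⟩ : ∃ s, r = s + 2 := ⟨r - 2, by omega⟩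
  have ha2 : s + 2 - 2 = s := by omega
  have ha1 : s + 2 - 1 = s + 1 := by omega
  rw [ha2, ha1]
  have hSw : Sw (s+2+2*k) (s+2) = Sw (s+2+2*k) s + (4*k+1) := by
    rw [Sw, Sw, Finset.sum_range_succ, Finset.sum_range_succ]
    omega
  rw [← mulX_T]
  apply Finset.sum_nbij' (i := fun μ => μ) (j := fun ν => ν)
  · intro μ hμ
    rw [Finset.mem_filter, mem_T] at hμ
    obtain ⟨⟨hmono, hbd, hsupp⟩, heq, hnor⟩ := hμ
    push_neg at hnor
    rw [mem_T]
    refine ⟨hmono, hbd, ?_⟩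
    intro t ht
    have h2 : μ s = 0 := by
      have := hnor.2
      omega
    have := hmono (show s ≤ t from ht)
    omega
  · intro ν hν
    rw [mem_T] at hν
    obtain ⟨hmono, hbd, hsupp⟩ := hν
    rw [Finset.mem_filter, mem_T]
    refine ⟨⟨hmono, hbd, ?_⟩, ?_, ?_⟩
    · intro t ht
      exact hsupp t (by omega)
    · exact hsupp (s+1) (by omega)
    · push_neg
      constructor
      · omega
      · rw [hsupp s le_rfl]
        omega
  · intro μ _
    rfl
  · intro ν _
    rfl
  · intro μ hμ
    rw [Finset.mem_filter, mem_T] at hμ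
    obtain ⟨⟨hmono, hbd, hsupp⟩, heq, hnor⟩ := hμ
    push_neg at hnor
    congr 1
    have h2 : μ s = 0 := by
      have := hnor.2
      omega
    have hw : ∑ t ∈ Finset.range (s+2), μ t = ∑ t ∈ Finset.range s, μ t := by
      rw [Finset.sum_range_succ, Finset.sum_range_succ, heq, h2]
      simp
    have hle : (∑ t ∈ Finset.range s, μ t) ≤ Sw (s+2+2*k) s := by
      apply wsum_le
      intro t
      exact hbd t
    omega

/-- The key recursion for `T`, proved by a four-way bijective decomposition. -/
lemma T_rec (k r : ℕ) (hr : 1 ≤ r) :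
    T (r + 2*k) r
      = (if k = 0 then 0 else T (r + 2*k - 2) r)
      + ((if k = 0 then 0 else Polynomial.X ^ (2*k-1)) + Polynomial.X ^ (2*k))
          * T (r + 2*k - 1) (r - 1)
      + (if r = 1 then 0 else Polynomial.X ^ (4*k+1) * T (r + 2*k) (r - 2)) := by
  have h1 := Finset.sum_filter_add_sum_filter_not ((Aset_finite (r+2*k) r).toFinset)
    (fun μ => 2 ≤ μ (r-1))
    (fun μ => (Polynomial.X : Polynomial ℤ) ^ (Sw (r+2*k) r - ∑ t ∈ Finset.range r, μ t))
  have h2 := Finset.sum_filter_add_sum_filter_not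
    (((Aset_finite (r+2*k) r).toFinset).filter (fun μ => ¬ 2 ≤ μ (r-1)))
    (fun μ => μ (r-1) = 1)
    (fun μ => (Polynomial.X : Polynomial ℤ) ^ (Sw (r+2*k) r - ∑ t ∈ Finset.range r, μ t))
  have h3 := Finset.sum_filter_add_sum_filter_not
    (((Aset_finite (r+2*k) r).toFinset).filter (fun μ => μ (r-1) = 0))
    (fun μ => r = 1 ∨ 1 ≤ μ (r-2))
    (fun μ => (Polynomial.X : Polynomial ℤ) ^ (Sw (r+2*k) r - ∑ t ∈ Finset.range r, μ t))
  rw [Finset.filter_filter, Finset.filter_filter] at h2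
  rw [Finset.filter_filter, Finset.filter_filter] at h3
  have e1 : ((Aset_finite (r+2*k) r).toFinset).filter
        (fun μ => ¬ 2 ≤ μ (r-1) ∧ μ (r-1) = 1)
      = ((Aset_finite (r+2*k) r).toFinset).filter (fun μ => μ (r-1) = 1) := by
    apply Finset.filter_congr
    intro x _
    constructor
    · rintro ⟨-, h⟩; exact h
    · intro h; exact ⟨by omega, h⟩
  have e2 : ((Aset_finite (r+2*k) r).toFinset).filter
        (fun μ => ¬ 2 ≤ μ (r-1) ∧ ¬ μ (r-1) = 1)
      = ((Aset_finite (r+2*k) r).toFinset).filter (fun μ => μ (r-1) = 0) := by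
    apply Finset.filter_congr
    intro x _
    constructor
    · rintro ⟨ha, hb⟩; omega
    · intro h; constructor <;> omega
  rw [e1, e2] at h2
  rw [T, ← h1, ← h2, ← h3]
  rw [claimC3 k r hr]
  by_cases hk : k = 0
  · subst hk
    rw [claimC1_zero r hr, claimC2_zero r hr]
    by_cases hr1 : r = 1
    · subst hr1
      rw [claimC4_zero]
      simp
      try ring
    · rw [claimC4 0 r (by omega)]
      simp [hr1]
      try ring
  · rw [claimC1 k r hr (by omega), claimC2 k r hr (by omega)]
    by_cases hr1 : r = 1
    · subst hr1
      rw [claimC4_zero]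
      simp [hk]
      try ring
    · rw [claimC4 k r (by omega)]
      simp [hk, hr1]
      try ring

lemma bb_eq_T : ∀ n k : ℕ, k ≤ n → bb n k = T (n + k) (n - k) := by
  intro n
  induction n with
  | zero =>
    intro k hk
    have hk0 : k = 0 := by omega
    subst hk0
    have : bb 0 0 = 1 := rfl
    rw [this, Nat.sub_self, T_zero]
  | succ n ih =>
    intro k hk
    have hbb : bb (n+1) k = (if k = 0 then 0 else bb n (k-1))
        + ((if k = 0 then 0 else Polynomial.X ^ (2*k-1)) + Polynomial.X ^ (2*k)) * bb n k
        + Polynomial.X ^ (4*k+1) * bb n (k+1) := rfl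
    by_cases hkn : k = n + 1
    · subst hkn
      rw [hbb, bb_eq_zero (show n < n + 1 by omega),
        bb_eq_zero (show n < n + 1 + 1 by omega)]
      simp only [Nat.succ_ne_zero, if_false, mul_zero, add_zero, zero_add,
        Nat.add_sub_cancel]
      rw [Nat.sub_self, T_zero]
      have h2 : bb n n = 1 := by
        rw [ih n le_rfl, Nat.sub_self, T_zero]
      rw [h2]
    · have hk' : k ≤ n := by omega
      have hr : 1 ≤ n + 1 - k := by omega
      have hrec := T_rec k (n + 1 - k) hr
      have ea : (n + 1 - k) + 2*k = n + 1 + k := by omega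
      rw [ea] at hrec
      rw [show n + 1 - k = (n+1) - k from rfl] at hrec
      rw [hbb, hrec]
      congr 1
      · congr 1
        · -- first terms
          by_cases hk0 : k = 0
          · simp [hk0]
          · simp only [hk0, if_false]
            rw [ih (k-1) (by omega)]
            congr 1
            · omega
            · omega
        · -- middle terms
          rw [ih k hk']
          congr 2
          · omega
          · omega
      · -- third terms
        by_cases hkn2 : k = n
        · have h0 : bb n (k+1) = 0 := bb_eq_zero (by omega)
          rw [h0, mul_zero, if_pos (show n + 1 - k = 1 by omega)]
        · rw [if_neg (by omega : ¬ n + 1 - k = 1), ih (k+1) (by omega)]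
          congr 2
          · omega
          · omega

lemma bb_diag (n : ℕ) : bb n n = 1 := by
  rw [bb_eq_T n n le_rfl, Nat.sub_self, T_zero]

lemma qCatalan_eq_bb (n : ℕ) : qCatalan n = bb n 0 := by
  rw [qCatalan_eq_T, bb_eq_T n 0 (Nat.zero_le n)]
  simp

/-- Diagonal entries `X^(k(2k-1)) = X^(C(2k,2))`. -/
noncomputable def dd (k : ℕ) : Polynomial ℤ := Polynomial.X ^ (k * (2*k - 1))

lemma dd_succ (k : ℕ) : dd (k+1) = dd k * Polynomial.X ^ (4*k+1) := by
  rw [dd, dd, ← pow_add]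
  congr 1
  cases k with
  | zero => rfl
  | succ t =>
    have e1 : 2*(t+1+1) - 1 = 2*t+3 := by omega
    have e2 : 2*(t+1) - 1 = 2*t+1 := by omega
    rw [e1, e2]; ring

noncomputable def SS (N i j : ℕ) : Polynomial ℤ :=
  ∑ k ∈ Finset.range N, bb i k * bb j k * dd k

lemma SS_shift (N i j : ℕ) (h : i + j + 2 ≤ N) : SS N (i+1) j = SS N i (j+1) := by
  obtain ⟨N', rfl⟩ : ∃ N', N = N' + 1 := ⟨N - 1, by omega⟩
  have expand : ∀ p q : ℕ, p + q + 1 ≤ N' → SS (N'+1) (p+1) q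
      = (∑ k ∈ Finset.range N', bb p k * bb q (k+1) * dd (k+1))
        + ((∑ k ∈ Finset.range (N'+1),
            ((if k = 0 then 0 else Polynomial.X ^ (2*k-1)) + Polynomial.X ^ (2*k))
              * bb p k * bb q k * dd k)
        + (∑ k ∈ Finset.range N', bb p (k+1) * bb q k * dd (k+1))) := by
    intro p q hpq
    rw [SS]
    have hterm : ∀ k, bb (p+1) k * bb q k * dd k
        = (if k = 0 then 0 else bb p (k-1)) * bb q k * dd k
          + (((if k = 0 then 0 else Polynomial.X ^ (2*k-1)) + Polynomial.X ^ (2*k))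
              * bb p k * bb q k * dd k
          + (Polynomial.X ^ (4*k+1) * bb p (k+1)) * bb q k * dd k) := by
      intro k
      show (((if k = 0 then 0 else bb p (k-1))
        + ((if k = 0 then 0 else Polynomial.X ^ (2*k-1)) + Polynomial.X ^ (2*k)) * bb p k
        + Polynomial.X ^ (4*k+1) * bb p (k+1)) * bb q k * dd k) = _
      ring
    rw [Finset.sum_congr rfl (fun k _ => hterm k), Finset.sum_add_distrib,
      Finset.sum_add_distrib]
    congr 1
    · -- shift down
      rw [Finset.sum_range_succ']
      simp only [Nat.succ_ne_zero, if_false, Nat.add_sub_cancel, ite_true,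
        eq_self_iff_true, if_true, zero_mul, add_zero]
    · congr 1
      -- third sum
      have hterm2 : ∀ k, (Polynomial.X ^ (4*k+1) * bb p (k+1)) * bb q k * dd k
          = bb p (k+1) * bb q k * dd (k+1) := by
        intro k
        rw [dd_succ]
        ring
      rw [Finset.sum_congr rfl (fun k _ => hterm2 k), Finset.sum_range_succ,
        bb_eq_zero (show p < N' + 1 by omega), zero_mul, zero_mul, add_zero]
  have symm1 : SS (N'+1) i (j+1) = SS (N'+1) (j+1) i :=
    Finset.sum_congr rfl fun k _ => by ring
  rw [expand i j (by omega), symm1, expand j i (by omega)]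
  have e1 : (∑ k ∈ Finset.range N', bb j k * bb i (k+1) * dd (k+1))
      = ∑ k ∈ Finset.range N', bb i (k+1) * bb j k * dd (k+1) :=
    Finset.sum_congr rfl fun k _ => by ring
  have e2 : (∑ k ∈ Finset.range (N'+1),
        ((if k = 0 then 0 else Polynomial.X ^ (2*k-1)) + Polynomial.X ^ (2*k))
          * bb j k * bb i k * dd k)
      = ∑ k ∈ Finset.range (N'+1),
        ((if k = 0 then 0 else Polynomial.X ^ (2*k-1)) + Polynomial.X ^ (2*k))
          * bb i k * bb j k * dd k :=
    Finset.sum_congr rfl fun k _ => by ring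
  have e3 : (∑ k ∈ Finset.range N', bb j (k+1) * bb i k * dd (k+1))
      = ∑ k ∈ Finset.range N', bb i k * bb j (k+1) * dd (k+1) :=
    Finset.sum_congr rfl fun k _ => by ring
  rw [e1, e2, e3]
  ring

lemma SS_eq (N i j : ℕ) (h : i + j + 2 ≤ N) : SS N i j = bb (i+j) 0 := by
  induction j generalizing i with
  | zero =>
    rw [SS, Finset.sum_eq_single 0]
    · have hb : bb 0 0 = 1 := rfl
      have hd : dd 0 = 1 := by simp [dd]
      rw [hb, hd]
      simp
    · intro k _ hk
      rw [bb_eq_zero (show 0 < k by omega), mul_zero, zero_mul]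
    · intro h0
      simp only [Finset.mem_range] at h0
      omega
  | succ j ihj =>
    rw [← SS_shift N i j (by omega), ihj (i+1) (by omega)]
    congr 1
    omega

lemma SS_pad (N N' i j : ℕ) (hN : i < N) (hNN' : N ≤ N') : SS N i j = SS N' i j := by
  rw [SS, SS]
  apply Finset.sum_subset (Finset.range_subset_range.mpr hNN')
  intro k _ hk
  rw [Finset.mem_range, not_lt] at hk
  rw [bb_eq_zero (by omega), zero_mul, zero_mul]

section MatrixPart

variable {N : ℕ}

lemma strict_pow {A : Matrix (Fin N) (Fin N) (Polynomial ℤ)}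
    (hA : ∀ i j : Fin N, ¬ ((i:ℕ) < (j:ℕ)) → A i j = 0) :
    ∀ s, 1 ≤ s → ∀ i j : Fin N, (j:ℕ) < (i:ℕ) + s → (A ^ s) i j = 0 := by
  intro s
  induction s with
  | zero => omega
  | succ s ih =>
    intro _ i j hj
    rw [pow_succ, Matrix.mul_apply]
    apply Finset.sum_eq_zero
    intro c _
    by_cases hs : s = 0
    · subst hs
      by_cases hic : i = c
      · subst hic
        rw [hA i j (by omega), mul_zero]
      · rw [pow_zero, Matrix.one_apply_ne hic, zero_mul]
    · by_cases hc : (c:ℕ) < (i:ℕ) + s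
      · rw [ih (by omega) i c hc, zero_mul]
      · rw [hA c j (by omega), mul_zero]

/-- Inverse of an upper unitriangular matrix, by the nilpotent geometric series. -/
lemma unitriangular_inverse (U : Matrix (Fin N) (Fin N) (Polynomial ℤ))
    (hU0 : ∀ i j : Fin N, (j:ℕ) < (i:ℕ) → U i j = 0) (hU1 : ∀ i, U i i = 1) :
    ∃ P : Matrix (Fin N) (Fin N) (Polynomial ℤ),
      (∀ i, P i i = 1) ∧ (∀ i j : Fin N, (j:ℕ) < (i:ℕ) → P i j = 0) ∧
      P * U = 1 ∧ U * P = 1 := by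
  set A : Matrix (Fin N) (Fin N) (Polynomial ℤ) := 1 - U with hA
  have hAs : ∀ i j : Fin N, ¬ ((i:ℕ) < (j:ℕ)) → A i j = 0 := by
    intro i j hij
    by_cases h : i = j
    · subst h; simp [hA, hU1]
    · have : (j:ℕ) < (i:ℕ) := by
        rcases lt_trichotomy (i:ℕ) (j:ℕ) with h1 | h1 | h1
        · exact absurd h1 hij
        · exact absurd (Fin.ext h1) h
        · exact h1
      simp [hA, hU0 i j this, Matrix.one_apply_ne h]
  have hAN : A ^ N = 0 := by
    ext i j
    have hi := i.isLt
    have hj := j.isLt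
    rw [strict_pow hAs N (by omega) i j (by omega)]
    simp
  refine ⟨∑ s ∈ Finset.range N, A ^ s, ?_, ?_, ?_, ?_⟩
  · intro i
    rw [Matrix.sum_apply]
    rw [Finset.sum_eq_single 0]
    · simp
    · intro s _ hs
      exact strict_pow hAs s (by omega) i i (by omega)
    · intro h
      have := i.isLt
      simp at h
      omega
  · intro i j hij
    rw [Matrix.sum_apply]
    apply Finset.sum_eq_zero
    intro s _
    by_cases hs : s = 0
    · subst hs
      rw [pow_zero]
      exact Matrix.one_apply_ne (fun h => by subst h; omega)
    · exact strict_pow hAs s (by omega) i j (by omega)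
  · have h := geom_sum_mul A N
    rw [hAN] at h
    have hUA : U = 1 - A := by rw [hA, sub_sub_cancel]
    rw [hUA]
    calc (∑ s ∈ Finset.range N, A ^ s) * (1 - A)
        = -((∑ s ∈ Finset.range N, A ^ s) * (A - 1)) := by noncomm_ring
      _ = -(0 - 1) := by rw [h]
      _ = 1 := by simp
  · have h := mul_geom_sum A N
    rw [hAN] at h
    have hUA : U = 1 - A := by rw [hA, sub_sub_cancel]
    rw [hUA]
    calc (1 - A) * (∑ s ∈ Finset.range N, A ^ s)
        = -((A - 1) * (∑ s ∈ Finset.range N, A ^ s)) := by noncomm_ring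
      _ = -(0 - 1) := by rw [h]
      _ = 1 := by simp

end MatrixPart

lemma choose_two_even (s : ℕ) : Nat.choose (2*s) 2 = s * (2*s - 1) := by
  rw [Nat.choose_two_right]
  have h : 2*s * (2*s - 1) = 2 * (s * (2*s - 1)) := by
    rw [mul_assoc]
  rw [h, Nat.mul_div_cancel_left _ (by norm_num)]

end QCat

/-- **Theorem (SNF of the even q-Catalan matrix).**
For `m ≥ 1`, the `(m+1) × (m+1)` matrix `M_{2m} = (C̃_{2m+2-i-j}(q))_{1 ≤ i,j ≤ m+1}` has
Smith normal form `diag(q^{C(2m,2)}, q^{C(2m-2,2)}, …, q, 1)` over `ℤ[q]`, realized by an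
upper unitriangular `P` and a lower unitriangular `Q` in `SL(m+1, ℤ[q])`
(the `i`-th diagonal entry, `1 ≤ i ≤ m+1`, is `q^{C(2m+2-2i,2)}`). -/
theorem snf_qCatalan_even (m : ℕ) (hm : 1 ≤ m) :
    ∃ P Q : Matrix (Fin (m + 1)) (Fin (m + 1)) (Polynomial ℤ),
      (∀ i, P i i = 1) ∧ (∀ i j : Fin (m + 1), j < i → P i j = 0) ∧
      (∀ i, Q i i = 1) ∧ (∀ i j : Fin (m + 1), i < j → Q i j = 0) ∧
      P * Matrix.of (fun i j : Fin (m + 1) =>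
            qCatalan (2 * m + 2 - ((i : ℕ) + 1) - ((j : ℕ) + 1))) * Q
        = Matrix.diagonal (fun i : Fin (m + 1) =>
            Polynomial.X ^ Nat.choose (2 * m + 2 - 2 * ((i : ℕ) + 1)) 2) := by
  classical
  open QCat in
  -- the unitriangular factor
  set U : Matrix (Fin (m+1)) (Fin (m+1)) (Polynomial ℤ) :=
    Matrix.of (fun i k : Fin (m+1) => bb (m - (i:ℕ)) (m - (k:ℕ))) with hU
  have hU0 : ∀ i k : Fin (m+1), (k:ℕ) < (i:ℕ) → U i k = 0 := by
    intro i k h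
    have hik : m - (i:ℕ) < m - (k:ℕ) := by
      have := i.isLt; have := k.isLt; omega
    exact bb_eq_zero hik
  have hU1 : ∀ i : Fin (m+1), U i i = 1 := by
    intro i; exact bb_diag _
  -- the diagonal factor
  set D : Matrix (Fin (m+1)) (Fin (m+1)) (Polynomial ℤ) :=
    Matrix.diagonal (fun k : Fin (m+1) => dd (m - (k:ℕ))) with hD
  -- the matrix factorization
  have hM : Matrix.of (fun i j : Fin (m + 1) =>
      qCatalan (2 * m + 2 - ((i : ℕ) + 1) - ((j : ℕ) + 1))) = U * D * Uᵀ := by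
    ext i j
    have hi := i.isLt
    have hj := j.isLt
    have hUDk : ∀ k : Fin (m+1), (U * D) i k
        = bb (m - (i:ℕ)) (m - (k:ℕ)) * dd (m - (k:ℕ)) := by
      intro k
      rw [hD, Matrix.mul_diagonal]
      rfl
    have hRHS : (U * D * Uᵀ) i j
        = ∑ k : Fin (m+1),
            bb (m - (i:ℕ)) (m - (k:ℕ)) * dd (m - (k:ℕ)) * bb (m - (j:ℕ)) (m - (k:ℕ)) := by
      rw [Matrix.mul_apply]
      apply Finset.sum_congr rfl
      intro k _
      rw [hUDk k, Matrix.transpose_apply]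
      rfl
    have h2 : (∑ k : Fin (m+1),
          bb (m - (i:ℕ)) (m - (k:ℕ)) * dd (m - (k:ℕ)) * bb (m - (j:ℕ)) (m - (k:ℕ)))
        = ∑ k ∈ Finset.range (m+1),
            bb (m - (i:ℕ)) (m - k) * dd (m - k) * bb (m - (j:ℕ)) (m - k) :=
      Fin.sum_univ_eq_sum_range
        (fun k => bb (m - (i:ℕ)) (m - k) * dd (m - k) * bb (m - (j:ℕ)) (m - k)) (m+1)
    have h3 : (∑ k ∈ Finset.range (m+1),
          bb (m - (i:ℕ)) (m - k) * dd (m - k) * bb (m - (j:ℕ)) (m - k))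
        = ∑ k ∈ Finset.range (m+1),
            bb (m - (i:ℕ)) k * dd k * bb (m - (j:ℕ)) k := by
      have hrefl := Finset.sum_range_reflect
        (fun t => bb (m - (i:ℕ)) t * dd t * bb (m - (j:ℕ)) t) (m+1)
      simpa using hrefl
    have h4 : (∑ k ∈ Finset.range (m+1),
          bb (m - (i:ℕ)) k * dd k * bb (m - (j:ℕ)) k)
        = QCat.SS (m+1) (m - (i:ℕ)) (m - (j:ℕ)) := by
      rw [QCat.SS]
      apply Finset.sum_congr rfl
      intro k _
      ring
    have h5 : QCat.SS (m+1) (m - (i:ℕ)) (m - (j:ℕ))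
        = QCat.SS (2*m+2) (m - (i:ℕ)) (m - (j:ℕ)) :=
      QCat.SS_pad _ _ _ _ (by omega) (by omega)
    have h6 : QCat.SS (2*m+2) (m - (i:ℕ)) (m - (j:ℕ))
        = bb ((m - (i:ℕ)) + (m - (j:ℕ))) 0 :=
      QCat.SS_eq _ _ _ (by omega)
    have hLHS : (Matrix.of (fun i j : Fin (m + 1) =>
        qCatalan (2 * m + 2 - ((i : ℕ) + 1) - ((j : ℕ) + 1)))) i j
        = bb ((m - (i:ℕ)) + (m - (j:ℕ))) 0 := by
      have harg : 2 * m + 2 - ((i:ℕ) + 1) - ((j:ℕ) + 1) = (m - (i:ℕ)) + (m - (j:ℕ)) := by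
        omega
      show qCatalan (2 * m + 2 - ((i:ℕ) + 1) - ((j:ℕ) + 1)) = _
      rw [harg, QCat.qCatalan_eq_bb]
    rw [hLHS, hRHS, h2, h3, h4, h5, h6]
  obtain ⟨P, hP1, hP0, hPU, hUP⟩ := QCat.unitriangular_inverse U hU0 hU1
  refine ⟨P, Pᵀ, hP1, fun i j h => hP0 i j h, fun i => hP1 i,
    fun i j h => hP0 j i h, ?_⟩
  have hQt : Uᵀ * Pᵀ = 1 := by
    rw [← Matrix.transpose_mul, hPU, Matrix.transpose_one]
  calc P * (Matrix.of fun i j : Fin (m + 1) =>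
        qCatalan (2 * m + 2 - ((i : ℕ) + 1) - ((j : ℕ) + 1))) * Pᵀ
      = P * (U * D * Uᵀ) * Pᵀ := by rw [hM]
    _ = (P * U) * D * (Uᵀ * Pᵀ) := by noncomm_ring
    _ = D := by rw [hPU, hQt, one_mul, mul_one]
    _ = _ := by
        have hdiag : (fun k : Fin (m+1) => QCat.dd (m - (k:ℕ)))
            = (fun i : Fin (m+1) =>
                Polynomial.X ^ Nat.choose (2 * m + 2 - 2 * ((i:ℕ) + 1)) 2) := by
          funext k
          simp only [QCat.dd]
          have h1 : 2 * m + 2 - 2 * ((k:ℕ) + 1) = 2 * (m - (k:ℕ)) := by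
            have := k.isLt; omega
          rw [h1, QCat.choose_two_even]
        rw [hD, hdiag]
end

section
/- Let m ≥ 1 and let M_{2m−1} be the m×m matrix over ℤ[q] with (i,j)-entry C̃_{2m+1−i−j}(q), for 1 ≤ i,j ≤ m. Then det M_{2m−1} = q^N, where N = Σ_{i=1}^{m} C(2i−1, 2) = C(1,2) + C(3,2) + C(5,2) + ⋯ + C(2m−1,2). -/
open Polynomial Finset

namespace QCH

/-- Ballot paths: `s` steps from `0` to `h`, staying `≥ 0`, up-steps from height `t`
weighted `X^t`. -/
noncomputable def bal : ℕ → ℕ → Polynomial ℤ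
  | 0, 0 => 1
  | 0, _ + 1 => 0
  | s + 1, 0 => bal s 1
  | s + 1, h + 1 => bal s (h + 2) + X ^ h * bal s h

/-- Ballot paths with down-steps arriving at height `t` weighted `X^t`. -/
noncomputable def bal' : ℕ → ℕ → Polynomial ℤ
  | 0, 0 => 1
  | 0, _ + 1 => 0
  | s + 1, 0 => bal' s 1
  | s + 1, h + 1 => X ^ (h + 1) * bal' s (h + 2) + bal' s h

lemma bal_zero_zero : bal 0 0 = 1 := rfl
lemma bal_zero_succ (h : ℕ) : bal 0 (h + 1) = 0 := rfl
lemma bal_succ_zero (s : ℕ) : bal (s + 1) 0 = bal s 1 := rfl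
lemma bal_succ_succ (s h : ℕ) : bal (s + 1) (h + 1) = bal s (h + 2) + X ^ h * bal s h := rfl
lemma bal'_zero_zero : bal' 0 0 = 1 := rfl
lemma bal'_zero_succ (h : ℕ) : bal' 0 (h + 1) = 0 := rfl
lemma bal'_succ_zero (s : ℕ) : bal' (s + 1) 0 = bal' s 1 := rfl
lemma bal'_succ_succ (s h : ℕ) :
    bal' (s + 1) (h + 1) = X ^ (h + 1) * bal' s (h + 2) + bal' s h := rfl

lemma bal_eq_zero : ∀ s h, s < h → bal s h = 0 := by
  intro s
  induction s with
  | zero => intro h hh; match h, hh with | h + 1, _ => rfl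
  | succ s ih =>
    intro h hh
    match h, hh with
    | h + 1, hh =>
      rw [bal_succ_succ, ih (h + 2) (by omega), ih h (by omega), mul_zero, add_zero]

lemma bal'_eq_zero : ∀ s h, s < h → bal' s h = 0 := by
  intro s
  induction s with
  | zero => intro h hh; match h, hh with | h + 1, _ => rfl
  | succ s ih =>
    intro h hh
    match h, hh with
    | h + 1, hh =>
      rw [bal'_succ_succ, ih (h + 2) (by omega), ih h (by omega), mul_zero, add_zero]

lemma bal_parity : ∀ s h, (s + h) % 2 = 1 → bal s h = 0 := by
  intro s
  induction s with
  | zero =>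
    intro h hh
    match h, hh with
    | h + 1, hh => rfl
  | succ s ih =>
    intro h hh
    match h with
    | 0 => rw [bal_succ_zero]; exact ih 1 (by omega)
    | h + 1 =>
      rw [bal_succ_succ, ih (h + 2) (by omega), ih h (by omega), mul_zero, add_zero]

lemma bal_diag (s : ℕ) : bal s s = X ^ s.choose 2 := by
  induction s with
  | zero => rfl
  | succ s ih =>
    rw [bal_succ_succ, bal_eq_zero s (s + 2) (by omega), ih, zero_add, ← pow_add]
    congr 1
    rw [Nat.choose_succ_succ, Nat.choose_one_right]

lemma bal'_diag (s : ℕ) : bal' s s = 1 := by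
  induction s with
  | zero => rfl
  | succ s ih =>
    rw [bal'_succ_succ, bal'_eq_zero s (s + 2) (by omega), ih, mul_zero, zero_add]


lemma cut (a b M : ℕ) (hb : b ≤ M) :
    ∑ h ∈ range (M + 2), bal (a + 1) h * bal' b h
      = ∑ h ∈ range (M + 2), bal a h * bal' (b + 1) h := by
  have hG1 : bal' b (M + 1) = 0 := bal'_eq_zero _ _ (by omega)
  have hG2 : bal' b (M + 2) = 0 := bal'_eq_zero _ _ (by omega)
  -- shift identities
  have t1 := Finset.sum_range_succ (fun h => bal a (h + 1) * bal' b h) (M + 1)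
  have t2 := Finset.sum_range_succ' (fun h => bal a (h + 1) * bal' b h) (M + 1)
  have t3 := Finset.sum_range_succ (fun h => X ^ h * bal a h * bal' b (h + 1)) (M + 1)
  have t4 := Finset.sum_range_succ' (fun h => X ^ h * bal a h * bal' b (h + 1)) (M + 1)
  simp only [hG1, hG2, mul_zero, zero_mul, add_zero] at t1 t3
  -- expand LHS
  rw [Finset.sum_range_succ' (fun h => bal (a + 1) h * bal' b h) (M + 1),
      Finset.sum_range_succ' (fun h => bal a h * bal' (b + 1) h) (M + 1)]
  simp only [bal_succ_zero, bal_succ_succ, bal'_succ_zero, bal'_succ_succ]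
  have expand1 : ∀ h : ℕ, (bal a (h + 2) + X ^ h * bal a h) * bal' b (h + 1)
      = bal a (h + 2) * bal' b (h + 1) + X ^ h * bal a h * bal' b (h + 1) := fun h => by ring
  have expand2 : ∀ h : ℕ, bal a (h + 1) * (X ^ (h + 1) * bal' b (h + 2) + bal' b h)
      = X ^ (h + 1) * bal a (h + 1) * bal' b (h + 2) + bal a (h + 1) * bal' b h := fun h => by
    ring
  rw [Finset.sum_congr rfl (fun h _ => expand1 h), Finset.sum_congr rfl (fun h _ => expand2 h),
      Finset.sum_add_distrib, Finset.sum_add_distrib]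
  -- t1/t2 : ∑_{h<M+1} bal a (h+2) * bal' b (h+1) + bal a 1 * bal' b 0
  --        = ∑_{h<M+1} bal a (h+1) * bal' b h
  -- t3/t4 : ∑_{h<M+1} X^h bal a h bal' b (h+1)
  --        = ∑_{h<M+1} X^{h+1} bal a (h+1) bal' b (h+2) + bal a 0 * bal' b 1
  rw [t2] at t1
  rw [t4] at t3
  rw [pow_zero, one_mul] at t3
  -- now rearrange
  calc (∑ h ∈ range (M + 1), bal a (h + 2) * bal' b (h + 1)
          + ∑ h ∈ range (M + 1), X ^ h * bal a h * bal' b (h + 1)) + bal a 1 * bal' b 0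
      = ((∑ h ∈ range (M + 1), bal a (h + 2) * bal' b (h + 1)) + bal a 1 * bal' b 0)
          + ∑ h ∈ range (M + 1), X ^ h * bal a h * bal' b (h + 1) := by ring
    _ = (∑ h ∈ range (M + 1), bal a (h + 1) * bal' b h)
          + (∑ h ∈ range (M + 1), X ^ (h + 1) * bal a (h + 1) * bal' b (h + 2)
              + bal a 0 * bal' b 1) := by rw [t1, ← t3]
    _ = ∑ h ∈ range (M + 1), X ^ (h + 1) * bal a (h + 1) * bal' b (h + 2)
          + ∑ h ∈ range (M + 1), bal a (h + 1) * bal' b h + bal a 0 * bal' b 1 := by ring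

lemma slide (M : ℕ) : ∀ c a, c ≤ M + 1 →
    ∑ h ∈ range (M + 2), bal (a + c) h * bal' 0 h
      = ∑ h ∈ range (M + 2), bal a h * bal' c h := by
  intro c
  induction c with
  | zero => intro a _; rfl
  | succ c ih =>
    intro a hc
    have h1 : a + (c + 1) = (a + 1) + c := by omega
    rw [h1, ih (a + 1) (by omega), cut a c M (by omega)]

lemma total (s M : ℕ) : ∑ h ∈ range (M + 2), bal s h * bal' 0 h = bal s 0 := by
  rw [Finset.sum_eq_single_of_mem 0 (by simp)]
  · rw [bal'_zero_zero, mul_one]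
  · intro h _ hh
    match h, hh with
    | h + 1, _ => rw [bal'_zero_succ, mul_zero]

lemma bal_split (i j m : ℕ) (hi : i < m) (hj : j < m) :
    bal (2 * i + 2 * j + 2) 0
      = ∑ h ∈ range (2 * m + 2), bal (2 * i + 1) h * bal' (2 * j + 1) h := by
  have h1 := slide (2 * m) (2 * j + 1) (2 * i + 1) (by omega)
  have h2 : (2 * i + 1) + (2 * j + 1) = 2 * i + 2 * j + 2 := by omega
  rw [h2] at h1
  rw [← h1, total]

lemma sum_odd (f : ℕ → Polynomial ℤ) (he : ∀ k, f (2 * k) = 0) :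
    ∀ M, ∑ h ∈ range (2 * M), f h = ∑ k ∈ range M, f (2 * k + 1) := by
  intro M
  induction M with
  | zero => rfl
  | succ M ih =>
    have h2 : 2 * (M + 1) = (2 * M + 1) + 1 := by omega
    rw [h2, Finset.sum_range_succ, Finset.sum_range_succ, Finset.sum_range_succ, ih,
        he M, add_zero]


/-- Partitions `μ` with at most `r` parts, all parts `< p - t` at index `t`. -/
def Pn (p r : ℕ) : Set (ℕ → ℕ) :=
  {μ | Antitone μ ∧ (∀ t, t < r → μ t + (t + 1) ≤ p) ∧ ∀ t, r ≤ t → μ t = 0}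

lemma Pn_finite (p r : ℕ) : (Pn p r).Finite := by
  apply Set.Finite.of_finite_image (f := fun μ => fun t : Fin r => μ t)
  · apply Set.Finite.subset (Set.Finite.pi (fun _ : Fin r => Set.finite_Iic p))
    rintro g ⟨μ, hμ, rfl⟩
    intro t _
    have := hμ.2.1 t t.isLt
    simpa using by omega
  · intro μ hμ ν hν h
    funext t
    by_cases ht : t < r
    · exact congrFun h ⟨t, ht⟩
    · rw [hμ.2.2 t (by omega), hν.2.2 t (by omega)]

lemma Pn_finsum (p r : ℕ) {μ : ℕ → ℕ} (hμ : μ ∈ Pn p r) :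
    ∑ᶠ k, μ k = ∑ k ∈ range r, μ k := by
  apply finsum_eq_sum_of_support_subset
  intro k hk
  simp only [Function.mem_support] at hk
  simp only [coe_range, Set.mem_Iio]
  by_contra h
  exact hk (hμ.2.2 k (by omega))

lemma gauss : ∀ p : ℕ, ∑ i ∈ range p, i = p.choose 2 := by
  intro p
  induction p with
  | zero => rfl
  | succ p ih =>
    rw [Finset.sum_range_succ, ih, Nat.choose_succ_succ, Nat.choose_one_right, add_comm]

lemma Pn_sum_le (p r : ℕ) (hrp : r ≤ p) {μ : ℕ → ℕ} (hμ : μ ∈ Pn p r) :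
    ∑ k ∈ range r, μ k ≤ p.choose 2 := by
  calc ∑ k ∈ range r, μ k ≤ ∑ k ∈ range r, (p - 1 - k) := by
        apply Finset.sum_le_sum
        intro k hk
        have := hμ.2.1 k (mem_range.mp hk)
        omega
    _ ≤ ∑ k ∈ range p, (p - 1 - k) := by
        apply Finset.sum_le_sum_of_subset (Finset.range_subset_range.mpr hrp)
    _ = ∑ k ∈ range p, k := Finset.sum_range_reflect (fun k => k) p
    _ = p.choose 2 := gauss p

/-- The coarea generating polynomial of partitions in `Pn p r`. -/
noncomputable def PS (p r : ℕ) : Polynomial ℤ :=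
  ∑ᶠ μ ∈ Pn p r, X ^ (p.choose 2 - ∑ᶠ k, μ k)

lemma PS_eq (p r : ℕ) :
    PS p r = ∑ μ ∈ (Pn_finite p r).toFinset,
      X ^ (p.choose 2 - ∑ k ∈ range r, μ k) := by
  rw [PS, finsum_mem_eq_finite_toFinset_sum _ (Pn_finite p r)]
  apply Finset.sum_congr rfl
  intro μ hμ
  rw [Pn_finsum p r ((Pn_finite p r).mem_toFinset.mp hμ)]

lemma PS_zero (p : ℕ) : PS p 0 = X ^ p.choose 2 := by
  have h : Pn p 0 = {fun _ => 0} := by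
    ext μ
    constructor
    · intro hμ
      funext t
      exact hμ.2.2 t (Nat.zero_le t)
    · rintro rfl
      exact ⟨fun _ _ _ => le_rfl, fun t ht => by omega, fun t _ => rfl⟩
  rw [PS, h, finsum_mem_singleton]
  congr 1
  have : ∑ᶠ k : ℕ, (0 : ℕ) = 0 := finsum_zero
  rw [this, Nat.sub_zero]

lemma PS_empty (p r : ℕ) (h : p < r) : PS p r = 0 := by
  have he : Pn p r = ∅ := by
    ext μ
    simp only [Set.mem_empty_iff_false, iff_false]
    intro hμ
    have := hμ.2.1 p h
    omega
  rw [PS, he, finsum_mem_empty]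

lemma PS_step (p r : ℕ) (hrp : r ≤ p) :
    PS (p + 1) (r + 1) = PS (p + 1) r + X ^ (p - r - 1) * PS p (r + 1) := by
  classical
  rw [PS_eq, PS_eq, PS_eq, Finset.mul_sum]
  rw [← Finset.sum_filter_add_sum_filter_not ((Pn_finite (p+1) (r+1)).toFinset)
        (fun μ => μ r = 0)]
  congr 1
  · -- the `μ r = 0` part is `Pn (p+1) r`
    have hset : ((Pn_finite (p+1) (r+1)).toFinset.filter (fun μ => μ r = 0))
        = (Pn_finite (p+1) r).toFinset := by
      ext μ
      simp only [Finset.mem_filter, Set.Finite.mem_toFinset]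
      constructor
      · rintro ⟨⟨h1, h2, h3⟩, h4⟩
        refine ⟨h1, fun t ht => h2 t (by omega), fun t ht => ?_⟩
        exact le_antisymm (h4 ▸ h1 ht) (Nat.zero_le _)
      · rintro ⟨h1, h2, h3⟩
        have h4 : μ r = 0 := h3 r le_rfl
        refine ⟨⟨h1, fun t ht => ?_, fun t ht => h3 t (by omega)⟩, h4⟩
        by_cases htr : t < r
        · exact le_trans (h2 t htr) (by omega)
        · have : t = r := by omega
          subst this
          omega
    rw [hset]
    apply Finset.sum_congr rfl
    intro μ hμ
    have h4 : μ r = 0 := ((Pn_finite (p+1) r).mem_toFinset.mp hμ).2.2 r le_rfl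
    rw [Finset.sum_range_succ, h4, add_zero]
  · -- the `μ r ≠ 0` part: subtract 1 from each of the first r+1 parts
    apply Finset.sum_nbij' (i := fun μ t => if t < r + 1 then μ t - 1 else 0)
      (j := fun ν t => if t < r + 1 then ν t + 1 else 0)
    · -- maps into Pn p (r+1)
      intro μ hμ
      simp only [Finset.mem_filter, Set.Finite.mem_toFinset] at hμ ⊢
      obtain ⟨⟨h1, h2, h3⟩, h4⟩ := hμ
      have hpos : ∀ t, t < r + 1 → 1 ≤ μ t := fun t ht =>
        Nat.one_le_iff_ne_zero.mpr (fun h0 => h4 (le_antisymm (h0 ▸ h1 (by omega : t ≤ r))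
          (Nat.zero_le _)))
      refine ⟨?_, ?_, ?_⟩
      · intro t s hts
        by_cases hs : s < r + 1
        · have ht : t < r + 1 := by omega
          simp only [hs, ht, if_true]
          exact Nat.sub_le_sub_right (h1 hts) 1
        · simp only [hs, if_false]
          exact Nat.zero_le _
      · intro t ht
        have := h2 t ht
        have := hpos t ht
        simp only [ht, if_true]
        omega
      · intro t ht
        have : ¬ t < r + 1 := by omega
        simp [this]
    · -- maps back into the filtered set
      intro ν hν
      simp only [Set.Finite.mem_toFinset] at hν
      obtain ⟨h1, h2, h3⟩ := hν
      simp only [Finset.mem_filter, Set.Finite.mem_toFinset]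
      refine ⟨⟨?_, ?_, ?_⟩, ?_⟩
      · intro t s hts
        by_cases hs : s < r + 1
        · have ht : t < r + 1 := by omega
          simp only [hs, ht, if_true]
          exact Nat.add_le_add_right (h1 hts) 1
        · simp only [hs, if_false]
          exact Nat.zero_le _
      · intro t ht
        have := h2 t ht
        simp only [ht, if_true]
        omega
      · intro t ht
        have : ¬ t < r + 1 := by omega
        simp [this]
      · simp only [Nat.lt_succ_self r, if_true]
        omega
    · -- left inverse
      intro μ hμ
      simp only [Finset.mem_filter, Set.Finite.mem_toFinset] at hμ
      obtain ⟨⟨h1, h2, h3⟩, h4⟩ := hμ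
      have hpos : ∀ t, t < r + 1 → 1 ≤ μ t := fun t ht =>
        Nat.one_le_iff_ne_zero.mpr (fun h0 => h4 (le_antisymm (h0 ▸ h1 (by omega : t ≤ r))
          (Nat.zero_le _)))
      funext t
      by_cases ht : t < r + 1
      · have := hpos t ht
        simp only [ht, if_true]
        omega
      · simp only [ht, if_false]
        exact (h3 t (by omega)).symm
    · -- right inverse
      intro ν hν
      simp only [Set.Finite.mem_toFinset] at hν
      funext t
      by_cases ht : t < r + 1
      · simp only [ht, if_true]
        omega
      · simp only [ht, if_false]
        exact (hν.2.2 t (by omega)).symm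
    · -- weights match
      intro μ hμ
      simp only [Finset.mem_filter, Set.Finite.mem_toFinset] at hμ
      obtain ⟨⟨h1, h2, h3⟩, h4⟩ := hμ
      have hpos : ∀ t, t < r + 1 → 1 ≤ μ t := fun t ht =>
        Nat.one_le_iff_ne_zero.mpr (fun h0 => h4 (le_antisymm (h0 ▸ h1 (by omega : t ≤ r))
          (Nat.zero_le _)))
      have hrp1 : r + 1 ≤ p := by
        have := h2 r (by omega)
        have := hpos r (by omega)
        omega
      have hsub : ∑ k ∈ range (r + 1), (fun t => if t < r + 1 then μ t - 1 else 0) k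
          = (∑ k ∈ range (r + 1), μ k) - (r + 1) := by
        have : ∀ k ∈ range (r + 1), (if k < r + 1 then μ k - 1 else 0) = μ k - 1 := by
          intro k hk
          simp [mem_range.mp hk]
        rw [Finset.sum_congr rfl this]
        have h5 : (∑ k ∈ range (r + 1), (μ k - 1)) + (∑ _k ∈ range (r + 1), 1)
            = ∑ k ∈ range (r + 1), μ k := by
          rw [← Finset.sum_add_distrib]
          apply Finset.sum_congr rfl
          intro k hk
          have := hpos k (mem_range.mp hk)
          omega
        simp only [Finset.sum_const, Finset.card_range, smul_eq_mul, mul_one] at h5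
        omega
      have hle : ∑ k ∈ range (r + 1), (fun t => if t < r + 1 then μ t - 1 else 0) k
          ≤ p.choose 2 := by
        apply Pn_sum_le p (r + 1) hrp1
        -- membership proved as in the first bullet
        refine ⟨?_, ?_, ?_⟩
        · intro t s hts
          by_cases hs : s < r + 1
          · have ht : t < r + 1 := by omega
            simp only [hs, ht, if_true]
            exact Nat.sub_le_sub_right (h1 hts) 1
          · simp only [hs, if_false]
            exact Nat.zero_le _
        · intro t ht
          have := h2 t ht
          have := hpos t ht
          simp only [ht, if_true]
          omega
        · intro t ht
          have : ¬ t < r + 1 := by omega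
          simp [this]
      have hμle : ∑ k ∈ range (r + 1), μ k ≤ (p + 1).choose 2 :=
        Pn_sum_le (p + 1) (r + 1) (by omega) ⟨h1, h2, h3⟩
      rw [← pow_add]
      congr 1
      have hch : (p + 1).choose 2 = p + p.choose 2 := by
        rw [Nat.choose_succ_succ, Nat.choose_one_right]
      have hpos' : r + 1 ≤ ∑ k ∈ range (r + 1), μ k := by
        calc r + 1 = ∑ _k ∈ range (r + 1), 1 := by simp
          _ ≤ ∑ k ∈ range (r + 1), μ k :=
            Finset.sum_le_sum (fun k hk => hpos k (mem_range.mp hk))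
      rw [hsub]
      omega


lemma PS_def (p r : ℕ) : PS p r = ∑ᶠ μ ∈ Pn p r, X ^ (p.choose 2 - ∑ᶠ k, μ k) := rfl


lemma bal_eq_PS : ∀ s h r, s = h + 2 * r → bal s h = PS (h + r) r := by
  intro s
  induction s with
  | zero =>
    intro h r hs
    have h0 : h = 0 := by omega
    have r0 : r = 0 := by omega
    subst h0; subst r0
    rw [bal_zero_zero, PS_zero]
    rfl
  | succ s ih =>
    intro h r hs
    match h with
    | 0 =>
      obtain ⟨r', rfl⟩ : ∃ r', r = r' + 1 := ⟨r - 1, by omega⟩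
      rw [bal_succ_zero, ih 1 r' (by omega)]
      have step := PS_step r' r' le_rfl
      rw [PS_empty r' (r' + 1) (by omega), mul_zero, add_zero] at step
      rw [show (0 : ℕ) + (r' + 1) = r' + 1 from by omega, step]
      congr 1
      omega
    | h' + 1 =>
      match r with
      | 0 =>
        have hse : s = h' := by omega
        subst hse
        rw [bal_diag, PS_zero]
      | r' + 1 =>
        rw [bal_succ_succ, ih (h' + 2) r' (by omega), ih h' (r' + 1) (by omega)]
        have step := PS_step (h' + r' + 1) r' (by omega)
        rw [show h' + r' + 1 - r' - 1 = h' from by omega] at step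
        have e1 : h' + 2 + r' = h' + r' + 1 + 1 := by omega
        have e2 : h' + (r' + 1) = h' + r' + 1 := by omega
        have e3 : h' + 1 + (r' + 1) = h' + r' + 1 + 1 := by omega
        rw [e1, e2, e3, step]

lemma qCatalan_eq_PS (n : ℕ) : qCatalan n = PS n n := by
  rw [PS_def]
  have hset : {μ : ℕ → ℕ | Antitone μ ∧ ∀ k, μ k ≤ n - (k + 1)} = Pn n n := by
    ext μ
    constructor
    · rintro ⟨h1, h2⟩
      refine ⟨h1, fun t ht => ?_, fun t ht => ?_⟩
      · have := h2 t; omega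
      · have := h2 t; omega
    · rintro ⟨h1, h2, h3⟩
      refine ⟨h1, fun k => ?_⟩
      by_cases hk : k < n
      · have := h2 k hk; omega
      · have := h3 k (by omega); omega
  rw [qCatalan, hset]

lemma entry (i j m : ℕ) (hi : i < m) (hj : j < m) :
    qCatalan (i + j + 1)
      = ∑ k ∈ range m, bal (2 * i + 1) (2 * k + 1) * bal' (2 * j + 1) (2 * k + 1) := by
  have hb := bal_eq_PS (2 * (i + j + 1)) 0 (i + j + 1) (by omega)
  rw [show (0 : ℕ) + (i + j + 1) = i + j + 1 from by omega] at hb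
  rw [qCatalan_eq_PS, ← hb]
  · rw [show 2 * (i + j + 1) = 2 * i + 2 * j + 2 from by omega, bal_split i j m hi hj]
    have he : ∀ k, bal (2 * i + 1) (2 * k) * bal' (2 * j + 1) (2 * k) = 0 := by
      intro k
      rw [bal_parity (2 * i + 1) (2 * k) (by omega), zero_mul]
    rw [show 2 * m + 2 = 2 * (m + 1) from by omega,
        sum_odd _ he (m + 1), Finset.sum_range_succ,
        bal_eq_zero (2 * i + 1) (2 * m + 1) (by omega), zero_mul, add_zero]
  -- fix the `0 + (i+j+1)` mismatch
  


end QCH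


/-- **Corollary (determinant of the odd q-Catalan matrix).**
For `m ≥ 1`, `det M_{2m-1} = q^N` with `N = Σ_{i=1}^{m} C(2i-1, 2)`. -/
theorem det_qCatalan_odd (m : ℕ) (hm : 1 ≤ m) :
    (Matrix.of (fun i j : Fin m =>
        qCatalan (2 * m + 1 - ((i : ℕ) + 1) - ((j : ℕ) + 1)))).det
      = Polynomial.X ^ (∑ i ∈ Finset.range m, Nat.choose (2 * i + 1) 2) := by
  classical
  set L : Matrix (Fin m) (Fin m) (Polynomial ℤ) :=
    Matrix.of (fun i k : Fin m => QCH.bal (2 * (i : ℕ) + 1) (2 * (k : ℕ) + 1)) with hL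
  set R : Matrix (Fin m) (Fin m) (Polynomial ℤ) :=
    Matrix.of (fun j k : Fin m => QCH.bal' (2 * (j : ℕ) + 1) (2 * (k : ℕ) + 1)) with hR
  have hMat : Matrix.of (fun i j : Fin m =>
      qCatalan (2 * m + 1 - ((i : ℕ) + 1) - ((j : ℕ) + 1)))
      = (L * R.transpose).submatrix (Fin.revPerm : Equiv.Perm (Fin m)) Fin.revPerm := by
    ext i j
    simp only [Matrix.submatrix_apply, Matrix.mul_apply, Matrix.transpose_apply,
      Matrix.of_apply, hL, hR, Fin.revPerm_apply]
    have h1 : 2 * m + 1 - ((i : ℕ) + 1) - ((j : ℕ) + 1)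
        = ((i.rev : ℕ) + (j.rev : ℕ) + 1) := by
      have hi := i.isLt
      have hj := j.isLt
      simp only [Fin.val_rev]
      omega
    rw [h1, QCH.entry _ _ m i.rev.isLt j.rev.isLt,
        ← Fin.sum_univ_eq_sum_range (fun k =>
          QCH.bal (2 * (i.rev : ℕ) + 1) (2 * k + 1)
            * QCH.bal' (2 * (j.rev : ℕ) + 1) (2 * k + 1)) m]
  rw [hMat, Matrix.det_submatrix_equiv_self, Matrix.det_mul, Matrix.det_transpose]
  have hdetL : L.det = ∏ i : Fin m, X ^ ((2 * (i : ℕ) + 1).choose 2) := by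
    rw [Matrix.det_of_lowerTriangular L (fun i j hij => ?_)]
    · apply Finset.prod_congr rfl
      intro i _
      simp only [hL, Matrix.of_apply]
      exact QCH.bal_diag (2 * (i : ℕ) + 1)
    · simp only [hL, Matrix.of_apply]
      exact QCH.bal_eq_zero _ _ (by
        have : (i : ℕ) < (j : ℕ) := hij
        omega)
  have hdetR : R.det = 1 := by
    rw [Matrix.det_of_lowerTriangular R (fun i j hij => ?_)]
    · apply Finset.prod_eq_one
      intro i _
      simp only [hR, Matrix.of_apply]
      exact QCH.bal'_diag (2 * (i : ℕ) + 1)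
    · simp only [hR, Matrix.of_apply]
      exact QCH.bal'_eq_zero _ _ (by
        have : (i : ℕ) < (j : ℕ) := hij
        omega)
  rw [hdetL, hdetR, mul_one, Finset.prod_pow_eq_pow_sum]
  congr 1
  exact Fin.sum_univ_eq_sum_range (fun i => (2 * i + 1).choose 2) m
end
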